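/- arXiv:2301.02020 — 6 statements merged into one kernel-verified Lean document; each statement's English description precedes it below -/
import Mathlib

section
/- For all integers n ≥ 1 and k ≥ 1, D(n,k) ≤ C(n, k−1), where C(n, k−1) is the binomial coefficient 'n choose k−1'. That is, for every graph G on n vertices, every connected component of the k-token-jumping configuration graph R_k(G) has diameter at most C(n, k−1). -/
/-!
Common definitions: independent sets of a given size, the token-jumping configuration
graph `R_k(G)`, diameters of connected components, and the extremal function `D n k`.
-/

open Finset SimpleGraph

attribute [local instance] Classical.propDecidable

/-- `s` is an independent set of the graph `G`: its vertices are pairwise non-adjacent. -/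
def IndepFinset {V : Type*} (G : SimpleGraph V) (s : Finset V) : Prop :=
  ∀ u ∈ s, ∀ v ∈ s, u ≠ v → ¬ G.Adj u v

/-- The `k`-token-jumping configuration graph `R_k(G)`: its vertices are the independent sets
of size `k` of `G`, two of them being adjacent iff their intersection has `k - 1` elements. -/
def ConfigGraph {V : Type*} [DecidableEq V] (G : SimpleGraph V) (k : ℕ) :
    SimpleGraph {s : Finset V // s.card = k ∧ IndepFinset G s} where
  Adj I J := I ≠ J ∧ ((I : Finset V) ∩ (J : Finset V)).card = k - 1
  symm := ⟨fun I J h => ⟨h.1.symm, by rw [Finset.inter_comm]; exact h.2⟩⟩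
  loopless := ⟨fun I h => h.1 rfl⟩

/-- The diameter of the connected component of `H` containing the vertex `u`. -/
noncomputable def compDiam {α : Type*} [Fintype α] (H : SimpleGraph α) (u : α) : ℕ :=
  (Finset.univ : Finset (α × α)).sup fun p =>
    if H.Reachable u p.1 ∧ H.Reachable u p.2 then H.dist p.1 p.2 else 0

/-- The diameter of the connected component `c` of `H`. -/
noncomputable def componentDiam {α : Type*} [Fintype α] (H : SimpleGraph α)
    (c : H.ConnectedComponent) : ℕ :=
  (Finset.univ : Finset (α × α)).sup fun p =>
    if H.connectedComponentMk p.1 = c ∧ H.connectedComponentMk p.2 = c then H.dist p.1 p.2 else 0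

/-- The maximum diameter of a connected component of `H`. -/
noncomputable def maxCompDiam {α : Type*} [Fintype α] (H : SimpleGraph α) : ℕ :=
  (Finset.univ : Finset α).sup fun u => compDiam H u

/-- `D n k`: the maximum, over all graphs `G` on `n` vertices, of the diameter of a
connected component of the configuration graph `R_k(G)`. -/
noncomputable def D (n k : ℕ) : ℕ :=
  (Finset.univ : Finset (SimpleGraph (Fin n))).sup fun G => maxCompDiam (ConfigGraph G k)

lemma walk_prefix {V : Type*} {G : SimpleGraph V} {u v : V} (p : G.Walk u v) (i : ℕ) :
    ∃ q : G.Walk u (p.getVert i), q.length ≤ i := by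
  induction p generalizing i with
  | nil => exact ⟨(SimpleGraph.Walk.nil).copy rfl (by simp [SimpleGraph.Walk.getVert]), by simp⟩
  | cons h q ih =>
      cases i with
      | zero => exact ⟨(SimpleGraph.Walk.nil).copy rfl (by simp), by simp⟩
      | succ i =>
          obtain ⟨q', hq'⟩ := ih i
          exact ⟨(SimpleGraph.Walk.cons h q').copy rfl (by
            rw [SimpleGraph.Walk.getVert_cons_succ]), by simpa using Nat.succ_le_succ hq'⟩

lemma walk_suffix {V : Type*} {G : SimpleGraph V} {u v : V} (p : G.Walk u v) (i : ℕ) :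
    ∃ r : G.Walk (p.getVert i) v, r.length ≤ p.length - i := by
  induction p generalizing i with
  | nil => exact ⟨(SimpleGraph.Walk.nil).copy (by simp [SimpleGraph.Walk.getVert]) rfl, by simp⟩
  | cons h q ih =>
      cases i with
      | zero =>
          exact ⟨(SimpleGraph.Walk.cons h q).copy (SimpleGraph.Walk.getVert_zero _).symm rfl, by simp⟩
      | succ i =>
          obtain ⟨r, hr⟩ := ih i
          refine ⟨r.copy (SimpleGraph.Walk.getVert_cons_succ q h).symm rfl, ?_⟩
          rw [SimpleGraph.Walk.length_copy]
          refine hr.trans ?_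
          simp [SimpleGraph.Walk.length_cons]

lemma key {n k : ℕ} (hk : 1 ≤ k) (G : SimpleGraph (Fin n))
    (u v : {s : Finset (Fin n) // s.card = k ∧ IndepFinset G s})
    (h : (ConfigGraph G k).Reachable u v) :
    (ConfigGraph G k).dist u v ≤ n.choose (k - 1) := by
  classical
  set H := ConfigGraph G k with hH
  obtain ⟨p, hp⟩ := h.exists_walk_length_eq_dist
  rw [← hp]
  set L := p.length with hL
  set f : ℕ → Finset (Fin n) := fun i => ((p.getVert i : Finset (Fin n)) ∩ (p.getVert (i+1) : Finset (Fin n))) with hf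
  have hmem : ∀ i ∈ Finset.range L, f i ∈ Finset.powersetCard (k-1) (Finset.univ : Finset (Fin n)) := by
    intro i hi
    rw [Finset.mem_range] at hi
    have hadj := p.adj_getVert_succ hi
    rw [Finset.mem_powersetCard]
    exact ⟨Finset.subset_univ _, hadj.2⟩
  -- shortcut claim for i < j
  have hshort : ∀ i j, i < j → j ∈ Finset.range L → f i ≠ f j := by
    intro i j hij hjr hfe
    rw [Finset.mem_range] at hjr
    set A := p.getVert i with hA
    set B := p.getVert (j+1) with hB
    obtain ⟨q, hq⟩ := walk_prefix p i
    obtain ⟨r, hr⟩ := walk_suffix p (j+1)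
    have hsubA : f i ⊆ (A : Finset (Fin n)) := Finset.inter_subset_left
    have hsubB : f i ⊆ (B : Finset (Fin n)) := by
      rw [hfe]; exact Finset.inter_subset_right
    have hcard : (f i).card = k - 1 := by
      have := (Finset.mem_powersetCard.mp (hmem j (Finset.mem_range.mpr hjr))).2
      rw [← hfe] at this; exact this
    by_cases hAB : A = B
    · -- shortcut walk of length < L
      have hw := H.dist_le (q.append (r.copy hAB.symm rfl))
      rw [← hp] at hw
      rw [SimpleGraph.Walk.length_append, SimpleGraph.Walk.length_copy] at hw
      omega
    · have hadj : H.Adj A B := by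
        refine ⟨hAB, le_antisymm ?_ ?_⟩
        · have hlt : ((A : Finset (Fin n)) ∩ (B : Finset (Fin n))).card < k := by
            rcases Nat.lt_or_ge ((A : Finset (Fin n)) ∩ (B : Finset (Fin n))).card k with h'|h'
            · exact h'
            · exfalso
              have heq : (A : Finset (Fin n)) ∩ (B : Finset (Fin n)) = (A : Finset (Fin n)) := by
                apply Finset.eq_of_subset_of_card_le Finset.inter_subset_left
                rw [A.2.1]; exact h'
              have hsub : (A : Finset (Fin n)) ⊆ (B : Finset (Fin n)) := by
                rw [← heq]; exact Finset.inter_subset_right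
              have : (A : Finset (Fin n)) = (B : Finset (Fin n)) :=
                Finset.eq_of_subset_of_card_le hsub (by rw [A.2.1, B.2.1])
              exact hAB (Subtype.ext this)
          omega
        · calc k - 1 = (f i).card := hcard.symm
            _ ≤ _ := Finset.card_le_card (Finset.subset_inter hsubA hsubB)
      have hw := H.dist_le (q.append (SimpleGraph.Walk.cons hadj r))
      rw [← hp] at hw
      rw [SimpleGraph.Walk.length_append, SimpleGraph.Walk.length_cons] at hw
      omega
  have hinj : Set.InjOn f (Finset.range L) := by
    intro i hi j hj hfe
    by_contra hne
    rcases Nat.lt_or_ge i j with h'|h'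
    · exact hshort i j h' hj hfe
    · exact hshort j i (lt_of_le_of_ne h' (Ne.symm hne)) hi hfe.symm
  have := Finset.card_le_card_of_injOn f hmem hinj
  rw [Finset.card_range, Finset.card_powersetCard, Finset.card_univ, Fintype.card_fin] at this
  exact this


/-- For all `n ≥ 1` and `k ≥ 1`, `D(n,k) ≤ C(n, k-1)`. -/
theorem D_le_choose (n k : ℕ) (hn : 1 ≤ n) (hk : 1 ≤ k) :
    D n k ≤ n.choose (k - 1) := by
  classical
  unfold D maxCompDiam compDiam
  apply Finset.sup_le
  intro G _
  apply Finset.sup_le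
  intro u _
  apply Finset.sup_le
  intro p _
  split_ifs with h
  · exact key hk G p.1 p.2 (h.1.symm.trans h.2)
  · exact Nat.zero_le _
end

section
/- For every integer k ≥ 3, D(n,k) = o(n^{k−1}); that is, for every ε > 0 there exists N such that for all n ≥ N, D(n,k) ≤ ε · n^{k−1}. -/
/-!
Common definitions: independent sets of a given size, the token-jumping configuration
graph `R_k(G)`, diameters of connected components, and the extremal function `D n k`.
-/

open Finset SimpleGraph

attribute [local instance] Classical.propDecidable

/-! ### Auxiliary machinery -/

/-- A "good family" of `m`-element independent sets: pairwise intersections have size at most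
`m - 2`, and whenever the intersection has size exactly `m - 2` (differences are pairs), all
cross pairs between the differences are edges. -/
def GoodFam {V : Type*} [DecidableEq V] (G : SimpleGraph V) (m : ℕ) (F : Finset (Finset V)) : Prop :=
  (∀ A ∈ F, A.card = m ∧ IndepFinset G A) ∧
  (∀ A ∈ F, ∀ B ∈ F, A ≠ B → (A ∩ B).card ≤ m - 2) ∧
  (∀ A ∈ F, ∀ B ∈ F, A ≠ B → (A ∩ B).card = m - 2 →
    ∀ a ∈ A \ B, ∀ b ∈ B \ A, G.Adj a b)

section Link
variable {V : Type*} [DecidableEq V] {G : SimpleGraph V} {m : ℕ} {F : Finset (Finset V)}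

lemma goodFam_link (hm : 3 ≤ m) (hF : GoodFam G m F) (w : V) :
    GoodFam G (m - 1) ((F.filter (fun A => w ∈ A)).image (fun A => A.erase w)) := by
  obtain ⟨h1, h2, h3⟩ := hF
  have key : ∀ A ∈ F, ∀ B ∈ F, w ∈ A → w ∈ B →
      ((A.erase w) ∩ (B.erase w) = (A ∩ B).erase w) ∧ ((A.erase w) \ (B.erase w) = A \ B) := by
    intro A hA B hB hwA hwB
    constructor
    · ext x; simp only [mem_inter, mem_erase]; tauto
    · ext x
      simp only [mem_sdiff, mem_erase]
      constructor
      · rintro ⟨⟨hxw, hxA⟩, h⟩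
        exact ⟨hxA, fun hxB => h ⟨hxw, hxB⟩⟩
      · rintro ⟨hxA, hxB⟩
        exact ⟨⟨fun h => hxB (h ▸ hwB), hxA⟩, fun h => hxB h.2⟩
  have hinj : ∀ A ∈ F.filter (fun A => w ∈ A), ∀ B ∈ F.filter (fun A => w ∈ A),
      A.erase w = B.erase w → A = B := by
    intro A hA B hB h
    rw [mem_filter] at hA hB
    rw [← Finset.insert_erase hA.2, h, Finset.insert_erase hB.2]
  refine ⟨?_, ?_, ?_⟩
  · intro A' hA'
    obtain ⟨A, hA, rfl⟩ := Finset.mem_image.mp hA'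
    rw [mem_filter] at hA
    obtain ⟨hcard, hindep⟩ := h1 A hA.1
    refine ⟨by rw [Finset.card_erase_of_mem hA.2, hcard], ?_⟩
    intro u hu v hv huv
    exact hindep u (Finset.mem_of_mem_erase hu) v (Finset.mem_of_mem_erase hv) huv
  · intro A' hA' B' hB' hne
    obtain ⟨A, hA, rfl⟩ := Finset.mem_image.mp hA'
    obtain ⟨B, hB, rfl⟩ := Finset.mem_image.mp hB'
    have hAB : A ≠ B := fun h => hne (h ▸ rfl)
    rw [mem_filter] at hA hB
    have h2' := h2 A hA.1 B hB.1 hAB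
    have hw : w ∈ A ∩ B := mem_inter.mpr ⟨hA.2, hB.2⟩
    have hc : 1 ≤ (A ∩ B).card := Finset.card_pos.mpr ⟨w, hw⟩
    rw [(key A hA.1 B hB.1 hA.2 hB.2).1, Finset.card_erase_of_mem hw]
    omega
  · intro A' hA' B' hB' hne hcard a ha b hb
    obtain ⟨A, hA, rfl⟩ := Finset.mem_image.mp hA'
    obtain ⟨B, hB, rfl⟩ := Finset.mem_image.mp hB'
    have hAB : A ≠ B := fun h => hne (h ▸ rfl)
    rw [mem_filter] at hA hB
    have hw : w ∈ A ∩ B := mem_inter.mpr ⟨hA.2, hB.2⟩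
    have hc : 1 ≤ (A ∩ B).card := Finset.card_pos.mpr ⟨w, hw⟩
    rw [(key A hA.1 B hB.1 hA.2 hB.2).1, Finset.card_erase_of_mem hw] at hcard
    rw [(key A hA.1 B hB.1 hA.2 hB.2).2] at ha
    rw [(key B hB.1 A hA.1 hB.2 hA.2).2] at hb
    exact h3 A hA.1 B hB.1 hAB (by omega) a ha b hb

lemma goodFam_link_card (w : V) :
    ((F.filter (fun A => w ∈ A)).image (fun A => A.erase w)).card
      = (F.filter (fun A => w ∈ A)).card := by
  apply Finset.card_image_of_injOn
  intro A hA B hB h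
  rw [mem_coe, mem_filter] at hA hB
  dsimp only at h
  rw [← Finset.insert_erase hA.2, h, Finset.insert_erase hB.2]

lemma sum_card_filter_mem {V : Type*} [Fintype V] [DecidableEq V] (F : Finset (Finset V)) :
    ∑ w : V, (F.filter (fun A => w ∈ A)).card = ∑ A ∈ F, A.card := by
  simp_rw [Finset.card_filter]
  rw [Finset.sum_comm]
  refine Finset.sum_congr rfl fun A _ => ?_
  rw [Finset.sum_ite_mem, Finset.univ_inter, Finset.card_eq_sum_ones]

end Link

lemma goodFam3_aux (δ : ℝ) (hδ : 0 < δ) (hδ1 : δ ≤ 1) :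
    ∃ N : ℕ, ∀ n : ℕ, N ≤ n → ∀ (G : SimpleGraph (Fin n)) (F : Finset (Finset (Fin n))),
      GoodFam G 3 F → (F.card : ℝ) ≤ δ * (n : ℝ) ^ 2 := by
  set ε : ℝ := δ / 18 with hεdef
  have hε0 : 0 < ε := by positivity
  have hε1 : ε ≤ 1 := by rw [hεdef]; linarith
  set b : ℝ := SimpleGraph.triangleRemovalBound ε with hbdef
  have hb0 : 0 < b := SimpleGraph.triangleRemovalBound_pos hε0
  refine ⟨⌈(3 * b)⁻¹⌉₊ + 1, fun n hn G F hF => ?_⟩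
  have hn0 : 0 < n := by omega
  have hnb : 1 < 3 * b * n := by
    have h1 : ((3 * b)⁻¹ : ℝ) < n := by
      calc ((3 * b)⁻¹ : ℝ) ≤ (⌈(3 * b)⁻¹⌉₊ : ℝ) := Nat.le_ceil _
        _ < n := by exact_mod_cast Nat.lt_of_lt_of_le (Nat.lt_succ_self _) hn
    calc (1 : ℝ) = (3 * b) * (3 * b)⁻¹ := by field_simp
      _ < (3 * b) * n := by exact mul_lt_mul_of_pos_left h1 (by positivity)
  obtain ⟨h1, h2, h3⟩ := hF
  -- two distinct common elements force equality
  have h_unique : ∀ A ∈ F, ∀ B ∈ F, ∀ x y : Fin n, x ≠ y →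
      x ∈ A → y ∈ A → x ∈ B → y ∈ B → A = B := by
    intro A hA B hB x y hxy hxA hyA hxB hyB
    by_contra hne
    have hsub : ({x, y} : Finset (Fin n)) ⊆ A ∩ B := by
      intro t ht
      rw [Finset.mem_insert, Finset.mem_singleton] at ht
      rcases ht with rfl | rfl
      · exact mem_inter.mpr ⟨hxA, hxB⟩
      · exact mem_inter.mpr ⟨hyA, hyB⟩
    have hc2 : 2 ≤ (A ∩ B).card := by
      calc 2 = ({x, y} : Finset (Fin n)).card := (Finset.card_pair hxy).symm
        _ ≤ (A ∩ B).card := Finset.card_le_card hsub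
    have := h2 A hA B hB hne
    omega
  -- the auxiliary tripartite graph
  set X : SimpleGraph (Fin 3 × Fin n) :=
    { Adj := fun u v => u.1 ≠ v.1 ∧ ∃ A ∈ F, u.2 ∈ A ∧ v.2 ∈ A ∧ u.2 ≠ v.2,
      symm := ⟨by
        rintro u v ⟨ha, A, hA, hb', hc', hd'⟩
        exact ⟨ha.symm, A, hA, hc', hb', hd'.symm⟩⟩,
      loopless := ⟨fun u h => h.1 rfl⟩ } with hXdef
  haveI : DecidableRel X.Adj := fun _ _ => Classical.propDecidable _
  have hXadj : ∀ u v : Fin 3 × Fin n, X.Adj u v ↔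
      (u.1 ≠ v.1 ∧ ∃ A ∈ F, u.2 ∈ A ∧ v.2 ∈ A ∧ u.2 ≠ v.2) := fun u v => Iff.rfl
  -- triangles come from members of F
  have h_tri : ∀ u v w : Fin 3 × Fin n, X.Adj u v → X.Adj v w → X.Adj u w →
      ∃ A ∈ F, u.2 ∈ A ∧ v.2 ∈ A ∧ w.2 ∈ A ∧ u.2 ≠ v.2 ∧ v.2 ≠ w.2 ∧ u.2 ≠ w.2 := by
    rintro u v w ⟨-, A1, hA1, hu1, hv1, huv⟩ ⟨-, A2, hA2, hv2, hw2, hvw⟩ ⟨-, A3, hA3, hu3, hw3, huw⟩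
    have h12 : A1 = A2 := by
      by_contra h12
      have hu2 : u.2 ∉ A2 := fun h => h12 (h_unique A1 hA1 A2 hA2 u.2 v.2 huv hu1 hv1 h hv2)
      have hw1 : w.2 ∉ A1 := fun h => h12 (h_unique A1 hA1 A2 hA2 v.2 w.2 hvw hv1 h hv2 hw2)
      have hcard : (A1 ∩ A2).card = 1 := by
        have hle := h2 A1 hA1 A2 hA2 h12
        have hv12 : v.2 ∈ A1 ∩ A2 := mem_inter.mpr ⟨hv1, hv2⟩
        have := Finset.card_pos.mpr ⟨v.2, hv12⟩
        omega
      have hadj := h3 A1 hA1 A2 hA2 h12 (by omega) u.2 (mem_sdiff.mpr ⟨hu1, hu2⟩)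
        w.2 (mem_sdiff.mpr ⟨hw2, hw1⟩)
      exact (h1 A3 hA3).2 u.2 hu3 w.2 hw3 huw hadj
    subst h12
    exact ⟨A1, hA1, hu1, hv1, hw2, huv, hvw, huw⟩
  -- two common vertices determine a triangle of X
  have h_third : ∀ S : Finset (Fin 3 × Fin n), X.IsNClique 3 S →
      ∀ u v, u ≠ v → u ∈ S → v ∈ S →
      ∃ z, S = insert u (insert v {z}) ∧ z ≠ u ∧ z ≠ v ∧
        X.Adj u v ∧ X.Adj u z ∧ X.Adj v z := by
    intro S hS u v huv huS hvS
    have hsub : ({u, v} : Finset (Fin 3 × Fin n)) ⊆ S := by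
      intro t ht
      rw [Finset.mem_insert, Finset.mem_singleton] at ht
      rcases ht with rfl | rfl
      · exact huS
      · exact hvS
    have hcs : (S \ {u, v}).card = 1 := by
      rw [Finset.card_sdiff_of_subset hsub, hS.card_eq, Finset.card_pair huv]
    obtain ⟨z, hz⟩ := Finset.card_eq_one.mp hcs
    have hzmem : z ∈ S \ ({u, v} : Finset (Fin 3 × Fin n)) := by
      rw [hz]; exact Finset.mem_singleton_self z
    rw [Finset.mem_sdiff, Finset.mem_insert, Finset.mem_singleton] at hzmem
    push_neg at hzmem
    obtain ⟨hzS, hzu, hzv⟩ := hzmem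
    have hSeq : S = insert u (insert v {z}) := by
      rw [← Finset.union_sdiff_of_subset hsub, hz]
      ext t
      simp only [Finset.mem_union, Finset.mem_insert, Finset.mem_singleton]
      tauto
    exact ⟨z, hSeq, hzu, hzv,
      hS.1 huS hvS huv, hS.1 huS hzS (Ne.symm hzu), hS.1 hvS hzS (Ne.symm hzv)⟩
  have h_two : ∀ T ∈ X.cliqueFinset 3, ∀ T' ∈ X.cliqueFinset 3, ∀ u v : Fin 3 × Fin n,
      u ≠ v → u ∈ T → v ∈ T → u ∈ T' → v ∈ T' → T = T' := by
    intro T hT T' hT' u v huv huT hvT huT' hvT'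
    rw [SimpleGraph.mem_cliqueFinset_iff] at hT hT'
    obtain ⟨z, hTeq, hzu, hzv, hauv, hauz, havz⟩ := h_third T hT u v huv huT hvT
    obtain ⟨z', hTeq', hzu', hzv', -, hauz', havz'⟩ := h_third T' hT' u v huv huT' hvT'
    have hzz : z = z' := by
      -- first components
      have hp1 : z.1 = z'.1 := by
        have e1 : u.1 ≠ v.1 := hauv.1
        have e2 : u.1 ≠ z.1 := hauz.1
        have e3 : v.1 ≠ z.1 := havz.1
        have e4 : u.1 ≠ z'.1 := hauz'.1
        have e5 : v.1 ≠ z'.1 := havz'.1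
        have l1 := u.1.isLt; have l2 := v.1.isLt; have l3 := z.1.isLt; have l4 := z'.1.isLt
        have m1 : u.1.val ≠ v.1.val := fun h => e1 (Fin.ext h)
        have m2 : u.1.val ≠ z.1.val := fun h => e2 (Fin.ext h)
        have m3 : v.1.val ≠ z.1.val := fun h => e3 (Fin.ext h)
        have m4 : u.1.val ≠ z'.1.val := fun h => e4 (Fin.ext h)
        have m5 : v.1.val ≠ z'.1.val := fun h => e5 (Fin.ext h)
        have : z.1.val = z'.1.val := by omega
        exact Fin.ext this
      -- second components
      have hp2 : z.2 = z'.2 := by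
        obtain ⟨A, hA, hu2, hv2, hz2, n1, n2, n3⟩ := h_tri u v z hauv havz hauz
        obtain ⟨A', hA', hu2', hv2', hz2', -, n5, n6⟩ := h_tri u v z' hauv havz' hauz'
        have hAA : A = A' := h_unique A hA A' hA' u.2 v.2 n1 hu2 hv2 hu2' hv2'
        subst hAA
        have hsub2 : ({u.2, v.2} : Finset (Fin n)) ⊆ A := by
          intro t ht
          rw [Finset.mem_insert, Finset.mem_singleton] at ht
          rcases ht with rfl | rfl
          · exact hu2
          · exact hv2
        have hcs2 : (A \ {u.2, v.2}).card = 1 := by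
          rw [Finset.card_sdiff_of_subset hsub2, (h1 A hA).1, Finset.card_pair n1]
        obtain ⟨w0, hw0⟩ := Finset.card_eq_one.mp hcs2
        have hz2m : z.2 ∈ A \ ({u.2, v.2} : Finset (Fin n)) := by
          rw [Finset.mem_sdiff, Finset.mem_insert, Finset.mem_singleton]
          exact ⟨hz2, by push_neg; exact ⟨Ne.symm n3, Ne.symm n2⟩⟩
        have hz2m' : z'.2 ∈ A \ ({u.2, v.2} : Finset (Fin n)) := by
          rw [Finset.mem_sdiff, Finset.mem_insert, Finset.mem_singleton]
          exact ⟨hz2', by push_neg; exact ⟨Ne.symm n6, Ne.symm n5⟩⟩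
        rw [hw0, Finset.mem_singleton] at hz2m hz2m'
        rw [hz2m, hz2m']
      exact Prod.ext hp1 hp2
    rw [hTeq, hTeq', hzz]
  -- counting triangles of X
  have hcount : (X.cliqueFinset 3).card ≤ 3 * n * (3 * n) := by
    classical
    set enc : Fin 3 × Fin n → ℕ := fun u => u.2.val * 3 + u.1.val with hencdef
    have henc_inj : Function.Injective enc := by
      intro u v h
      simp only [hencdef] at h
      have l1 := u.1.isLt; have l2 := v.1.isLt
      have : u.1.val = v.1.val ∧ u.2.val = v.2.val := by omega
      exact Prod.ext (Fin.ext this.1) (Fin.ext this.2)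
    have henc_lt : ∀ u : Fin 3 × Fin n, enc u < 3 * n := by
      intro u
      have l1 := u.1.isLt; have l2 := u.2.isLt
      simp only [hencdef]
      omega
    set f : Finset (Fin 3 × Fin n) → ℕ × ℕ := fun T =>
      if h : (T.image enc).Nonempty then ((T.image enc).min' h, (T.image enc).max' h)
      else (0, 0) with hfdef
    have := Finset.card_le_card_of_injOn (s := X.cliqueFinset 3) f
      (t := Finset.range (3 * n) ×ˢ Finset.range (3 * n)) ?_ ?_
    · calc (X.cliqueFinset 3).card ≤ (Finset.range (3 * n) ×ˢ Finset.range (3 * n)).card := this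
        _ = 3 * n * (3 * n) := by rw [Finset.card_product, Finset.card_range]
    · -- maps into target
      intro T hT
      have hT3 : T.card = 3 := (SimpleGraph.mem_cliqueFinset_iff.mp hT).card_eq
      have himg : (T.image enc).Nonempty := by
        rw [Finset.image_nonempty]
        exact Finset.card_pos.mp (by omega)
      rw [hfdef]
      simp only [dif_pos himg]
      rw [Finset.mem_coe, Finset.mem_product, Finset.mem_range, Finset.mem_range]
      constructor
      · obtain ⟨u, _, hu⟩ := Finset.mem_image.mp ((T.image enc).min'_mem himg)
        rw [← hu]; exact henc_lt u
      · obtain ⟨u, _, hu⟩ := Finset.mem_image.mp ((T.image enc).max'_mem himg)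
        rw [← hu]; exact henc_lt u
    · -- injective on cliques
      intro T hT T' hT' hff
      rw [Finset.mem_coe] at hT hT'
      have hT3 : T.card = 3 := (SimpleGraph.mem_cliqueFinset_iff.mp hT).card_eq
      have hT3' : T'.card = 3 := (SimpleGraph.mem_cliqueFinset_iff.mp hT').card_eq
      have himg : (T.image enc).Nonempty := by
        rw [Finset.image_nonempty]; exact Finset.card_pos.mp (by omega)
      have himg' : (T'.image enc).Nonempty := by
        rw [Finset.image_nonempty]; exact Finset.card_pos.mp (by omega)
      rw [hfdef] at hff
      simp only [dif_pos himg, dif_pos himg', Prod.mk.injEq] at hff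
      obtain ⟨hmin, hmax⟩ := hff
      have hcardimg : (T.image enc).card = 3 := by
        rw [Finset.card_image_of_injective _ henc_inj, hT3]
      have hminmax : (T.image enc).min' himg < (T.image enc).max' himg :=
        Finset.min'_lt_max'_of_card _ (by omega)
      obtain ⟨u1, hu1T, hu1⟩ := Finset.mem_image.mp ((T.image enc).min'_mem himg)
      obtain ⟨u2, hu2T, hu2⟩ := Finset.mem_image.mp ((T.image enc).max'_mem himg)
      obtain ⟨v1, hv1T, hv1⟩ := Finset.mem_image.mp ((T'.image enc).min'_mem himg')
      obtain ⟨v2, hv2T, hv2⟩ := Finset.mem_image.mp ((T'.image enc).max'_mem himg')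
      have e1 : u1 = v1 := henc_inj (by rw [hu1, hv1, hmin])
      have e2 : u2 = v2 := henc_inj (by rw [hu2, hv2, hmax])
      have e3 : u1 ≠ u2 := by
        intro h
        rw [h, hu2] at hu1
        omega
      exact h_two T hT T' hT' u1 u2 e3 hu1T hu2T (e1 ▸ hv1T) (e2 ▸ hv2T)
  -- apply the triangle removal lemma
  have hcard_type : (Fintype.card (Fin 3 × Fin n) : ℕ) = 3 * n := by
    simp [Fintype.card_prod]
  have hfew : ((X.cliqueFinset 3).card : ℝ) <
      SimpleGraph.triangleRemovalBound ε * (Fintype.card (Fin 3 × Fin n) : ℕ) ^ 3 := by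
    rw [hcard_type, ← hbdef]
    have c1 : ((X.cliqueFinset 3).card : ℝ) ≤ ((3 * n * (3 * n) : ℕ) : ℝ) := by
      exact_mod_cast hcount
    have c2 : ((3 * n * (3 * n) : ℕ) : ℝ) = 9 * (n : ℝ) ^ 2 := by push_cast; ring
    have c3 : (9 : ℝ) * (n : ℝ) ^ 2 < b * ((3 * n : ℕ) : ℝ) ^ 3 := by
      have hnpos : (0 : ℝ) < (n : ℝ) ^ 2 := by positivity
      have : (9 : ℝ) * (n : ℝ) ^ 2 * 1 < 9 * (n : ℝ) ^ 2 * (3 * b * n) := by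
        exact mul_lt_mul_of_pos_left hnb (by positivity)
      calc (9 : ℝ) * (n : ℝ) ^ 2 = 9 * (n : ℝ) ^ 2 * 1 := by ring
        _ < 9 * (n : ℝ) ^ 2 * (3 * b * n) := this
        _ = b * ((3 * n : ℕ) : ℝ) ^ 3 := by push_cast; ring
    calc ((X.cliqueFinset 3).card : ℝ) ≤ 9 * (n : ℝ) ^ 2 := by rw [← c2]; exact c1
      _ < b * ((3 * n : ℕ) : ℝ) ^ 3 := c3
  obtain ⟨G', hG'le, instG', hdel, hfree⟩ := X.triangle_removal hfew
  haveI := instG'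
  -- count deleted ordered pairs
  have hsubadj : ∀ u v : Fin 3 × Fin n, G'.Adj u v → X.Adj u v := fun u v h => hG'le h
  set fX : Finset ((Fin 3 × Fin n) × (Fin 3 × Fin n)) :=
    Finset.univ.filter fun (x, y) => X.Adj x y with hfXdef
  set fG : Finset ((Fin 3 × Fin n) × (Fin 3 × Fin n)) :=
    Finset.univ.filter fun (x, y) => G'.Adj x y with hfGdef
  have hfsub : fG ⊆ fX := by
    intro q hq
    rw [hfGdef, Finset.mem_filter] at hq
    rw [hfXdef, Finset.mem_filter]
    exact ⟨hq.1, hsubadj _ _ hq.2⟩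
  have hfX2 : 2 * X.edgeFinset.card = fX.card := by
    rw [hfXdef]; exact SimpleGraph.two_mul_card_edgeFinset (G := X)
  have hfG2 : 2 * G'.edgeFinset.card = fG.card := by
    rw [hfGdef]; exact SimpleGraph.two_mul_card_edgeFinset (G := G')
  have hdel' : ((fX \ fG).card : ℝ) < 2 * (ε * ((Fintype.card (Fin 3 × Fin n) : ℕ) ^ 2 : ℕ)) := by
    have e1 : ((fX \ fG).card : ℝ) = (fX.card : ℝ) - (fG.card : ℝ) := by
      rw [Finset.card_sdiff_of_subset hfsub, Nat.cast_sub (Finset.card_le_card hfsub)]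
    have e2 : (fX.card : ℝ) = 2 * (X.edgeFinset.card : ℝ) := by
      rw [← hfX2]; push_cast; ring
    have e3 : (fG.card : ℝ) = 2 * (G'.edgeFinset.card : ℝ) := by
      rw [← hfG2]; push_cast; ring
    have hbridge : (X.edgeFinset.card : ℝ) - (G'.edgeFinset.card : ℝ)
        < ε * ((Fintype.card (Fin 3 × Fin n) ^ 2 : ℕ) : ℝ) := by
      convert hdel using 3 <;> first
        | rfl
        | (congr 1; ext e; simp [SimpleGraph.mem_edgeFinset])
    rw [e1, e2, e3]
    linarith [mul_lt_mul_of_pos_left hbridge (by norm_num : (0:ℝ) < 2)]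
  -- injection from F into deleted pairs
  have hex : ∀ A : Finset (Fin n), ∃ q : (Fin 3 × Fin n) × (Fin 3 × Fin n),
      A ∈ F → (q ∈ fX \ fG ∧ q.1.2 ∈ A ∧ q.2.2 ∈ A ∧ q.1.2 ≠ q.2.2) := by
    intro A
    by_cases hA : A ∈ F
    swap
    · exact ⟨((0, ⟨0, hn0⟩), (0, ⟨0, hn0⟩)), fun h => absurd h hA⟩
    obtain ⟨x, y, z, hxy, hxz, hyz, rfl⟩ := Finset.card_eq_three.mp (h1 _ hA).1
    have hxm : x ∈ ({x, y, z} : Finset (Fin n)) := by simp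
    have hym : y ∈ ({x, y, z} : Finset (Fin n)) := by simp
    have hzm : z ∈ ({x, y, z} : Finset (Fin n)) := by simp
    set u : Fin 3 × Fin n := (0, x) with hudef
    set v : Fin 3 × Fin n := (1, y) with hvdef
    set w : Fin 3 × Fin n := (2, z) with hwdef
    have hauv : X.Adj u v := ⟨by simp [hudef, hvdef], {x, y, z}, hA, hxm, hym, hxy⟩
    have hauw : X.Adj u w := ⟨by simp [hudef, hwdef], {x, y, z}, hA, hxm, hzm, hxz⟩
    have havw : X.Adj v w := ⟨by simp [hvdef, hwdef], {x, y, z}, hA, hym, hzm, hyz⟩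
    have hnot : ¬ (G'.Adj u v ∧ G'.Adj u w ∧ G'.Adj v w) := by
      rintro ⟨g1, g2, g3⟩
      exact hfree {u, v, w} (SimpleGraph.is3Clique_triple_iff.mpr ⟨g1, g2, g3⟩)
    by_cases c1 : G'.Adj u v
    · by_cases c2 : G'.Adj u w
      · have c3 : ¬ G'.Adj v w := fun h => hnot ⟨c1, c2, h⟩
        refine ⟨(v, w), fun _ => ⟨?_, hym, hzm, hyz⟩⟩
        rw [Finset.mem_sdiff, hfXdef, hfGdef, Finset.mem_filter, Finset.mem_filter]
        exact ⟨⟨Finset.mem_univ _, havw⟩, fun h => c3 h.2⟩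
      · refine ⟨(u, w), fun _ => ⟨?_, hxm, hzm, hxz⟩⟩
        rw [Finset.mem_sdiff, hfXdef, hfGdef, Finset.mem_filter, Finset.mem_filter]
        exact ⟨⟨Finset.mem_univ _, hauw⟩, fun h => c2 h.2⟩
    · refine ⟨(u, v), fun _ => ⟨?_, hxm, hym, hxy⟩⟩
      rw [Finset.mem_sdiff, hfXdef, hfGdef, Finset.mem_filter, Finset.mem_filter]
      exact ⟨⟨Finset.mem_univ _, hauv⟩, fun h => c1 h.2⟩
  choose fdel hfdel using hex
  have hFle : F.card ≤ (fX \ fG).card := by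
    apply Finset.card_le_card_of_injOn fdel (fun A hA => (hfdel A hA).1)
    intro A hA B hB hAB
    rw [Finset.mem_coe] at hA hB
    obtain ⟨-, ha1, ha2, ha3⟩ := hfdel A hA
    obtain ⟨-, hb1, hb2, -⟩ := hfdel B hB
    rw [hAB] at ha1 ha2 ha3
    exact h_unique A hA B hB _ _ ha3 (hAB ▸ (hfdel A hA).2.1) (hAB ▸ (hfdel A hA).2.2.1) hb1 hb2
  -- final computation
  have : (F.card : ℝ) < 2 * (ε * ((Fintype.card (Fin 3 × Fin n) : ℕ) ^ 2 : ℕ)) :=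
    lt_of_le_of_lt (by exact_mod_cast hFle) hdel'
  have hfinal : 2 * (ε * (((Fintype.card (Fin 3 × Fin n) : ℕ) ^ 2 : ℕ) : ℝ)) = δ * (n : ℝ) ^ 2 := by
    rw [hεdef]
    push_cast [hcard_type]
    ring
  rw [hfinal] at this
  exact le_of_lt this

theorem goodFam3_bound (δ : ℝ) (hδ : 0 < δ) :
    ∃ N : ℕ, ∀ n : ℕ, N ≤ n → ∀ (G : SimpleGraph (Fin n)) (F : Finset (Finset (Fin n))),
      GoodFam G 3 F → (F.card : ℝ) ≤ δ * (n : ℝ) ^ 2 := by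
  obtain ⟨N, hN⟩ := goodFam3_aux (min δ 1) (lt_min hδ one_pos) (min_le_right _ _)
  refine ⟨N, fun n hn G F hF => le_trans (hN n hn G F hF) ?_⟩
  have : (0 : ℝ) ≤ (n : ℝ) ^ 2 := by positivity
  exact mul_le_mul_of_nonneg_right (min_le_left _ _) this

theorem goodFam_bound (m : ℕ) (hm : 3 ≤ m) (δ : ℝ) (hδ : 0 < δ) :
    ∃ N : ℕ, ∀ n : ℕ, N ≤ n → ∀ (G : SimpleGraph (Fin n)) (F : Finset (Finset (Fin n))),
      GoodFam G m F → (F.card : ℝ) ≤ δ * (n : ℝ) ^ (m - 1) := by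
  induction m, hm using Nat.le_induction with
  | base => simpa using goodFam3_bound δ hδ
  | succ m hm3 ih =>
    obtain ⟨N, hN⟩ := ih
    refine ⟨N, fun n hn G F hF => ?_⟩
    have key : ∀ w : Fin n, ((F.filter (fun A => w ∈ A)).card : ℝ) ≤ δ * (n : ℝ) ^ (m - 1) := by
      intro w
      rw [← goodFam_link_card (F := F) w]
      have h := goodFam_link (by omega : 3 ≤ m + 1) hF w
      simp only [Nat.add_sub_cancel] at h
      exact hN n hn G _ h
    have hsum : ∑ A ∈ F, A.card = (m + 1) * F.card := by
      rw [Finset.sum_congr rfl (fun A hA => (hF.1 A hA).1), Finset.sum_const, smul_eq_mul,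
        mul_comm]
    have hcount : ((m + 1 : ℕ) : ℝ) * (F.card : ℝ) ≤ (n : ℝ) * (δ * (n : ℝ) ^ (m - 1)) := by
      have h1 : ((m + 1) * F.card : ℕ) = ∑ w : Fin n, (F.filter (fun A => w ∈ A)).card := by
        rw [sum_card_filter_mem, hsum]
      have h2 : (∑ w : Fin n, ((F.filter (fun A => w ∈ A)).card : ℝ))
          ≤ ∑ _w : Fin n, δ * (n : ℝ) ^ (m - 1) := Finset.sum_le_sum fun w _ => key w
      rw [Finset.sum_const, card_univ, Fintype.card_fin, nsmul_eq_mul] at h2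
      calc ((m + 1 : ℕ) : ℝ) * (F.card : ℝ) = (((m + 1) * F.card : ℕ) : ℝ) := by push_cast; ring
        _ = ∑ w : Fin n, ((F.filter (fun A => w ∈ A)).card : ℝ) := by rw [h1]; push_cast; rfl
        _ ≤ _ := h2
    have hm1 : (1 : ℝ) ≤ ((m + 1 : ℕ) : ℝ) := by push_cast; linarith [Nat.cast_nonneg (α := ℝ) m]
    have hF0 : (0 : ℝ) ≤ (F.card : ℝ) := Nat.cast_nonneg _
    have : (F.card : ℝ) ≤ (n : ℝ) * (δ * (n : ℝ) ^ (m - 1)) :=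
      le_trans (le_mul_of_one_le_left hF0 hm1) hcount
    calc (F.card : ℝ) ≤ (n : ℝ) * (δ * (n : ℝ) ^ (m - 1)) := this
      _ = δ * ((n : ℝ) ^ (m - 1) * (n : ℝ)) := by ring
      _ = δ * (n : ℝ) ^ (m + 1 - 1) := by
          rw [← pow_succ]
          congr 2
          omega

section Geodesic
variable {V : Type*} {G : SimpleGraph V} {u v : V}

lemma exists_walk_getVert (p : G.Walk u v) (i : ℕ) :
    ∀ j : ℕ, i ≤ j → j ≤ p.length →
      ∃ q : G.Walk (p.getVert i) (p.getVert j), q.length = j - i := by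
  intro j
  induction j with
  | zero => intro hij _; obtain rfl : i = 0 := Nat.le_zero.mp hij; exact ⟨Walk.nil, rfl⟩
  | succ j ih =>
    intro hij hj
    rcases Nat.lt_or_ge i (j + 1) with hlt | hge
    · have hij' : i ≤ j := by omega
      obtain ⟨q, hq⟩ := ih hij' (by omega)
      refine ⟨q.concat (p.adj_getVert_succ (by omega)), ?_⟩
      rw [Walk.length_concat, hq]; omega
    · obtain rfl : i = j + 1 := by omega
      exact ⟨Walk.nil, by simp⟩

lemma dist_getVert_le (p : G.Walk u v) {i j : ℕ} (hij : i ≤ j) (hj : j ≤ p.length) :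
    G.dist (p.getVert i) (p.getVert j) ≤ j - i := by
  obtain ⟨q, hq⟩ := exists_walk_getVert p i j hij hj
  exact hq ▸ SimpleGraph.dist_le q

lemma reachable_getVert (p : G.Walk u v) {i j : ℕ} (hij : i ≤ j) (hj : j ≤ p.length) :
    G.Reachable (p.getVert i) (p.getVert j) := by
  obtain ⟨q, _⟩ := exists_walk_getVert p i j hij hj
  exact ⟨q⟩

lemma geodesic_dist (p : G.Walk u v) (hp : p.length = G.dist u v) {i j : ℕ}
    (hij : i ≤ j) (hj : j ≤ p.length) :
    G.dist (p.getVert i) (p.getVert j) = j - i := by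
  refine le_antisymm (dist_getVert_le p hij hj) ?_
  obtain ⟨q1, hq1⟩ := exists_walk_getVert p 0 i (Nat.zero_le _) (le_trans hij hj)
  obtain ⟨q3, hq3⟩ := exists_walk_getVert p j p.length hj le_rfl
  obtain ⟨q2, hq2⟩ := (reachable_getVert p hij hj).exists_walk_length_eq_dist
  have hle : G.dist u v ≤ i + (G.dist (p.getVert i) (p.getVert j) + (p.length - j)) := by
    have := SimpleGraph.dist_le
      (((q1.copy p.getVert_zero rfl).append (q2.append q3)).copy rfl p.getVert_length)
    simpa [Walk.length_append, hq1, hq2, hq3] using this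
  omega

end Geodesic

section Config

variable {n k : ℕ} {G : SimpleGraph (Fin n)}

lemma config_not_adj_inter (hk : 2 ≤ k) {x y : {s : Finset (Fin n) // s.card = k ∧ IndepFinset G s}}
    (hne : x ≠ y) (hnadj : ¬ (ConfigGraph G k).Adj x y) :
    ((x : Finset (Fin n)) ∩ (y : Finset (Fin n))).card ≤ k - 2 := by
  have h1 : ((x : Finset (Fin n)) ∩ y).card ≤ k :=
    le_trans (card_le_card inter_subset_left) (le_of_eq x.2.1)
  have h2 : ((x : Finset (Fin n)) ∩ y).card ≠ k := by
    intro h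
    apply hne
    have hsub : (x : Finset (Fin n)) ⊆ y := by
      rw [← Finset.inter_eq_left]
      exact Finset.eq_of_subset_of_card_le inter_subset_left (by rw [x.2.1, h])
    exact Subtype.ext (Finset.eq_of_subset_of_card_le hsub (by rw [x.2.1, y.2.1]))
  have h3 : ((x : Finset (Fin n)) ∩ y).card ≠ k - 1 := fun h => hnadj ⟨hne, h⟩
  omega

lemma config_crossing (hk : 2 ≤ k) {x y : {s : Finset (Fin n) // s.card = k ∧ IndepFinset G s}}
    (hd : 3 ≤ (ConfigGraph G k).dist x y)
    (hcard : ((x : Finset (Fin n)) ∩ y).card = k - 2) :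
    ∀ a ∈ (x : Finset (Fin n)) \ y, ∀ b ∈ (y : Finset (Fin n)) \ x, G.Adj a b := by
  intro a ha b hb
  by_contra hab
  rw [mem_sdiff] at ha hb
  have haS : a ∉ (x : Finset (Fin n)) ∩ y := fun h => ha.2 (mem_inter.mp h).2
  have hbS : b ∉ (x : Finset (Fin n)) ∩ y := fun h => hb.2 (mem_inter.mp h).1
  have habne : a ≠ b := fun h => hb.2 (h ▸ ha.1)
  set S : Finset (Fin n) := (x : Finset (Fin n)) ∩ y with hS
  have hSx : S ⊆ (x : Finset (Fin n)) := inter_subset_left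
  have hSy : S ⊆ (y : Finset (Fin n)) := inter_subset_right
  set M : Finset (Fin n) := insert a (insert b S) with hM
  have hbM : b ∉ insert b S → False := fun h => h (mem_insert_self _ _)
  have hMcard : M.card = k := by
    rw [hM, card_insert_of_notMem (by
        simp only [mem_insert]
        push_neg
        exact ⟨habne, haS⟩),
      card_insert_of_notMem hbS, hcard]
    omega
  have hMindep : IndepFinset G M := by
    intro s hs t ht hst
    simp only [hM, mem_insert] at hs ht
    have hax : a ∈ (x : Finset (Fin n)) := ha.1
    have hby : b ∈ (y : Finset (Fin n)) := hb.1
    rcases hs with rfl | rfl | hsS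
    · rcases ht with rfl | rfl | htS
      · exact absurd rfl hst
      · exact hab
      · exact x.2.2 s hax t (hSx htS) hst
    · rcases ht with rfl | rfl | htS
      · exact fun h => hab h.symm
      · exact absurd rfl hst
      · exact y.2.2 s hby t (hSy htS) hst
    · rcases ht with rfl | rfl | htS
      · exact x.2.2 s (hSx hsS) t hax hst
      · exact y.2.2 s (hSy hsS) t hby hst
      · exact x.2.2 s (hSx hsS) t (hSx htS) hst
  set z : {s : Finset (Fin n) // s.card = k ∧ IndepFinset G s} := ⟨M, hMcard, hMindep⟩ with hz
  have hxz : (ConfigGraph G k).Adj x z := by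
    constructor
    · intro h
      apply hb.2
      have : (x : Finset (Fin n)) = M := congrArg Subtype.val h
      rw [this, hM]
      exact mem_insert_of_mem (mem_insert_self _ _)
    · have : (x : Finset (Fin n)) ∩ M = insert a S := by
        ext s
        simp only [hM, mem_inter, mem_insert]
        constructor
        · rintro ⟨hsx, rfl | rfl | hsS⟩
          · exact Or.inl rfl
          · exact absurd hsx hb.2
          · exact Or.inr hsS
        · rintro (rfl | hsS)
          · exact ⟨ha.1, Or.inl rfl⟩
          · exact ⟨hSx hsS, Or.inr (Or.inr hsS)⟩
      rw [this, card_insert_of_notMem haS, hcard]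
      omega
  have hzy : (ConfigGraph G k).Adj z y := by
    constructor
    · intro h
      apply ha.2
      have : M = (y : Finset (Fin n)) := congrArg Subtype.val h
      rw [← this, hM]
      exact mem_insert_self _ _
    · have : M ∩ (y : Finset (Fin n)) = insert b S := by
        ext s
        simp only [hM, mem_inter, mem_insert]
        constructor
        · rintro ⟨rfl | rfl | hsS, hsy⟩
          · exact absurd hsy ha.2
          · exact Or.inl rfl
          · exact Or.inr hsS
        · rintro (rfl | hsS)
          · exact ⟨Or.inr (Or.inl rfl), hb.1⟩
          · exact ⟨Or.inr (Or.inr hsS), hSy hsS⟩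
      rw [this, card_insert_of_notMem hbS, hcard]
      omega
  have : (ConfigGraph G k).dist x y ≤ 2 := by
    have := SimpleGraph.dist_le (Walk.cons hxz (Walk.cons hzy Walk.nil))
    simpa using this
  omega

end Config

/-- For every `k ≥ 3`, `D(n,k) = o(n^(k-1))`. -/
theorem D_littleO (k : ℕ) (hk : 3 ≤ k) :
    ∀ ε : ℝ, 0 < ε → ∃ N : ℕ, ∀ n : ℕ, N ≤ n →
      (D n k : ℝ) ≤ ε * (n : ℝ) ^ (k - 1) := by
  intro ε hε
  obtain ⟨N, hN⟩ := goodFam_bound k hk (ε / 3) (by positivity)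
  refine ⟨N, fun n hn => ?_⟩
  have hpow : (0 : ℝ) ≤ ε * (n : ℝ) ^ (k - 1) := by positivity
  have key : ∀ (G : SimpleGraph (Fin n))
      (x y : {s : Finset (Fin n) // s.card = k ∧ IndepFinset G s}),
      (ConfigGraph G k).Reachable x y →
      (((ConfigGraph G k).dist x y : ℕ) : ℝ) ≤ ε * (n : ℝ) ^ (k - 1) := by
    intro G x y hxy
    obtain ⟨p, hp⟩ := hxy.exists_walk_length_eq_dist
    set L := p.length with hLdef
    -- the three mod-3 families
    set Ifun : ℕ → Finset (Fin n) := fun i => ((p.getVert i : _) : Finset (Fin n)) with hIfun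
    have hsetup : ∀ i j : ℕ, i ≤ j → j ≤ L → 3 ≤ j - i →
        ((Ifun i ∩ Ifun j).card ≤ k - 2 ∧
          ((Ifun i ∩ Ifun j).card = k - 2 →
            ∀ a ∈ Ifun i \ Ifun j, ∀ b ∈ Ifun j \ Ifun i, G.Adj a b)) := by
      intro i j hij hj hgap
      have hd : (ConfigGraph G k).dist (p.getVert i) (p.getVert j) = j - i :=
        geodesic_dist p hp hij hj
      have hne : p.getVert i ≠ p.getVert j := by
        intro h
        rw [h, SimpleGraph.dist_self] at hd
        omega
      have hnadj : ¬ (ConfigGraph G k).Adj (p.getVert i) (p.getVert j) := by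
        intro hadj
        have := SimpleGraph.dist_le (Walk.cons hadj Walk.nil)
        simp only [Walk.length_cons, Walk.length_nil] at this
        omega
      exact ⟨config_not_adj_inter (by omega) hne hnadj,
        fun hcard => config_crossing (by omega) (by omega) hcard⟩
    have hfam : ∀ r : ℕ, GoodFam G k
        (((Finset.range (L + 1)).filter (fun i => i % 3 = r)).image Ifun) := by
      intro r
      have main : ∀ i ∈ (Finset.range (L + 1)).filter (fun i => i % 3 = r),
          ∀ j ∈ (Finset.range (L + 1)).filter (fun i => i % 3 = r),
          Ifun i ≠ Ifun j →
          ((Ifun i ∩ Ifun j).card ≤ k - 2 ∧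
            ((Ifun i ∩ Ifun j).card = k - 2 →
              ∀ a ∈ Ifun i \ Ifun j, ∀ b ∈ Ifun j \ Ifun i, G.Adj a b)) := by
        intro i hi j hj hne
        rw [mem_filter, Finset.mem_range] at hi hj
        have hij : i ≠ j := fun h => hne (h ▸ rfl)
        rcases Nat.lt_or_ge i j with hlt | hge
        · exact hsetup i j (le_of_lt hlt) (by omega) (by omega)
        · have hlt : j < i := by omega
          obtain ⟨hA, hB⟩ := hsetup j i (le_of_lt hlt) (by omega) (by omega)
          rw [Finset.inter_comm] at hA hB
          exact ⟨hA, fun hc a hha b hhb => (hB hc b hhb a hha).symm⟩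
      refine ⟨?_, ?_, ?_⟩
      · intro A hA
        obtain ⟨i, _, rfl⟩ := Finset.mem_image.mp hA
        exact ⟨(p.getVert i).2.1, (p.getVert i).2.2⟩
      · intro A hA B hB hne
        obtain ⟨i, hi, rfl⟩ := Finset.mem_image.mp hA
        obtain ⟨j, hj, rfl⟩ := Finset.mem_image.mp hB
        exact (main i hi j hj hne).1
      · intro A hA B hB hne hcard
        obtain ⟨i, hi, rfl⟩ := Finset.mem_image.mp hA
        obtain ⟨j, hj, rfl⟩ := Finset.mem_image.mp hB
        exact (main i hi j hj hne).2 hcard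
    have hcardfam : ∀ r : ℕ,
        ((Finset.range (L + 1)).filter (fun i => i % 3 = r)).card
          = (((Finset.range (L + 1)).filter (fun i => i % 3 = r)).image Ifun).card := by
      intro r
      rw [Finset.card_image_of_injOn]
      intro i hi j hj hij
      rw [mem_coe, mem_filter, Finset.mem_range] at hi hj
      by_contra hne
      rcases Nat.lt_or_ge i j with hlt | hge
      · have hd : (ConfigGraph G k).dist (p.getVert i) (p.getVert j) = j - i :=
          geodesic_dist p hp (le_of_lt hlt) (by omega)
        have : p.getVert i = p.getVert j := Subtype.ext hij
        rw [this, SimpleGraph.dist_self] at hd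
        omega
      · have hlt : j < i := by omega
        have hd : (ConfigGraph G k).dist (p.getVert j) (p.getVert i) = i - j :=
          geodesic_dist p hp (le_of_lt hlt) (by omega)
        have : p.getVert j = p.getVert i := Subtype.ext hij.symm
        rw [this, SimpleGraph.dist_self] at hd
        omega
    have hpartition : L + 1 = ∑ r ∈ Finset.range 3,
        ((Finset.range (L + 1)).filter (fun i => i % 3 = r)).card := by
      have := Finset.card_eq_sum_card_fiberwise
        (f := fun i => i % 3) (s := Finset.range (L + 1)) (t := Finset.range 3)
        (fun x _ => Finset.mem_range.mpr (Nat.mod_lt _ (by omega)))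
      rwa [Finset.card_range] at this
    have hLbound : ((L : ℝ) + 1) ≤ ε * (n : ℝ) ^ (k - 1) := by
      have h1 : ((L + 1 : ℕ) : ℝ) = ∑ r ∈ Finset.range 3,
          ((((Finset.range (L + 1)).filter (fun i => i % 3 = r)).card : ℕ) : ℝ) := by
        conv_lhs => rw [hpartition]
        push_cast
        rfl
      have h2 : ∀ r ∈ Finset.range 3,
          ((((Finset.range (L + 1)).filter (fun i => i % 3 = r)).card : ℕ) : ℝ)
            ≤ (ε / 3) * (n : ℝ) ^ (k - 1) := by
        intro r _
        rw [hcardfam r]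
        exact hN n hn G _ (hfam r)
      have h3 := Finset.sum_le_sum h2
      rw [← h1] at h3
      rw [Finset.sum_const, Finset.card_range, nsmul_eq_mul] at h3
      push_cast at h3 ⊢
      linarith
    have : ((ConfigGraph G k).dist x y : ℝ) = (L : ℝ) := by rw [← hp]
    rw [this]
    linarith
  have hDle : D n k ≤ ⌊ε * (n : ℝ) ^ (k - 1)⌋₊ := by
    unfold D maxCompDiam compDiam
    apply Finset.sup_le
    intro G _
    apply Finset.sup_le
    intro u _
    apply Finset.sup_le
    intro pq _
    split_ifs with h
    · exact Nat.le_floor (key G pq.1 pq.2 (h.1.symm.trans h.2))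
    · exact Nat.zero_le _
  calc (D n k : ℝ) ≤ (⌊ε * (n : ℝ) ^ (k - 1)⌋₊ : ℝ) := Nat.cast_le.mpr hDle
    _ ≤ _ := Nat.floor_le hpow
end

section
/- For every integer n ≥ 2, D(n,2) = n − 2: every connected component of the 2-token-jumping configuration graph of any n-vertex graph has diameter at most n − 2, and the complement of the path on n vertices attains this bound (its 2-configuration graph is connected with diameter n − 2). -/
/-!
Common definitions: independent sets of a given size, the token-jumping configuration
graph `R_k(G)`, diameters of connected components, and the extremal function `D n k`.
-/

open Finset SimpleGraph

attribute [local instance] Classical.propDecidable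

section Aux
variable {V : Type*} [DecidableEq V]

lemma pair_inter_eq {x y z : V} (hyz : y ≠ z) :
    ({x, y} ∩ {x, z} : Finset V) = {x} := by
  ext u
  simp only [Finset.mem_inter, Finset.mem_insert, Finset.mem_singleton]
  constructor
  · rintro ⟨h1 | h1, h2 | h2⟩ <;> try assumption
    exact absurd (h1.symm.trans h2) hyz
  · rintro rfl; exact ⟨Or.inl rfl, Or.inl rfl⟩

/-- Build a configuration (independent 2-set) from an edge of the complement. -/
def cfg (G : SimpleGraph V) {x y : V} (h : Gᶜ.Adj x y) :
    {s : Finset V // s.card = 2 ∧ IndepFinset G s} :=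
  ⟨{x, y}, by
    have hxy : x ≠ y := h.ne
    obtain ⟨-, hnadj⟩ := h
    refine ⟨?_, ?_⟩
    · rw [Finset.card_insert_of_notMem (by simp [hxy]), Finset.card_singleton]
    · intro u hu v hv huv
      simp only [Finset.mem_insert, Finset.mem_singleton] at hu hv
      rcases hu with rfl | rfl <;> rcases hv with rfl | rfl
      · exact absurd rfl huv
      · exact hnadj
      · exact fun hadj => hnadj hadj.symm
      · exact absurd rfl huv⟩

lemma cfg_val (G : SimpleGraph V) {x y : V} (h : Gᶜ.Adj x y) :
    (cfg G h).1 = {x, y} := rfl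

lemma cfg_swap (G : SimpleGraph V) {x y : V} (h : Gᶜ.Adj x y) :
    cfg G h.symm = cfg G h := Subtype.ext (Finset.pair_comm y x)

lemma cfg_adj (G : SimpleGraph V) {x y z : V} (h1 : Gᶜ.Adj x y) (h2 : Gᶜ.Adj x z)
    (hyz : y ≠ z) : (ConfigGraph G 2).Adj (cfg G h1) (cfg G h2) := by
  constructor
  · intro hEq
    have hy : y ∈ ({x, z} : Finset V) := by
      have := congrArg Subtype.val hEq
      simp only [cfg_val] at this
      rw [← this]; simp
    simp only [Finset.mem_insert, Finset.mem_singleton] at hy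
    rcases hy with rfl | rfl
    · exact h1.ne rfl
    · exact hyz rfl
  · show (({x, y} : Finset V) ∩ {x, z}).card = 2 - 1
    rw [pair_inter_eq hyz, Finset.card_singleton]

lemma cfg_walk (G : SimpleGraph V) : ∀ {a c : V} (p : Gᶜ.Walk a c), p.IsPath →
    ∀ {b d : V} (hab : Gᶜ.Adj a b) (hcd : Gᶜ.Adj c d), b ∉ p.support → d ∉ p.support →
    b ≠ d → ∃ w : (ConfigGraph G 2).Walk (cfg G hab) (cfg G hcd), w.length ≤ p.length + 1 := by
  intro a c p
  induction p with
  | nil =>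
    intro _ b d hab hcd hb hd hbd
    exact ⟨SimpleGraph.Walk.cons (cfg_adj G hab hcd hbd) SimpleGraph.Walk.nil, by simp⟩
  | @cons a a' c h q ih =>
    intro hp b d hab hcd hb hd hbd
    rw [SimpleGraph.Walk.cons_isPath_iff] at hp
    rw [SimpleGraph.Walk.support_cons, List.mem_cons] at hb hd
    push_neg at hb hd
    have had : a ≠ d := fun hh => hd.1 hh.symm
    obtain ⟨w, hw⟩ := ih hp.1 h.symm hcd hp.2 hd.2 had
    have hba' : b ≠ a' := fun hh => hb.2 (hh ▸ q.start_mem_support)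
    have edge : (ConfigGraph G 2).Adj (cfg G hab) (cfg G h) := cfg_adj G hab h hba'
    refine ⟨SimpleGraph.Walk.cons edge (w.copy (cfg_swap G h) rfl), ?_⟩
    rw [SimpleGraph.Walk.length_cons, SimpleGraph.Walk.length_copy,
      SimpleGraph.Walk.length_cons]
    omega

lemma reach_within (G : SimpleGraph V) (I : {s : Finset V // s.card = 2 ∧ IndepFinset G s})
    {a c : V} (ha : a ∈ I.1) (hc : c ∈ I.1) : Gᶜ.Reachable a c := by
  by_cases h : a = c
  · exact h ▸ Reachable.refl a
  · exact (SimpleGraph.compl_adj G a c |>.mpr ⟨h, I.2.2 a ha c hc h⟩).reachable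

lemma reach_of_walk (G : SimpleGraph V) : ∀ {I J : {s : Finset V // s.card = 2 ∧ IndepFinset G s}}
    (_ : (ConfigGraph G 2).Walk I J) {a c : V}, a ∈ I.1 → c ∈ J.1 → Gᶜ.Reachable a c := by
  intro I J w
  induction w with
  | nil => exact fun ha hc => reach_within G _ ha hc
  | @cons I I' J h w ih =>
    intro a c ha hc
    have hne : (I.1 ∩ I'.1).Nonempty := by
      rw [← Finset.card_pos, h.2]; norm_num
    obtain ⟨x, hx⟩ := hne
    rw [Finset.mem_inter] at hx
    exact (reach_within G I ha hx.1).trans (ih hx.2 hc)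

end Aux

section Key
variable {V : Type*} [DecidableEq V] [Fintype V]

lemma key_dist (G : SimpleGraph V) {a b c d : V} (hab : Gᶜ.Adj a b) (hcd : Gᶜ.Adj c d)
    (hbd : b ≠ d) (hr : Gᶜ.Reachable a c)
    (h1 : Gᶜ.dist a c ≤ Gᶜ.dist b c) (h2 : Gᶜ.dist a c ≤ Gᶜ.dist a d) :
    (ConfigGraph G 2).dist (cfg G hab) (cfg G hcd) ≤ Fintype.card V - 2 := by
  obtain ⟨p, hp, hlen⟩ := hr.exists_path_of_dist
  have hb : b ∉ p.support := by
    intro hmem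
    have hsplit : (p.takeUntil b hmem).length + (p.dropUntil b hmem).length = p.length := by
      have := congrArg SimpleGraph.Walk.length (p.take_spec hmem)
      rwa [SimpleGraph.Walk.length_append] at this
    have htpos : 0 < (p.takeUntil b hmem).length := by
      rcases Nat.eq_zero_or_pos (p.takeUntil b hmem).length with h0 | h0
      · exact absurd (SimpleGraph.Walk.eq_of_length_eq_zero h0) hab.ne
      · exact h0
    have hdle : Gᶜ.dist b c ≤ (p.dropUntil b hmem).length := SimpleGraph.dist_le _
    omega
  have hd : d ∉ p.support := by
    intro hmem
    have hsplit : (p.takeUntil d hmem).length + (p.dropUntil d hmem).length = p.length := by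
      have := congrArg SimpleGraph.Walk.length (p.take_spec hmem)
      rwa [SimpleGraph.Walk.length_append] at this
    have hdpos : 0 < (p.dropUntil d hmem).length := by
      rcases Nat.eq_zero_or_pos (p.dropUntil d hmem).length with h0 | h0
      · exact absurd (SimpleGraph.Walk.eq_of_length_eq_zero h0) hcd.ne'
      · exact h0
    have hdle : Gᶜ.dist a d ≤ (p.takeUntil d hmem).length := SimpleGraph.dist_le _
    omega
  have hcount : p.length + 3 ≤ Fintype.card V := by
    have hnodup : p.support.Nodup := hp.support_nodup
    have hcard : p.support.toFinset.card = p.length + 1 := by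
      rw [List.toFinset_card_of_nodup hnodup, SimpleGraph.Walk.length_support]
    have hbt : b ∉ p.support.toFinset := by rwa [List.mem_toFinset]
    have hdt : d ∉ p.support.toFinset := by rwa [List.mem_toFinset]
    have hbig : (insert b (insert d p.support.toFinset)).card = p.length + 3 := by
      rw [Finset.card_insert_of_notMem (by simp [hbd, hbt]),
        Finset.card_insert_of_notMem hdt, hcard]
    calc p.length + 3 = (insert b (insert d p.support.toFinset)).card := hbig.symm
      _ ≤ Fintype.card V := Finset.card_le_univ _
  obtain ⟨w, hw⟩ := cfg_walk G p hp hab hcd hb hd hbd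
  calc (ConfigGraph G 2).dist (cfg G hab) (cfg G hcd) ≤ w.length := SimpleGraph.dist_le w
    _ ≤ p.length + 1 := hw
    _ ≤ Fintype.card V - 2 := by omega

omit [Fintype V] in
lemma config_eq_cfg (G : SimpleGraph V) {I : {s : Finset V // s.card = 2 ∧ IndepFinset G s}}
    {x y : V} (hI : I.1 = {x, y}) (h : Gᶜ.Adj x y) : I = cfg G h := Subtype.ext hI

lemma dist_ub (G : SimpleGraph V) (I J : {s : Finset V // s.card = 2 ∧ IndepFinset G s})
    (hr : (ConfigGraph G 2).Reachable I J) :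
    (ConfigGraph G 2).dist I J ≤ Fintype.card V - 2 := by
  by_cases hIJ : I = J
  · simp [hIJ, SimpleGraph.dist_self]
  obtain ⟨a, b, hab0, hI⟩ := Finset.card_eq_two.mp I.2.1
  obtain ⟨c, d, hcd0, hJ⟩ := Finset.card_eq_two.mp J.2.1
  have haI : a ∈ I.1 := by rw [hI]; simp
  have hbI : b ∈ I.1 := by rw [hI]; simp
  have hcJ : c ∈ J.1 := by rw [hJ]; simp
  have hdJ : d ∈ J.1 := by rw [hJ]; simp
  have hab : Gᶜ.Adj a b := (SimpleGraph.compl_adj G a b).mpr ⟨hab0, I.2.2 a haI b hbI hab0⟩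
  have hcd : Gᶜ.Adj c d := (SimpleGraph.compl_adj G c d).mpr ⟨hcd0, J.2.2 c hcJ d hdJ hcd0⟩
  by_cases hshare : (I.1 ∩ J.1).Nonempty
  · -- they share a vertex: adjacent
    have hinter2 : (I.1 ∩ J.1).card ≤ 2 := by
      calc (I.1 ∩ J.1).card ≤ I.1.card := Finset.card_le_card Finset.inter_subset_left
        _ = 2 := I.2.1
    have hinter1 : 1 ≤ (I.1 ∩ J.1).card := Finset.card_pos.mpr hshare
    have hinterne : (I.1 ∩ J.1).card ≠ 2 := by
      intro h2
      apply hIJ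
      apply Subtype.ext
      have e1 : I.1 ∩ J.1 = I.1 :=
        Finset.eq_of_subset_of_card_le Finset.inter_subset_left (by omega)
      have e2 : I.1 ∩ J.1 = J.1 :=
        Finset.eq_of_subset_of_card_le Finset.inter_subset_right (by omega)
      rw [← e1, e2]
    have hadj : (ConfigGraph G 2).Adj I J := ⟨hIJ, by omega⟩
    have h3 : 3 ≤ Fintype.card V := by
      have hu : (I.1 ∪ J.1).card = 3 := by
        have := Finset.card_union_add_card_inter I.1 J.1
        rw [I.2.1, J.2.1] at this
        omega
      calc 3 = (I.1 ∪ J.1).card := hu.symm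
        _ ≤ Fintype.card V := Finset.card_le_univ _
    calc (ConfigGraph G 2).dist I J ≤ (SimpleGraph.Walk.cons hadj SimpleGraph.Walk.nil).length :=
        SimpleGraph.dist_le _
      _ = 1 := by simp
      _ ≤ Fintype.card V - 2 := by omega
  · -- disjoint pairs
    rw [Finset.not_nonempty_iff_eq_empty] at hshare
    have hdisj : ∀ x ∈ I.1, ∀ y ∈ J.1, x ≠ y := by
      intro x hx y hy hxy
      subst hxy
      have : x ∈ I.1 ∩ J.1 := Finset.mem_inter.mpr ⟨hx, hy⟩
      simp [hshare] at this
    have hac := hdisj a haI c hcJ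
    have had := hdisj a haI d hdJ
    have hbc := hdisj b hbI c hcJ
    have hbd := hdisj b hbI d hdJ
    obtain ⟨w⟩ := hr
    have Rac : Gᶜ.Reachable a c := reach_of_walk G w haI hcJ
    have Rad : Gᶜ.Reachable a d := reach_of_walk G w haI hdJ
    have Rbc : Gᶜ.Reachable b c := reach_of_walk G w hbI hcJ
    have Rbd : Gᶜ.Reachable b d := reach_of_walk G w hbI hdJ
    have eI : I = cfg G hab := config_eq_cfg G hI hab
    have eI' : I = cfg G hab.symm := config_eq_cfg G (hI.trans (Finset.pair_comm a b)) hab.symm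
    have eJ : J = cfg G hcd := config_eq_cfg G hJ hcd
    have eJ' : J = cfg G hcd.symm := config_eq_cfg G (hJ.trans (Finset.pair_comm c d)) hcd.symm
    rcases le_total (Gᶜ.dist a c) (Gᶜ.dist a d) with h1 | h1 <;>
      rcases le_total (Gᶜ.dist b c) (Gᶜ.dist b d) with h2 | h2
    · rcases le_total (Gᶜ.dist a c) (Gᶜ.dist b c) with h3 | h3
      · rw [eI, eJ]; exact key_dist G hab hcd hbd Rac h3 h1
      · rw [eI', eJ]
        exact key_dist G hab.symm hcd had Rbc h3 h2
    · rcases le_total (Gᶜ.dist a c) (Gᶜ.dist b d) with h3 | h3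
      · rw [eI, eJ]; exact key_dist G hab hcd hbd Rac (h3.trans h2) h1
      · rw [eI', eJ']
        exact key_dist G hab.symm hcd.symm hac Rbd (h3.trans h1) h2
    · rcases le_total (Gᶜ.dist a d) (Gᶜ.dist b c) with h3 | h3
      · rw [eI, eJ']
        exact key_dist G hab hcd.symm hbc Rad (h3.trans h2) h1
      · rw [eI', eJ]
        exact key_dist G hab.symm hcd had Rbc (h3.trans h1) h2
    · rcases le_total (Gᶜ.dist a d) (Gᶜ.dist b d) with h3 | h3
      · rw [eI, eJ']
        exact key_dist G hab hcd.symm hbc Rad h3 h1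
      · rw [eI', eJ']
        exact key_dist G hab.symm hcd.symm hac Rbd h3 h2

end Key

section PathPart

lemma pcadj (n i : ℕ) (h : i + 1 < n) :
    ((SimpleGraph.pathGraph n)ᶜ)ᶜ.Adj ⟨i, by omega⟩ ⟨i + 1, h⟩ := by
  rw [compl_compl]
  exact SimpleGraph.pathGraph_adj.mpr (Or.inl rfl)

/-- The configuration `{i, i+1}` of the complement of the path graph. -/
def mkcfg (n i : ℕ) (h : i + 1 < n) :
    {s : Finset (Fin n) // s.card = 2 ∧ IndepFinset ((SimpleGraph.pathGraph n)ᶜ) s} :=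
  cfg ((SimpleGraph.pathGraph n)ᶜ) (pcadj n i h)

lemma mkcfg_val (n i : ℕ) (h : i + 1 < n) :
    (mkcfg n i h).1 = {(⟨i, by omega⟩ : Fin n), ⟨i + 1, h⟩} := rfl

lemma config_struct (n : ℕ)
    (I : {s : Finset (Fin n) // s.card = 2 ∧ IndepFinset ((SimpleGraph.pathGraph n)ᶜ) s}) :
    ∃ i : ℕ, ∃ h : i + 1 < n, I = mkcfg n i h := by
  obtain ⟨u, v, huv, hI⟩ := Finset.card_eq_two.mp I.2.1
  have huI : u ∈ I.1 := by rw [hI]; simp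
  have hvI : v ∈ I.1 := by rw [hI]; simp
  have hadj : (SimpleGraph.pathGraph n).Adj u v := by
    have hni := I.2.2 u huI v hvI huv
    rw [SimpleGraph.compl_adj] at hni
    push_neg at hni
    exact hni huv
  have hult := u.isLt
  have hvlt := v.isLt
  rcases SimpleGraph.pathGraph_adj.mp hadj with h | h
  · refine ⟨u.val, by omega, ?_⟩
    apply Subtype.ext
    rw [hI, mkcfg_val]
    ext w
    simp only [Finset.mem_insert, Finset.mem_singleton, Fin.ext_iff, Fin.val_mk]
    omega
  · refine ⟨v.val, by omega, ?_⟩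
    apply Subtype.ext
    rw [hI, mkcfg_val]
    ext w
    simp only [Finset.mem_insert, Finset.mem_singleton, Fin.ext_iff, Fin.val_mk]
    omega

/-- potential function: sum of the values in a configuration. -/
def phi {n : ℕ}
    (I : {s : Finset (Fin n) // s.card = 2 ∧ IndepFinset ((SimpleGraph.pathGraph n)ᶜ) s}) : ℕ :=
  ∑ v ∈ I.1, v.val

lemma phi_mkcfg (n i : ℕ) (h : i + 1 < n) : phi (mkcfg n i h) = 2 * i + 1 := by
  have hne : (⟨i, by omega⟩ : Fin n) ≠ ⟨i + 1, h⟩ := by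
    intro hh
    have := congrArg Fin.val hh
    simp at this
  rw [phi, mkcfg_val, Finset.sum_pair hne]
  show i + (i + 1) = 2 * i + 1
  omega

lemma adj_step {n : ℕ} {I J}
    (h : (ConfigGraph ((SimpleGraph.pathGraph n)ᶜ) 2).Adj I J) :
    phi J ≤ phi I + 2 ∧ phi I ≤ phi J + 2 := by
  obtain ⟨i, hi, rfl⟩ := config_struct n I
  obtain ⟨j, hj, rfl⟩ := config_struct n J
  have hne : ((mkcfg n i hi).1 ∩ (mkcfg n j hj).1).Nonempty := by
    rw [← Finset.card_pos, h.2]; norm_num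
  obtain ⟨x, hx⟩ := hne
  rw [Finset.mem_inter, mkcfg_val, mkcfg_val] at hx
  simp only [Finset.mem_insert, Finset.mem_singleton] at hx
  obtain ⟨hx1, hx2⟩ := hx
  have e1 : x.val = i ∨ x.val = i + 1 := by
    rcases hx1 with rfl | rfl <;> simp
  have e2 : x.val = j ∨ x.val = j + 1 := by
    rcases hx2 with rfl | rfl <;> simp
  rw [phi_mkcfg, phi_mkcfg]
  omega

lemma walk_phi {n : ℕ} {I J}
    (w : (ConfigGraph ((SimpleGraph.pathGraph n)ᶜ) 2).Walk I J) :
    phi J ≤ phi I + 2 * w.length ∧ phi I ≤ phi J + 2 * w.length := by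
  induction w with
  | nil => simp
  | @cons I I' J h w ih =>
    have hs := adj_step h
    rw [SimpleGraph.Walk.length_cons]
    omega

lemma mkcfg_adj_succ (n i : ℕ) (h1 : i + 1 < n) (h2 : i + 2 < n) :
    (ConfigGraph ((SimpleGraph.pathGraph n)ᶜ) 2).Adj (mkcfg n i h1) (mkcfg n (i+1) h2) := by
  constructor
  · intro hEq
    have := congrArg (fun I => phi I) hEq
    simp only [phi_mkcfg] at this
    omega
  · show ((mkcfg n i h1).1 ∩ (mkcfg n (i+1) h2).1).card = 2 - 1
    rw [mkcfg_val, mkcfg_val]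
    have hcomm : ({(⟨i, by omega⟩ : Fin n), ⟨i + 1, h1⟩} : Finset (Fin n))
        = {(⟨i + 1, h1⟩ : Fin n), ⟨i, by omega⟩} := Finset.pair_comm _ _
    have hfix : (⟨i + 1, by omega⟩ : Fin n) = (⟨i + 1, h1⟩ : Fin n) := rfl
    rw [hcomm, hfix]
    rw [pair_inter_eq (by intro hh; have := congrArg Fin.val hh; simp at this; omega)]
    simp

lemma reach_mkcfg (n : ℕ) (h0 : 0 + 1 < n) :
    ∀ (i : ℕ) (h : i + 1 < n),
      (ConfigGraph ((SimpleGraph.pathGraph n)ᶜ) 2).Reachable (mkcfg n 0 h0) (mkcfg n i h) := by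
  intro i
  induction i with
  | zero => intro h; exact SimpleGraph.Reachable.refl _
  | succ i ih =>
    intro h
    exact (ih (by omega)).trans (mkcfg_adj_succ n i (by omega) h).reachable

end PathPart

section Main

lemma le_compDiam {α : Type*} [Fintype α] (H : SimpleGraph α) (u x y : α)
    (hx : H.Reachable u x) (hy : H.Reachable u y) : H.dist x y ≤ compDiam H u := by
  unfold compDiam
  have h := Finset.le_sup (f := fun p : α × α =>
    if H.Reachable u p.1 ∧ H.Reachable u p.2 then H.dist p.1 p.2 else 0)
    (Finset.mem_univ (x, y))
  simpa [hx, hy] using h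

lemma compDiam_le {α : Type*} [Fintype α] (H : SimpleGraph α) (u : α) {m : ℕ}
    (h : ∀ x y : α, H.Reachable u x → H.Reachable u y → H.dist x y ≤ m) :
    compDiam H u ≤ m := by
  unfold compDiam
  apply Finset.sup_le
  intro p _
  split_ifs with hc
  · exact h p.1 p.2 hc.1 hc.2
  · exact Nat.zero_le _

lemma compDiam_le_maxCompDiam {α : Type*} [Fintype α] (H : SimpleGraph α) (u : α) :
    compDiam H u ≤ maxCompDiam H := by
  unfold maxCompDiam
  exact Finset.le_sup (Finset.mem_univ u)

lemma maxCompDiam_le {α : Type*} [Fintype α] (H : SimpleGraph α) {m : ℕ}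
    (h : ∀ u : α, compDiam H u ≤ m) : maxCompDiam H ≤ m := by
  unfold maxCompDiam
  exact Finset.sup_le fun u _ => h u

lemma mcd_le {n : ℕ} (G : SimpleGraph (Fin n)) :
    maxCompDiam (ConfigGraph G 2) ≤ n - 2 := by
  apply maxCompDiam_le
  intro u
  apply compDiam_le
  intro x y hx hy
  have := dist_ub G x y (hx.symm.trans hy)
  simpa [Fintype.card_fin] using this

lemma path_lb (n : ℕ) (hn : 2 ≤ n) (h0 : 0 + 1 < n) (hl : (n - 2) + 1 < n) :
    n - 2 ≤ (ConfigGraph ((SimpleGraph.pathGraph n)ᶜ) 2).dist (mkcfg n 0 h0)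
      (mkcfg n (n - 2) hl) := by
  obtain ⟨w, hw⟩ := (reach_mkcfg n h0 (n - 2) hl).exists_walk_length_eq_dist
  have hp := walk_phi w
  rw [phi_mkcfg, phi_mkcfg] at hp
  omega

lemma path_conn (n : ℕ) (hn : 2 ≤ n) :
    (ConfigGraph ((SimpleGraph.pathGraph n)ᶜ) 2).Connected := by
  have h0 : 0 + 1 < n := by omega
  haveI : Nonempty
      {s : Finset (Fin n) // s.card = 2 ∧ IndepFinset ((SimpleGraph.pathGraph n)ᶜ) s} :=
    ⟨mkcfg n 0 h0⟩
  refine ⟨fun I J => ?_⟩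
  obtain ⟨i, hi, rfl⟩ := config_struct n I
  obtain ⟨j, hj, rfl⟩ := config_struct n J
  exact (reach_mkcfg n h0 i hi).symm.trans (reach_mkcfg n h0 j hj)

lemma mcd_path (n : ℕ) (hn : 2 ≤ n) :
    maxCompDiam (ConfigGraph ((SimpleGraph.pathGraph n)ᶜ) 2) = n - 2 := by
  apply le_antisymm (mcd_le _)
  have h0 : 0 + 1 < n := by omega
  have hl : (n - 2) + 1 < n := by omega
  have hreach := reach_mkcfg n h0 (n - 2) hl
  calc n - 2 ≤ (ConfigGraph ((SimpleGraph.pathGraph n)ᶜ) 2).dist (mkcfg n 0 h0)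
        (mkcfg n (n - 2) hl) := path_lb n hn h0 hl
    _ ≤ compDiam (ConfigGraph ((SimpleGraph.pathGraph n)ᶜ) 2) (mkcfg n 0 h0) :=
        le_compDiam _ _ _ _ (SimpleGraph.Reachable.refl _) hreach
    _ ≤ maxCompDiam (ConfigGraph ((SimpleGraph.pathGraph n)ᶜ) 2) :=
        compDiam_le_maxCompDiam _ _

end Main


/-- `D(n,2) = n - 2`, and the complement of the path on `n` vertices attains this bound:
its `2`-configuration graph is connected with diameter `n - 2`. -/
theorem D_two (n : ℕ) (hn : 2 ≤ n) :
    D n 2 = n - 2 ∧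
    (ConfigGraph ((SimpleGraph.pathGraph n)ᶜ) 2).Connected ∧
    maxCompDiam (ConfigGraph ((SimpleGraph.pathGraph n)ᶜ) 2) = n - 2 := by
  have h1 : D n 2 ≤ n - 2 := by
    unfold D
    apply Finset.sup_le
    intro G _
    exact mcd_le G
  have h2 := mcd_path n hn
  have h3 : maxCompDiam (ConfigGraph ((SimpleGraph.pathGraph n)ᶜ) 2) ≤ D n 2 := by
    unfold D
    exact Finset.le_sup (f := fun G => maxCompDiam (ConfigGraph G 2))
      (Finset.mem_univ ((SimpleGraph.pathGraph n)ᶜ))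
  exact ⟨le_antisymm h1 (h2 ▸ h3), path_conn n hn, h2⟩
end

section
/- Let G be a finite simple graph, let A and B be independent sets of G of size 2, and let a ∈ A and b ∈ B. Then A and B lie in the same connected component of R_2(G) (equivalently, there is a token-jumping transformation from A to B) if and only if a and b lie in the same connected component of the complement of G. -/
/-!
Common definitions: independent sets of a given size, the token-jumping configuration
graph `R_k(G)`, diameters of connected components, and the extremal function `D n k`.
-/

open Finset SimpleGraph

attribute [local instance] Classical.propDecidable

private lemma pair_reach_aux {V : Type*} (G : SimpleGraph V) {I : Finset V}
    (hI : I.card = 2 ∧ IndepFinset G I) {u v : V} (hu : u ∈ I) (hv : v ∈ I) :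
    Gᶜ.Reachable u v := by
  by_cases h : u = v
  · subst h; rfl
  · exact SimpleGraph.Adj.reachable ((SimpleGraph.compl_adj G u v).2 ⟨h, hI.2 u hu v hv h⟩)

private lemma share_reach_aux {V : Type*} [Fintype V] [DecidableEq V] (G : SimpleGraph V)
    {A B : Finset V} (hA : A.card = 2 ∧ IndepFinset G A) (hB : B.card = 2 ∧ IndepFinset G B)
    {a : V} (ha : a ∈ A) (hb : a ∈ B) :
    (ConfigGraph G 2).Reachable ⟨A, hA⟩ ⟨B, hB⟩ := by
  by_cases hAB : A = B
  · subst hAB; rfl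
  · refine SimpleGraph.Adj.reachable ?_
    refine ⟨by simpa [Subtype.ext_iff] using hAB, ?_⟩
    have h1 : 1 ≤ (A ∩ B).card := Finset.card_pos.2 ⟨a, Finset.mem_inter.2 ⟨ha, hb⟩⟩
    have h2 : (A ∩ B).card ≤ 2 := hA.1 ▸ Finset.card_le_card Finset.inter_subset_left
    have h3 : (A ∩ B).card ≠ 2 := by
      intro hc
      have hAe : A ∩ B = A := Finset.eq_of_subset_of_card_le Finset.inter_subset_left
        (by omega)
      have hBe : A ∩ B = B := Finset.eq_of_subset_of_card_le Finset.inter_subset_right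
        (by omega)
      exact hAB (hAe.symm.trans hBe)
    simp only []
    omega

private lemma config_forward_aux {V : Type*} [Fintype V] [DecidableEq V] (G : SimpleGraph V)
    {I J : {s : Finset V // s.card = 2 ∧ IndepFinset G s}}
    (w : (ConfigGraph G 2).Walk I J) :
    ∀ a ∈ (I : Finset V), ∀ b ∈ (J : Finset V), Gᶜ.Reachable a b := by
  induction w with
  | @nil u => exact fun a ha b hb => pair_reach_aux G u.2 ha hb
  | @cons I K J h w IH =>
    intro a ha b hb
    have hcard : ((I : Finset V) ∩ (K : Finset V)).card = 1 := h.2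
    obtain ⟨c, hc⟩ := Finset.card_pos.1 (by omega : 0 < ((I : Finset V) ∩ (K : Finset V)).card)
    have hcI := (Finset.mem_inter.1 hc).1
    have hcK := (Finset.mem_inter.1 hc).2
    exact (pair_reach_aux G I.2 ha hcI).trans (IH c hcK b hb)

private lemma config_backward_aux {V : Type*} [Fintype V] [DecidableEq V] (G : SimpleGraph V)
    {a b : V} (w : Gᶜ.Walk a b) :
    ∀ (A : Finset V) (hA : A.card = 2 ∧ IndepFinset G A) (_ : a ∈ A)
      (B : Finset V) (hB : B.card = 2 ∧ IndepFinset G B) (_ : b ∈ B),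
      (ConfigGraph G 2).Reachable ⟨A, hA⟩ ⟨B, hB⟩ := by
  induction w with
  | nil => exact fun A hA ha B hB hb => share_reach_aux G hA hB ha hb
  | @cons a x b h w IH =>
    intro A hA ha B hB hb
    have hax : a ≠ x := ((SimpleGraph.compl_adj G a x).1 h).1
    have hnadj : ¬ G.Adj a x := ((SimpleGraph.compl_adj G a x).1 h).2
    have hC : ({a, x} : Finset V).card = 2 ∧ IndepFinset G ({a, x} : Finset V) := by
      constructor
      · exact Finset.card_pair hax
      · intro u hu v hv huv
        simp only [Finset.mem_insert, Finset.mem_singleton] at hu hv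
        rcases hu with rfl | rfl <;> rcases hv with rfl | rfl
        · exact absurd rfl huv
        · exact hnadj
        · exact fun hadj => hnadj hadj.symm
        · exact absurd rfl huv
    refine (share_reach_aux G hA hC ha (by simp)).trans ?_
    exact IH _ hC (by simp) B hB hb

/-- Let `A, B` be independent sets of size `2` of `G`, and `a ∈ A`, `b ∈ B`. Then `A` and `B`
lie in the same connected component of `R_2(G)` iff `a` and `b` lie in the same connected
component of the complement of `G`. -/
theorem config_two_reachable_iff {V : Type*} [Fintype V] [DecidableEq V] (G : SimpleGraph V)
    (A B : Finset V) (hA : A.card = 2 ∧ IndepFinset G A) (hB : B.card = 2 ∧ IndepFinset G B)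
    (a b : V) (ha : a ∈ A) (hb : b ∈ B) :
    (ConfigGraph G 2).Reachable ⟨A, hA⟩ ⟨B, hB⟩ ↔ Gᶜ.Reachable a b := by
  constructor
  · intro hr
    obtain ⟨w⟩ := hr
    exact config_forward_aux G w a ha b hb
  · intro hr
    obtain ⟨w⟩ := hr
    exact config_backward_aux G w A hA ha B hB hb
end

section
/- There exist constants c₁, c₂ > 0 such that for every positive integer n there is a graph G on 10n vertices whose 3n-token-jumping configuration graph R_{3n}(G) is a path of length L with c₁ · 4ⁿ ≤ L ≤ c₂ · 4ⁿ. In particular, D(10n, 3n) ≥ c₁ · 4ⁿ, i.e., D(m, 3m/10) = Ω(2^{m/5}). -/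
set_option maxRecDepth 10000

/-!
Common definitions: independent sets of a given size, the token-jumping configuration
graph `R_k(G)`, diameters of connected components, and the extremal function `D n k`.
-/

open Finset SimpleGraph

attribute [local instance] Classical.propDecidable

namespace TJ

def hset : Fin 10 → Finset (Fin 10) :=
  ![{0,1,2},{0,1,3},{0,3,4},{0,4,5},{0,5,6},{5,6,7},{5,7,8},{3,7,8},{3,7,9},{2,7,9}]

/-- gadget adjacency : not contained together in any `hset`. -/
def gAdj (u v : Fin 10) : Prop := u ≠ v ∧ ∀ k : Fin 10, ¬(u ∈ hset k ∧ v ∈ hset k)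

instance : ∀ u v, Decidable (gAdj u v) := fun u v => by unfold gAdj; infer_instance

def StepAdj (a b : Fin 10) : Prop := (a:ℕ)+1 = (b:ℕ) ∨ (b:ℕ)+1 = (a:ℕ)

instance : ∀ a b, Decidable (StepAdj a b) := fun a b => by unfold StepAdj; infer_instance

lemma hset_card : ∀ k, (hset k).card = 3 := by decide
lemma hset_inj : ∀ a b, hset a ⊆ hset b → a = b := by decide

lemma quad : ∀ a b c d : Fin 10, a ≠ b → a ≠ c → a ≠ d → b ≠ c → b ≠ d → c ≠ d →
    gAdj a b ∨ gAdj a c ∨ gAdj a d ∨ gAdj b c ∨ gAdj b d ∨ gAdj c d := by decide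

lemma triple : ∀ a b c : Fin 10, a ≠ b → a ≠ c → b ≠ c →
    ¬ gAdj a b → ¬ gAdj a c → ¬ gAdj b c →
    ∃ k, a ∈ hset k ∧ b ∈ hset k ∧ c ∈ hset k := by decide

lemma inter_card_two : ∀ a b, ((hset a ∩ hset b).card = 2 ↔ StepAdj a b) := by decide

lemma mem_three : ∀ k, (3:Fin 10) ∈ hset k ↔ (k = 1 ∨ k = 2 ∨ k = 7 ∨ k = 8) := by decide
lemma mem_six : ∀ k, (6:Fin 10) ∈ hset k ↔ (k = 4 ∨ k = 5) := by decide

lemma not_gAdj_of_mem : ∀ k, ∀ u ∈ hset k, ∀ v ∈ hset k, ¬ gAdj u v := by decide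

def GIndep (s : Finset (Fin 10)) : Prop := ∀ u ∈ s, ∀ v ∈ s, u ≠ v → ¬ gAdj u v

lemma gindep_card_le {s : Finset (Fin 10)} (h : GIndep s) : s.card ≤ 3 := by
  by_contra hc
  push_neg at hc
  obtain ⟨t, hts, ht4⟩ := Finset.exists_subset_card_eq hc
  obtain ⟨a, ha⟩ := Finset.card_pos.1 (by omega : 0 < t.card)
  have h3 : (t.erase a).card = 3 := by rw [Finset.card_erase_of_mem ha, ht4]
  obtain ⟨x, y, z, hxy, hxz, hyz, he⟩ := Finset.card_eq_three.1 h3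
  have hx : x ∈ t.erase a := by rw [he]; simp
  have hy : y ∈ t.erase a := by rw [he]; simp
  have hz : z ∈ t.erase a := by rw [he]; simp
  have hax : a ≠ x := fun h => (Finset.mem_erase.1 hx).1 h.symm
  have hay : a ≠ y := fun h => (Finset.mem_erase.1 hy).1 h.symm
  have haz : a ≠ z := fun h => (Finset.mem_erase.1 hz).1 h.symm
  have ha' := hts ha
  have hx' := hts (Finset.mem_of_mem_erase hx)
  have hy' := hts (Finset.mem_of_mem_erase hy)
  have hz' := hts (Finset.mem_of_mem_erase hz)
  rcases quad a x y z hax hay haz hxy hxz hyz with h'|h'|h'|h'|h'|h'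
  · exact h a ha' x hx' hax h'
  · exact h a ha' y hy' hay h'
  · exact h a ha' z hz' haz h'
  · exact h x hx' y hy' hxy h'
  · exact h x hx' z hz' hxz h'
  · exact h y hy' z hz' hyz h'

lemma gindep_eq_hset {s : Finset (Fin 10)} (h : GIndep s) (hc : s.card = 3) :
    ∃ k, s = hset k := by
  obtain ⟨x, y, z, hxy, hxz, hyz, he⟩ := Finset.card_eq_three.1 hc
  have hx : x ∈ s := by rw [he]; simp
  have hy : y ∈ s := by rw [he]; simp
  have hz : z ∈ s := by rw [he]; simp
  obtain ⟨k, h1, h2, h3⟩ := triple x y z hxy hxz hyz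
    (h x hx y hy hxy) (h x hx z hz hxz) (h y hy z hz hyz)
  refine ⟨k, Finset.eq_of_subset_of_card_le ?_ (by rw [hset_card, hc])⟩
  rw [he]
  intro w hw
  simp only [Finset.mem_insert, Finset.mem_singleton] at hw
  rcases hw with rfl|rfl|rfl <;> assumption

/-- cross adjacency rule: `u` at a higher level, `w` at a lower level;
`near` indicates the lower level is the immediately preceding one. -/
def crossAdj (u : Fin 10) (near : Prop) (w : Fin 10) : Prop :=
  (u = 3 ∧ ((near ∧ w ∉ hset 9) ∨ (¬ near ∧ w ∉ hset 0))) ∨ (u = 6 ∧ w ∉ hset 0)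

def bigAdj (n : ℕ) (p q : Fin n × Fin 10) : Prop :=
  (p.1 = q.1 ∧ gAdj p.2 q.2) ∨
  ((q.1:ℕ) < (p.1:ℕ) ∧ crossAdj p.2 ((q.1:ℕ)+1 = (p.1:ℕ)) q.2) ∨
  ((p.1:ℕ) < (q.1:ℕ) ∧ crossAdj q.2 ((p.1:ℕ)+1 = (q.1:ℕ)) p.2)

def bigG (n : ℕ) : SimpleGraph (Fin n × Fin 10) where
  Adj p q := bigAdj n p q
  symm := by
    constructor
    rintro p q (⟨h1, h2, h3⟩|⟨h1, h2⟩|⟨h1, h2⟩)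
    · exact Or.inl ⟨h1.symm, h2.symm, fun k hk => h3 k ⟨hk.2, hk.1⟩⟩
    · exact Or.inr (Or.inr ⟨h1, h2⟩)
    · exact Or.inr (Or.inl ⟨h1, h2⟩)
  loopless := by
    constructor
    rintro p (⟨_, h2, _⟩|⟨h1, _⟩|⟨h1, _⟩)
    · exact h2 rfl
    · exact lt_irrefl _ h1
    · exact lt_irrefl _ h1

def fset {n : ℕ} (t : Fin n → Finset (Fin 10)) : Finset (Fin n × Fin 10) :=
  Finset.univ.filter (fun p => p.2 ∈ t p.1)

lemma fset_eq_biUnion {n : ℕ} (t : Fin n → Finset (Fin 10)) :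
    fset t = Finset.univ.biUnion
      (fun i => (t i).map ⟨Prod.mk i, fun a b h => (Prod.mk.injEq _ _ _ _ ▸ h).2⟩) := by
  ext ⟨i, u⟩
  simp [fset]
  constructor
  · intro h; exact ⟨i, u, h, rfl⟩
  · rintro ⟨a, b, hb, he⟩
    have h1 : a = i := congrArg Prod.fst he
    have h2 : b = u := congrArg Prod.snd he
    subst h1; subst h2; exact hb

lemma fset_card {n : ℕ} (t : Fin n → Finset (Fin 10)) :
    (fset t).card = ∑ i, (t i).card := by
  rw [fset_eq_biUnion, Finset.card_biUnion]
  · simp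
  · intro a _ b _ hab
    simp only [Finset.disjoint_left, Finset.mem_map]
    rintro p ⟨u, _, rfl⟩ ⟨w, _, h⟩
    exact hab (Prod.mk.injEq _ _ _ _ ▸ h).1.symm

lemma fset_inter {n : ℕ} (t s : Fin n → Finset (Fin 10)) :
    fset t ∩ fset s = fset (fun i => t i ∩ s i) := by
  ext ⟨i, u⟩
  simp [fset]

def cfg {n : ℕ} (x : Fin n → Fin 10) : Finset (Fin n × Fin 10) := fset (fun i => hset (x i))

lemma cfg_card {n : ℕ} (x : Fin n → Fin 10) : (cfg x).card = 3 * n := by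
  rw [cfg, fset_card]
  simp [hset_card, Finset.sum_const, mul_comm]

def Valid {n : ℕ} (x : Fin n → Fin 10) : Prop :=
  ∀ i j : Fin n, (j:ℕ) < (i:ℕ) →
    ((x i = 1 ∨ x i = 2 ∨ x i = 7 ∨ x i = 8) →
        x j = if (j:ℕ)+1 = (i:ℕ) then 9 else 0) ∧
    ((x i = 4 ∨ x i = 5) → x j = 0)

lemma mem_cfg {n : ℕ} (x : Fin n → Fin 10) (i : Fin n) (u : Fin 10) :
    (i, u) ∈ cfg x ↔ u ∈ hset (x i) := by simp [cfg, fset]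

lemma indep_cfg_iff {n : ℕ} (x : Fin n → Fin 10) :
    IndepFinset (bigG n) (cfg x) ↔ Valid x := by
  constructor
  · intro h i j hji
    constructor
    · intro hx
      have h3 : ((3:Fin 10)) ∈ hset (x i) := (mem_three (x i)).2 hx
      have hmem : (i, (3:Fin 10)) ∈ cfg x := (mem_cfg x i 3).2 h3
      have key : ∀ w ∈ hset (x j), w ∈ hset (if (j:ℕ)+1 = (i:ℕ) then 9 else 0) := by
        intro w hw
        have hmw : (j, w) ∈ cfg x := (mem_cfg x j w).2 hw
        have hne : (i, (3:Fin 10)) ≠ (j, w) := by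
          intro he
          have := congrArg Prod.fst he
          simp only at this
          subst this
          omega
        have hnadj := h _ hmem _ hmw hne
        by_contra hcon
        apply hnadj
        refine Or.inr (Or.inl ⟨hji, Or.inl ⟨rfl, ?_⟩⟩)
        by_cases hnear : (j:ℕ)+1 = (i:ℕ)
        · left
          refine ⟨hnear, fun hw9 => hcon ?_⟩
          rwa [if_pos hnear]
        · right
          refine ⟨hnear, fun hw0 => hcon ?_⟩
          rwa [if_neg hnear]
      exact hset_inj _ _ key
    · intro hx
      have h6 : ((6:Fin 10)) ∈ hset (x i) := (mem_six (x i)).2 hx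
      have hmem : (i, (6:Fin 10)) ∈ cfg x := (mem_cfg x i 6).2 h6
      have key : ∀ w ∈ hset (x j), w ∈ hset 0 := by
        intro w hw
        have hmw : (j, w) ∈ cfg x := (mem_cfg x j w).2 hw
        have hne : (i, (6:Fin 10)) ≠ (j, w) := by
          intro he
          have := congrArg Prod.fst he
          simp only at this
          subst this
          omega
        have hnadj := h _ hmem _ hmw hne
        by_contra hcon
        exact hnadj (Or.inr (Or.inl ⟨hji, Or.inr ⟨rfl, hcon⟩⟩))
      exact hset_inj _ _ key
  · rintro hv ⟨i, u⟩ hu ⟨j, w⟩ hw hne hadj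
    rw [mem_cfg] at hu hw
    rcases hadj with ⟨hij, hg⟩|⟨hlt, hcr⟩|⟨hlt, hcr⟩
    · simp only at hij
      subst hij
      exact not_gAdj_of_mem (x i) u hu w hw hg
    · simp only at hlt
      rcases hcr with ⟨hu3, hor⟩|⟨hu6, hnot0⟩
      · simp only at hu3; subst hu3
        have hxj := (hv i j hlt).1 ((mem_three (x i)).1 hu)
        rcases hor with ⟨hnear, hnot9⟩|⟨hnnear, hnot0⟩
        · rw [if_pos hnear] at hxj; rw [hxj] at hw; exact hnot9 hw
        · rw [if_neg hnnear] at hxj; rw [hxj] at hw; exact hnot0 hw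
      · simp only at hu6; subst hu6
        have hxj := (hv i j hlt).2 ((mem_six (x i)).1 hu)
        rw [hxj] at hw; exact hnot0 hw
    · simp only at hlt
      rcases hcr with ⟨hw3, hor⟩|⟨hw6, hnot0⟩
      · simp only at hw3; subst hw3
        have hxi := (hv j i hlt).1 ((mem_three (x j)).1 hw)
        rcases hor with ⟨hnear, hnot9⟩|⟨hnnear, hnot0⟩
        · rw [if_pos hnear] at hxi; rw [hxi] at hu; exact hnot9 hu
        · rw [if_neg hnnear] at hxi; rw [hxi] at hu; exact hnot0 hu
      · simp only at hw6; subst hw6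
        have hxi := (hv j i hlt).2 ((mem_six (x j)).1 hw)
        rw [hxi] at hu; exact hnot0 hu

lemma cfg_inj {n : ℕ} {x y : Fin n → Fin 10} (h : cfg x = cfg y) : x = y := by
  funext i
  apply hset_inj
  intro u hu
  exact (mem_cfg y i u).1 (h ▸ (mem_cfg x i u).2 hu)

lemma indep_eq_cfg {n : ℕ} {I : Finset (Fin n × Fin 10)} (hc : I.card = 3 * n)
    (h : IndepFinset (bigG n) I) : ∃ x : Fin n → Fin 10, I = cfg x := by
  classical
  set slice : Fin n → Finset (Fin 10) :=
    fun i => (I.filter (fun p => p.1 = i)).image Prod.snd with hslice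
  have hmemslice : ∀ i u, u ∈ slice i ↔ (i, u) ∈ I := by
    intro i u
    simp only [hslice, Finset.mem_image, Finset.mem_filter]
    constructor
    · rintro ⟨⟨i', u'⟩, ⟨hpI, hp1⟩, hp2⟩
      simp only at hp1 hp2
      subst hp1; subst hp2; exact hpI
    · intro hI; exact ⟨(i, u), ⟨hI, rfl⟩, rfl⟩
  have hindep : ∀ i, GIndep (slice i) := by
    intro i u hu w hw huw
    rw [hmemslice] at hu hw
    have hne : ((i, u) : Fin n × Fin 10) ≠ (i, w) := by
      intro he; exact huw (congrArg Prod.snd he)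
    intro hg
    exact h _ hu _ hw hne (Or.inl ⟨rfl, hg⟩)
  have hcardle : ∀ i, (slice i).card ≤ 3 := fun i => gindep_card_le (hindep i)
  have hcardslice : ∀ i, (slice i).card = (I.filter (fun p => p.1 = i)).card := by
    intro i
    apply Finset.card_image_of_injOn
    rintro ⟨i1, u1⟩ hp ⟨i2, u2⟩ hq he
    simp only [Finset.coe_filter, Set.mem_setOf_eq] at hp hq
    simp only at he
    rw [Prod.mk.injEq]
    exact ⟨hp.2.trans hq.2.symm, he⟩
  have hsum : ∑ i, (slice i).card = 3 * n := by
    rw [← hc, Finset.card_eq_sum_card_fiberwise (f := Prod.fst) (t := Finset.univ)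
      (fun p _ => Finset.mem_univ _)]
    exact Finset.sum_congr rfl fun i _ => hcardslice i
  have hcard3 : ∀ i, (slice i).card = 3 := by
    by_contra hcon
    push_neg at hcon
    obtain ⟨i0, hi0⟩ := hcon
    have hlt : ∑ i, (slice i).card < ∑ _i : Fin n, 3 := by
      apply Finset.sum_lt_sum (fun i _ => hcardle i)
      exact ⟨i0, Finset.mem_univ _, lt_of_le_of_ne (hcardle i0) hi0⟩
    rw [hsum] at hlt
    simp only [Finset.sum_const, Finset.card_univ, Fintype.card_fin, smul_eq_mul] at hlt
    omega
  have hex : ∀ i, ∃ k, slice i = hset k := fun i => gindep_eq_hset (hindep i) (hcard3 i)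
  choose x hx using hex
  refine ⟨x, ?_⟩
  ext ⟨i, u⟩
  rw [mem_cfg, ← hx, hmemslice]

lemma inter_card_le (a b : Fin 10) : (hset a ∩ hset b).card ≤ 3 :=
  le_trans (Finset.card_le_card Finset.inter_subset_left) (le_of_eq (hset_card a))

lemma inter_card_eq_three {a b : Fin 10} (h : (hset a ∩ hset b).card = 3) : a = b := by
  have heq : hset a ∩ hset b = hset a :=
    Finset.eq_of_subset_of_card_le Finset.inter_subset_left (by rw [h, hset_card])
  apply hset_inj
  rw [← heq]
  exact Finset.inter_subset_right

lemma cfg_adj_iff {n : ℕ} (x y : Fin n → Fin 10) :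
    (cfg x ≠ cfg y ∧ (cfg x ∩ cfg y).card = 3 * n - 1) ↔
    (∃ i, StepAdj (x i) (y i) ∧ ∀ j, j ≠ i → x j = y j) := by
  have hinter : (cfg x ∩ cfg y).card = ∑ i, (hset (x i) ∩ hset (y i)).card := by
    rw [cfg, cfg, fset_inter, fset_card]
  have hle : ∀ i, (hset (x i) ∩ hset (y i)).card ≤ 3 := fun i => inter_card_le _ _
  have h3 : ∀ i : Fin n, ((hset (x i) ∩ hset (y i)).card = 3 ↔ x i = y i) := by
    intro i
    constructor
    · exact fun h => inter_card_eq_three h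
    · intro h; rw [h, Finset.inter_self, hset_card]
  rcases Nat.eq_zero_or_pos n with rfl|hn
  · constructor
    · rintro ⟨hne, _⟩
      exact absurd (congrArg cfg (funext fun i => i.elim0)) hne
    · rintro ⟨i, _⟩; exact i.elim0
  constructor
  · rintro ⟨hne, hcard⟩
    rw [hinter] at hcard
    have hxy : x ≠ y := fun h => hne (congrArg cfg h)
    have hsum3 : ∑ i, (hset (x i) ∩ hset (y i)).card
        + ∑ i : Fin n, (3 - (hset (x i) ∩ hset (y i)).card) = 3 * n := by
      rw [← Finset.sum_add_distrib]
      have he : ∀ i ∈ (Finset.univ : Finset (Fin n)),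
          (hset (x i) ∩ hset (y i)).card + (3 - (hset (x i) ∩ hset (y i)).card) = 3 :=
        fun i _ => by have := hle i; omega
      rw [Finset.sum_congr rfl he]
      simp [Finset.sum_const, Finset.card_univ, mul_comm]
    have hd1 : ∑ i : Fin n, (3 - (hset (x i) ∩ hset (y i)).card) = 1 := by omega
    obtain ⟨i0, hxy0⟩ : ∃ i, x i ≠ y i := Function.ne_iff.1 hxy
    have hd0 : 1 ≤ 3 - (hset (x i0) ∩ hset (y i0)).card := by
      have hne3 : (hset (x i0) ∩ hset (y i0)).card ≠ 3 := fun h => hxy0 ((h3 i0).1 h)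
      have := hle i0; omega
    have hsplit : (3 - (hset (x i0) ∩ hset (y i0)).card)
        + ∑ i ∈ Finset.univ.erase i0, (3 - (hset (x i) ∩ hset (y i)).card) = 1 := by
      rw [← hd1]
      exact Finset.add_sum_erase Finset.univ
        (fun i => 3 - (hset (x i) ∩ hset (y i)).card) (Finset.mem_univ i0)
    have hrest0 : ∑ i ∈ Finset.univ.erase i0, (3 - (hset (x i) ∩ hset (y i)).card) = 0 := by
      omega
    have hm2 : (hset (x i0) ∩ hset (y i0)).card = 2 := by
      have := hle i0; omega
    refine ⟨i0, (inter_card_two _ _).1 hm2, ?_⟩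
    intro j hj
    have hj' : j ∈ Finset.univ.erase i0 := Finset.mem_erase.2 ⟨hj, Finset.mem_univ _⟩
    have hz := (Finset.sum_eq_zero_iff).1 hrest0 j hj'
    have := hle j
    exact (h3 j).1 (by omega)
  · rintro ⟨i, hstep, hall⟩
    have hxyne : x i ≠ y i := by
      rcases hstep with h|h <;> exact fun he => by rw [he] at h; omega
    have hm2 : (hset (x i) ∩ hset (y i)).card = 2 := (inter_card_two _ _).2 hstep
    constructor
    · intro h
      exact hxyne (congrFun (cfg_inj h) i)
    · rw [hinter, ← Finset.add_sum_erase Finset.univ _ (Finset.mem_univ i), hm2]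
      have he : ∀ j ∈ Finset.univ.erase i, (hset (x j) ∩ hset (y j)).card = 3 :=
        fun j hj => (h3 j).2 (hall j (Finset.mem_erase.1 hj).1)
      rw [Finset.sum_congr rfl he, Finset.sum_const,
        Finset.card_erase_of_mem (Finset.mem_univ i)]
      simp only [Finset.card_univ, Fintype.card_fin, smul_eq_mul]
      omega

-- ===================== Gray code section =====================

def Npos (n : ℕ) : ℕ := 3 * 4 ^ n - 2

def digitPos (N r : ℕ) : ℕ → ℕ
  | 0 => r
  | 1 => N
  | 2 => N+1
  | 3 => 2*N+1-r
  | 4 => 2*N+2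
  | 5 => 2*N+3
  | 6 => 2*N+4+r
  | 7 => 3*N+4
  | 8 => 3*N+5
  | 9 => 4*N+5-r
  | _ => 0

def front {n : ℕ} (x : Fin (n+1) → Fin 10) : Fin n → Fin 10 :=
  fun i => x ⟨i.1, Nat.lt_succ_of_lt i.2⟩

def pos : ∀ {n : ℕ}, (Fin n → Fin 10) → ℕ
  | 0, _ => 0
  | n+1, x => digitPos (Npos n) (pos (front x)) (x (Fin.last n) : ℕ)

lemma pos_succ {n : ℕ} (x : Fin (n+1) → Fin 10) :
    pos x = digitPos (Npos n) (pos (front x)) (x (Fin.last n) : ℕ) := rfl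

def c0 (n : ℕ) : Fin n → Fin 10 := fun _ => 0
def cL (n : ℕ) : Fin n → Fin 10 := fun i => if (i:ℕ)+1 = n then 9 else 0

lemma Npos_pos (n : ℕ) : 1 ≤ Npos n := by
  have h : 1 ≤ 4 ^ n := Nat.one_le_pow _ _ (by norm_num)
  unfold Npos; omega

lemma Npos_succ (n : ℕ) : Npos (n+1) = 4 * Npos n + 6 := by
  have h : 1 ≤ 4 ^ n := Nat.one_le_pow _ _ (by norm_num)
  unfold Npos
  rw [pow_succ]
  omega

lemma digit_lt (N r s : ℕ) (hN : 1 ≤ N) (hr : r < N) (hs : s < 10) :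
    digitPos N r s < 4 * N + 6 := by
  interval_cases s <;> simp [digitPos] <;> omega

lemma digit_inj (N r r' s t : ℕ) (hN : 1 ≤ N) (hr : r < N) (hr' : r' < N)
    (hs : s < 10) (ht : t < 10)
    (hc1 : s = 1 ∨ s = 2 ∨ s = 7 ∨ s = 8 → r = N-1) (hc2 : s = 4 ∨ s = 5 → r = 0)
    (hd1 : t = 1 ∨ t = 2 ∨ t = 7 ∨ t = 8 → r' = N-1) (hd2 : t = 4 ∨ t = 5 → r' = 0)
    (h : digitPos N r s = digitPos N r' t) : s = t ∧ r = r' := by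
  interval_cases s <;> interval_cases t <;> simp [digitPos] at h ⊢ <;> omega

lemma digit_surj (N m : ℕ) (hN : 1 ≤ N) (hm : m < 4 * N + 6) :
    ∃ s r : ℕ, s < 10 ∧ r < N ∧
      (s = 1 ∨ s = 2 ∨ s = 7 ∨ s = 8 → r = N-1) ∧ (s = 4 ∨ s = 5 → r = 0) ∧
      digitPos N r s = m := by
  rcases Nat.lt_or_ge m N with h|_
  · exact ⟨0, m, by norm_num, h, by omega, by omega, rfl⟩
  rcases Nat.eq_or_lt_of_le (show N ≤ m by omega) with h|_
  · exact ⟨1, N-1, by norm_num, by omega, fun _ => rfl, by omega, by simp [digitPos]; omega⟩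
  rcases Nat.eq_or_lt_of_le (show N+1 ≤ m by omega) with h|_
  · exact ⟨2, N-1, by norm_num, by omega, fun _ => rfl, by omega, by simp [digitPos]; omega⟩
  rcases Nat.lt_or_ge m (2*N+2) with h|_
  · exact ⟨3, 2*N+1-m, by norm_num, by omega, by omega, by omega, by simp [digitPos]; omega⟩
  rcases Nat.eq_or_lt_of_le (show 2*N+2 ≤ m by omega) with h|_
  · exact ⟨4, 0, by norm_num, by omega, by omega, fun _ => rfl, by simp [digitPos]; omega⟩
  rcases Nat.eq_or_lt_of_le (show 2*N+3 ≤ m by omega) with h|_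
  · exact ⟨5, 0, by norm_num, by omega, by omega, fun _ => rfl, by simp [digitPos]; omega⟩
  rcases Nat.lt_or_ge m (3*N+4) with h|_
  · exact ⟨6, m-(2*N+4), by norm_num, by omega, by omega, by omega, by simp [digitPos]; omega⟩
  rcases Nat.eq_or_lt_of_le (show 3*N+4 ≤ m by omega) with h|_
  · exact ⟨7, N-1, by norm_num, by omega, fun _ => rfl, by omega, by simp [digitPos]; omega⟩
  rcases Nat.eq_or_lt_of_le (show 3*N+5 ≤ m by omega) with h|_
  · exact ⟨8, N-1, by norm_num, by omega, fun _ => rfl, by omega, by simp [digitPos]; omega⟩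
  · exact ⟨9, 4*N+5-m, by norm_num, by omega, by omega, by omega, by simp [digitPos]; omega⟩

lemma digit_arith (N r r' s t : ℕ) (hN : 1 ≤ N) (hr : r < N) (hr' : r' < N)
    (hs : s < 10) (ht : t < 10)
    (hc1 : s = 1 ∨ s = 2 ∨ s = 7 ∨ s = 8 → r = N-1) (hc2 : s = 4 ∨ s = 5 → r = 0)
    (hd1 : t = 1 ∨ t = 2 ∨ t = 7 ∨ t = 8 → r' = N-1) (hd2 : t = 4 ∨ t = 5 → r' = 0) :
    ((s = t ∧ (r+1 = r' ∨ r'+1 = r)) ∨ ((s+1 = t ∨ t+1 = s) ∧ r = r')) ↔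
      (digitPos N r s + 1 = digitPos N r' t ∨ digitPos N r' t + 1 = digitPos N r s) := by
  interval_cases s <;> interval_cases t <;> simp [digitPos] <;> omega


def extend {n : ℕ} (x' : Fin n → Fin 10) (s : Fin 10) : Fin (n+1) → Fin 10 :=
  fun i => if h : (i:ℕ) < n then x' ⟨i.1, h⟩ else s

lemma front_extend {n : ℕ} (x' : Fin n → Fin 10) (s : Fin 10) :
    front (extend x' s) = x' := by
  funext i
  simp [front, extend, i.2]

lemma extend_last {n : ℕ} (x' : Fin n → Fin 10) (s : Fin 10) :
    extend x' s (Fin.last n) = s := by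
  simp [extend]

lemma eq_of_parts {n : ℕ} {x y : Fin (n+1) → Fin 10} (h1 : front x = front y)
    (h2 : x (Fin.last n) = y (Fin.last n)) : x = y := by
  funext i
  by_cases hi : (i:ℕ) < n
  · have := congrFun h1 ⟨i.1, hi⟩
    simpa [front, Fin.eta] using this
  · have hi' : i = Fin.last n := Fin.ext (by have := i.2; simp [Fin.last]; omega)
    rw [hi']; exact h2

lemma valid_decomp {n : ℕ} (x : Fin (n+1) → Fin 10) :
    Valid x ↔ Valid (front x) ∧
      ((x (Fin.last n) = 1 ∨ x (Fin.last n) = 2 ∨ x (Fin.last n) = 7 ∨ x (Fin.last n) = 8) →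
        front x = cL n) ∧
      ((x (Fin.last n) = 4 ∨ x (Fin.last n) = 5) → front x = c0 n) := by
  constructor
  · intro h
    refine ⟨?_, ?_, ?_⟩
    · intro i j hji
      exact h ⟨i.1, Nat.lt_succ_of_lt i.2⟩ ⟨j.1, Nat.lt_succ_of_lt j.2⟩ hji
    · intro hs
      funext j
      have := (h (Fin.last n) ⟨j.1, Nat.lt_succ_of_lt j.2⟩ j.2).1 hs
      simpa [front, cL] using this
    · intro hs
      funext j
      have := (h (Fin.last n) ⟨j.1, Nat.lt_succ_of_lt j.2⟩ j.2).2 hs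
      simpa [front, c0] using this
  · rintro ⟨h1, h2, h3⟩ i j hji
    by_cases hi : (i:ℕ) < n
    · have hj : (j:ℕ) < n := lt_trans hji hi
      have key := h1 ⟨i.1, hi⟩ ⟨j.1, hj⟩ hji
      have ei : x ⟨i.1, Nat.lt_succ_of_lt hi⟩ = x i := congrArg x (Fin.ext rfl)
      have ej : x ⟨j.1, Nat.lt_succ_of_lt hj⟩ = x j := congrArg x (Fin.ext rfl)
      simpa [front, ei, ej] using key
    · have hi' : i = Fin.last n := Fin.ext (by have := i.2; simp [Fin.last]; omega)
      subst hi'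
      have hj : (j:ℕ) < n := by simpa [Fin.last] using hji
      constructor
      · intro hs
        have := congrFun (h2 hs) ⟨j.1, hj⟩
        have ej : x ⟨j.1, Nat.lt_succ_of_lt hj⟩ = x j := congrArg x (Fin.ext rfl)
        simpa [front, cL, ej, Fin.last] using this
      · intro hs
        have := congrFun (h3 hs) ⟨j.1, hj⟩
        have ej : x ⟨j.1, Nat.lt_succ_of_lt hj⟩ = x j := congrArg x (Fin.ext rfl)
        simpa [front, c0, ej] using this

lemma exists_split {n : ℕ} (x y : Fin (n+1) → Fin 10) :
    (∃ i, StepAdj (x i) (y i) ∧ ∀ j, j ≠ i → x j = y j) ↔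
    ((x (Fin.last n) = y (Fin.last n) ∧
        ∃ i' : Fin n, StepAdj (front x i') (front y i') ∧
          ∀ j' : Fin n, j' ≠ i' → front x j' = front y j') ∨
      (StepAdj (x (Fin.last n)) (y (Fin.last n)) ∧ front x = front y)) := by
  constructor
  · rintro ⟨i, hstep, hall⟩
    by_cases hi : (i:ℕ) < n
    · left
      have hne : Fin.last n ≠ i := by
        intro h; rw [← h] at hi; simp [Fin.last] at hi
      refine ⟨hall _ hne, ⟨i.1, hi⟩, ?_, ?_⟩
      · have ei : x ⟨i.1, Nat.lt_succ_of_lt hi⟩ = x i := congrArg x (Fin.ext rfl)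
        have ei' : y ⟨i.1, Nat.lt_succ_of_lt hi⟩ = y i := congrArg y (Fin.ext rfl)
        simpa [front, ei, ei'] using hstep
      · intro j' hj'
        have hne2 : (⟨j'.1, Nat.lt_succ_of_lt j'.2⟩ : Fin (n+1)) ≠ i := by
          intro h
          apply hj'
          apply Fin.ext
          have := congrArg Fin.val h
          simpa using this
        exact hall _ hne2
    · right
      have hi' : i = Fin.last n := Fin.ext (by have := i.2; simp [Fin.last]; omega)
      subst hi'
      refine ⟨hstep, ?_⟩
      funext j'
      apply hall
      intro h
      have := congrArg Fin.val h
      simp [Fin.last] at this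
      omega
  · rintro (⟨hlast, i', hstep, hall⟩|⟨hstep, hfr⟩)
    · refine ⟨⟨i'.1, Nat.lt_succ_of_lt i'.2⟩, hstep, ?_⟩
      intro j hj
      by_cases hjn : (j:ℕ) < n
      · have : (⟨j.1, hjn⟩ : Fin n) ≠ i' := by
          intro h
          apply hj
          apply Fin.ext
          have := congrArg Fin.val h
          simpa using this
        have := hall _ this
        have ej : x ⟨j.1, Nat.lt_succ_of_lt hjn⟩ = x j := congrArg x (Fin.ext rfl)
        have ej' : y ⟨j.1, Nat.lt_succ_of_lt hjn⟩ = y j := congrArg y (Fin.ext rfl)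
        simpa [front, ej, ej'] using this
      · have hj' : j = Fin.last n := Fin.ext (by have := j.2; simp [Fin.last]; omega)
        rw [hj']; exact hlast
    · refine ⟨Fin.last n, hstep, ?_⟩
      intro j hj
      have hjn : (j:ℕ) < n := by
        have := j.2
        rcases Nat.lt_or_ge (j:ℕ) n with h|h
        · exact h
        · exact absurd (Fin.ext (by simp [Fin.last]; omega)) hj
      have := congrFun hfr ⟨j.1, hjn⟩
      have ej : x ⟨j.1, Nat.lt_succ_of_lt hjn⟩ = x j := congrArg x (Fin.ext rfl)
      have ej' : y ⟨j.1, Nat.lt_succ_of_lt hjn⟩ = y j := congrArg y (Fin.ext rfl)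
      simpa [front, ej, ej'] using this


lemma val_mem1 : ∀ a : Fin 10,
    (a = 1 ∨ a = 2 ∨ a = 7 ∨ a = 8) ↔ ((a:ℕ) = 1 ∨ (a:ℕ) = 2 ∨ (a:ℕ) = 7 ∨ (a:ℕ) = 8) := by
  decide

lemma val_mem2 : ∀ a : Fin 10, (a = 4 ∨ a = 5) ↔ ((a:ℕ) = 4 ∨ (a:ℕ) = 5) := by decide

theorem gray : ∀ n : ℕ,
    (∀ x : Fin n → Fin 10, Valid x → pos x < Npos n) ∧
    (∀ x y : Fin n → Fin 10, Valid x → Valid y → pos x = pos y → x = y) ∧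
    (∀ m : ℕ, m < Npos n → ∃ x : Fin n → Fin 10, Valid x ∧ pos x = m) ∧
    (Valid (c0 n) ∧ pos (c0 n) = 0) ∧
    (Valid (cL n) ∧ pos (cL n) = Npos n - 1) ∧
    (∀ x y : Fin n → Fin 10, Valid x → Valid y →
      ((∃ i, StepAdj (x i) (y i) ∧ ∀ j, j ≠ i → x j = y j) ↔
        (pos x + 1 = pos y ∨ pos y + 1 = pos x))) := by
  intro n
  induction n with
  | zero =>
    have huniq : ∀ x y : Fin 0 → Fin 10, x = y := fun x y => funext (fun i => i.elim0)
    have hvalid : ∀ x : Fin 0 → Fin 10, Valid x := fun x i => i.elim0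
    refine ⟨fun x _ => Nat.zero_lt_one, fun x y _ _ _ => huniq x y,
      fun m hm => ⟨c0 0, hvalid _, by
        have h1 : Npos 0 = 1 := rfl
        have h2 : pos (c0 0) = 0 := rfl
        omega⟩, ⟨hvalid _, rfl⟩, ⟨hvalid _, rfl⟩, ?_⟩
    intro x y _ _
    constructor
    · rintro ⟨i, _⟩; exact i.elim0
    · rintro (h|h) <;> simp [show pos x = 0 from rfl, show pos y = 0 from rfl] at h
  | succ n IH =>
    obtain ⟨IH1, IH2, IH3, ⟨IHc0v, IHc0p⟩, ⟨IHcLv, IHcLp⟩, IH6⟩ := IH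
    set N := Npos n with hNdef
    have hN : 1 ≤ N := Npos_pos n
    have hsucc : Npos (n+1) = 4 * N + 6 := Npos_succ n
    -- setup for a valid x
    have setup : ∀ x : Fin (n+1) → Fin 10, Valid x →
        Valid (front x) ∧ pos (front x) < N ∧
        (((x (Fin.last n) : ℕ) = 1 ∨ ((x (Fin.last n)):ℕ) = 2 ∨ ((x (Fin.last n)):ℕ) = 7 ∨
            ((x (Fin.last n)):ℕ) = 8) → pos (front x) = N - 1) ∧
        ((((x (Fin.last n)):ℕ) = 4 ∨ ((x (Fin.last n)):ℕ) = 5) → pos (front x) = 0) := by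
      intro x hvx
      obtain ⟨hfx, hx1, hx2⟩ := (valid_decomp x).1 hvx
      refine ⟨hfx, IH1 _ hfx, ?_, ?_⟩
      · intro h
        rw [hx1 ((val_mem1 _).2 h)]
        exact IHcLp
      · intro h
        rw [hx2 ((val_mem2 _).2 h)]
        exact IHc0p
    refine ⟨?_, ?_, ?_, ?_, ?_, ?_⟩
    · -- bound
      intro x hvx
      obtain ⟨hfx, hr, _, _⟩ := setup x hvx
      rw [pos_succ, hsucc]
      exact digit_lt N _ _ hN hr (x (Fin.last n)).2
    · -- injectivity
      intro x y hvx hvy hpos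
      obtain ⟨hfx, hr, hc1, hc2⟩ := setup x hvx
      obtain ⟨hfy, hr', hd1, hd2⟩ := setup y hvy
      rw [pos_succ x, pos_succ y] at hpos
      obtain ⟨hst, hrr⟩ := digit_inj N _ _ _ _ hN hr hr' (x (Fin.last n)).2
        (y (Fin.last n)).2 hc1 hc2 hd1 hd2 hpos
      exact eq_of_parts (IH2 _ _ hfx hfy hrr) (Fin.ext hst)
    · -- surjectivity
      intro m hm
      rw [hsucc] at hm
      obtain ⟨s, r, hs10, hrN, hcs1, hcs2, hdp⟩ := digit_surj N m hN hm
      obtain ⟨x', hvx', hpx'⟩ := IH3 r hrN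
      refine ⟨extend x' ⟨s, hs10⟩, ?_, ?_⟩
      · rw [valid_decomp]
        rw [front_extend, extend_last]
        refine ⟨hvx', ?_, ?_⟩
        · intro h
          have hval : s = 1 ∨ s = 2 ∨ s = 7 ∨ s = 8 := by
            have := (val_mem1 _).1 h
            simpa using this
          apply IH2 _ _ hvx' IHcLv
          rw [hpx', IHcLp, hcs1 hval]
        · intro h
          have hval : s = 4 ∨ s = 5 := by
            have := (val_mem2 _).1 h
            simpa using this
          apply IH2 _ _ hvx' IHc0v
          rw [hpx', IHc0p, hcs2 hval]
      · rw [pos_succ, front_extend, extend_last, hpx']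
        simpa using hdp
    · -- c0
      have hfc0 : front (c0 (n+1)) = c0 n := rfl
      have hlc0 : c0 (n+1) (Fin.last n) = 0 := rfl
      constructor
      · rw [valid_decomp, hfc0, hlc0]
        refine ⟨IHc0v, ?_, ?_⟩ <;>
          · intro h
            rcases h with h|h <;> first | exact absurd h (by decide) |
              (rcases h with h|h <;> first | exact absurd h (by decide) |
                (rcases h with h|h <;> exact absurd h (by decide)))
      · rw [pos_succ, hfc0, hlc0, IHc0p]
        rfl
    · -- cL
      have hfcL : front (cL (n+1)) = c0 n := by
        funext i
        have : (i:ℕ) + 1 ≠ n + 1 := by omega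
        simp [front, cL, c0, this]
        exact Nat.ne_of_lt i.2
      have hlcL : cL (n+1) (Fin.last n) = 9 := by simp [cL, Fin.last]
      constructor
      · rw [valid_decomp, hfcL, hlcL]
        refine ⟨IHc0v, ?_, ?_⟩ <;>
          · intro h
            rcases h with h|h <;> first | exact absurd h (by decide) |
              (rcases h with h|h <;> first | exact absurd h (by decide) |
                (rcases h with h|h <;> exact absurd h (by decide)))
      · rw [pos_succ, hfcL, hlcL, IHc0p, hsucc]
        show digitPos N 0 ((9:Fin 10):ℕ) = 4 * N + 6 - 1
        show digitPos N 0 9 = 4 * N + 6 - 1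
        simp [digitPos]
    · -- adjacency
      intro x y hvx hvy
      obtain ⟨hfx, hr, hc1, hc2⟩ := setup x hvx
      obtain ⟨hfy, hr', hd1, hd2⟩ := setup y hvy
      have harith := digit_arith N (pos (front x)) (pos (front y))
        ((x (Fin.last n)):ℕ) ((y (Fin.last n)):ℕ) hN hr hr' (x (Fin.last n)).2
        (y (Fin.last n)).2 hc1 hc2 hd1 hd2
      rw [exists_split, pos_succ x, pos_succ y]
      constructor
      · rintro (⟨hlast, hinner⟩ | ⟨hstep, hfr⟩)
        · exact harith.1 (Or.inl ⟨congrArg Fin.val hlast, (IH6 _ _ hfx hfy).1 hinner⟩)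
        · exact harith.1 (Or.inr ⟨hstep, congrArg pos hfr⟩)
      · intro h
        rcases harith.2 h with ⟨hst, hrr⟩ | ⟨hstep, hrr⟩
        · exact Or.inl ⟨Fin.ext hst, (IH6 _ _ hfx hfy).2 hrr⟩
        · exact Or.inr ⟨hstep, IH2 _ _ hfx hfy hrr⟩



-- ===================== Assembly =====================

lemma exists_Fx (n : ℕ) (m : Fin (Npos n)) :
    ∃ x : Fin n → Fin 10, Valid x ∧ pos x = m.1 := (gray n).2.2.1 m.1 m.2

noncomputable def Fx (n : ℕ) (m : Fin (Npos n)) : Fin n → Fin 10 :=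
  Classical.choose (exists_Fx n m)

lemma Fx_valid (n : ℕ) (m : Fin (Npos n)) : Valid (Fx n m) :=
  (Classical.choose_spec (exists_Fx n m)).1

lemma Fx_pos (n : ℕ) (m : Fin (Npos n)) : pos (Fx n m) = m.1 :=
  (Classical.choose_spec (exists_Fx n m)).2

noncomputable def Fc (n : ℕ) (m : Fin (Npos n)) :
    {s : Finset (Fin n × Fin 10) // s.card = 3 * n ∧ IndepFinset (bigG n) s} :=
  ⟨cfg (Fx n m), cfg_card _, (indep_cfg_iff _).2 (Fx_valid n m)⟩

lemma Fc_bij (n : ℕ) : Function.Bijective (Fc n) := by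
  constructor
  · intro m1 m2 h
    have hcfg : cfg (Fx n m1) = cfg (Fx n m2) := congrArg Subtype.val h
    have hx := cfg_inj hcfg
    apply Fin.ext
    rw [← Fx_pos n m1, ← Fx_pos n m2, hx]
  · rintro ⟨I, hc, hi⟩
    obtain ⟨x, rfl⟩ := indep_eq_cfg hc hi
    have hv : Valid x := (indep_cfg_iff x).1 hi
    have hlt : pos x < Npos n := (gray n).1 x hv
    refine ⟨⟨pos x, hlt⟩, ?_⟩
    have hx : Fx n ⟨pos x, hlt⟩ = x :=
      (gray n).2.1 _ _ (Fx_valid _ _) hv (by rw [Fx_pos])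
    exact Subtype.ext (by simp [Fc, hx])

noncomputable def pathToConfig (n : ℕ) :
    SimpleGraph.pathGraph (Npos n) ≃g ConfigGraph (bigG n) (3 * n) where
  toEquiv := Equiv.ofBijective (Fc n) (Fc_bij n)
  map_rel_iff' := by
    intro m1 m2
    show (ConfigGraph (bigG n) (3 * n)).Adj (Fc n m1) (Fc n m2) ↔ _
    have h1 : (ConfigGraph (bigG n) (3 * n)).Adj (Fc n m1) (Fc n m2) ↔
        (cfg (Fx n m1) ≠ cfg (Fx n m2) ∧
          (cfg (Fx n m1) ∩ cfg (Fx n m2)).card = 3 * n - 1) := by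
      constructor
      · rintro ⟨hne, hcard⟩
        exact ⟨fun h => hne (Subtype.ext h), hcard⟩
      · rintro ⟨hne, hcard⟩
        exact ⟨fun h => hne (congrArg Subtype.val h), hcard⟩
    rw [h1, cfg_adj_iff, (gray n).2.2.2.2.2 _ _ (Fx_valid n m1) (Fx_valid n m2),
      Fx_pos, Fx_pos, SimpleGraph.pathGraph_adj]

lemma indep_map {V W : Type*} {G : SimpleGraph V} {G' : SimpleGraph W} (φ : G ≃g G')
    {s : Finset V} (h : IndepFinset G s) :
    IndepFinset G' (s.map ⟨φ, φ.toEquiv.injective⟩) := by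
  intro u hu v hv hne hadj
  obtain ⟨a, ha, rfl⟩ := Finset.mem_map.1 hu
  obtain ⟨b, hb, rfl⟩ := Finset.mem_map.1 hv
  refine h a ha b hb (fun he => hne (congrArg _ he)) ?_
  exact φ.map_adj_iff.1 hadj

noncomputable def mapConfigIso {V W : Type*} [DecidableEq V] [DecidableEq W]
    {G : SimpleGraph V} {G' : SimpleGraph W} (φ : G ≃g G') (k : ℕ) :
    ConfigGraph G k ≃g ConfigGraph G' k where
  toEquiv :=
  { toFun := fun I => ⟨I.1.map ⟨φ, φ.toEquiv.injective⟩,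
      by rw [Finset.card_map]; exact I.2.1, indep_map φ I.2.2⟩
    invFun := fun J => ⟨J.1.map ⟨φ.symm, φ.symm.toEquiv.injective⟩,
      by rw [Finset.card_map]; exact J.2.1, indep_map φ.symm J.2.2⟩
    left_inv := by
      rintro ⟨I, hc, hi⟩
      apply Subtype.ext
      simp only
      ext a
      simp [Finset.mem_map]
    right_inv := by
      rintro ⟨J, hc, hi⟩
      apply Subtype.ext
      simp only
      ext a
      simp [Finset.mem_map] }
  map_rel_iff' := by
    rintro ⟨I, hcI, hiI⟩ ⟨J, hcJ, hiJ⟩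
    have hm : (I.map ⟨φ, φ.toEquiv.injective⟩ ∩ J.map ⟨φ, φ.toEquiv.injective⟩).card
        = (I ∩ J).card := by rw [← Finset.map_inter, Finset.card_map]
    constructor
    · rintro ⟨hne, hcard⟩
      refine ⟨?_, ?_⟩
      · intro h
        exact hne (congrArg _ h)
      · exact hm.symm.trans hcard
    · rintro ⟨hne, hcard⟩
      refine ⟨?_, ?_⟩
      · intro h
        have h2 := congrArg Subtype.val h
        exact hne (Subtype.ext (Finset.map_injective _ h2))
      · exact hm.trans hcard

def vEquiv (n : ℕ) : (Fin n × Fin 10) ≃ Fin (10 * n) :=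
  finProdFinEquiv.trans (finCongr (Nat.mul_comm n 10))

def bigG' (n : ℕ) : SimpleGraph (Fin (10 * n)) where
  Adj a b := (bigG n).Adj ((vEquiv n).symm a) ((vEquiv n).symm b)
  symm := ⟨fun a b h => (bigG n).adj_symm h⟩
  loopless := ⟨fun a h => (bigG n).irrefl h⟩

def bigIso (n : ℕ) : bigG n ≃g bigG' n where
  toEquiv := vEquiv n
  map_rel_iff' := by
    intro a b
    show (bigG n).Adj ((vEquiv n).symm ((vEquiv n) a)) ((vEquiv n).symm ((vEquiv n) b)) ↔ _
    rw [Equiv.symm_apply_apply, Equiv.symm_apply_apply]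

noncomputable def finalIso (n : ℕ) :
    ConfigGraph (bigG' n) (3 * n) ≃g SimpleGraph.pathGraph (Npos n) :=
  (mapConfigIso (bigIso n).symm (3 * n)).trans (pathToConfig n).symm

-- ===================== diameter bound =====================

lemma path_walk_length {L : ℕ} : ∀ {u v : Fin L} (w : (SimpleGraph.pathGraph L).Walk u v),
    (v:ℕ) ≤ (u:ℕ) + w.length ∧ (u:ℕ) ≤ (v:ℕ) + w.length := by
  intro u v w
  induction w with
  | nil => simp
  | cons h p ih =>
    rw [SimpleGraph.pathGraph_adj] at h
    rw [SimpleGraph.Walk.length_cons]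
    omega

lemma diam_ge {α : Type*} [Fintype α] (H : SimpleGraph α) {L : ℕ}
    (ψ : H ≃g SimpleGraph.pathGraph (L+1)) : L ≤ maxCompDiam H := by
  classical
  have hreach : ∀ u v : α, H.Reachable u v := by
    intro u v
    have h1 : (SimpleGraph.pathGraph (L+1)).Reachable (ψ u) (ψ v) :=
      (SimpleGraph.pathGraph_connected L).preconnected (ψ u) (ψ v)
    have h2 := h1.map ψ.symm.toHom
    simpa using h2
  have hdist : ∀ p q : Fin (L+1),
      (p:ℕ) ≤ (q:ℕ) + H.dist (ψ.symm p) (ψ.symm q) ∧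
      (q:ℕ) ≤ (p:ℕ) + H.dist (ψ.symm p) (ψ.symm q) := by
    intro p q
    obtain ⟨w, hw⟩ := (hreach (ψ.symm p) (ψ.symm q)).exists_walk_length_eq_dist
    have hlen := path_walk_length (w.map ψ.toHom)
    rw [SimpleGraph.Walk.length_map, hw] at hlen
    have hp : ψ.toHom (ψ.symm p) = p := ψ.apply_symm_apply p
    have hq : ψ.toHom (ψ.symm q) = q := ψ.apply_symm_apply q
    rw [hp, hq] at hlen
    omega
  have hld := hdist ⟨0, Nat.succ_pos L⟩ ⟨L, Nat.lt_succ_self L⟩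
  have hv0 : ((⟨0, Nat.succ_pos L⟩ : Fin (L+1)) : ℕ) = 0 := rfl
  have hvL : ((⟨L, Nat.lt_succ_self L⟩ : Fin (L+1)) : ℕ) = L := rfl
  rw [hv0, hvL] at hld
  set a : α := ψ.symm ⟨0, Nat.succ_pos L⟩
  set b : α := ψ.symm ⟨L, Nat.lt_succ_self L⟩
  have h1 : H.dist a b ≤ compDiam H a := by
    have hle := Finset.le_sup (f := fun p : α × α =>
        if H.Reachable a p.1 ∧ H.Reachable a p.2 then H.dist p.1 p.2 else 0)
      (Finset.mem_univ (a, b))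
    simp only at hle
    rw [if_pos ⟨SimpleGraph.Reachable.refl a, hreach a b⟩] at hle
    exact hle
  have h2 : compDiam H a ≤ maxCompDiam H :=
    Finset.le_sup (f := fun u => compDiam H u) (Finset.mem_univ a)
  omega

end TJ

/-- There are constants `c₁, c₂ > 0` such that for every `n > 0` there is a graph `G` on
`10n` vertices whose configuration graph `R_{3n}(G)` is a path of length `L` with
`c₁·4ⁿ ≤ L ≤ c₂·4ⁿ`; in particular `D(10n, 3n) ≥ c₁·4ⁿ`. -/
theorem core_challenge_path :
    ∃ c₁ c₂ : ℝ, 0 < c₁ ∧ 0 < c₂ ∧ ∀ n : ℕ, 0 < n →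
      ∃ (G : SimpleGraph (Fin (10 * n))) (L : ℕ),
        Nonempty (ConfigGraph G (3 * n) ≃g SimpleGraph.pathGraph (L + 1)) ∧
        c₁ * 4 ^ n ≤ (L : ℝ) ∧ (L : ℝ) ≤ c₂ * 4 ^ n ∧
        c₁ * 4 ^ n ≤ (D (10 * n) (3 * n) : ℝ) := by
  refine ⟨1, 3, one_pos, by norm_num, ?_⟩
  intro n hn
  have hN1 : 1 ≤ TJ.Npos n := TJ.Npos_pos n
  set L := TJ.Npos n - 1 with hLdef
  have hL1 : L + 1 = TJ.Npos n := by omega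
  have iso : ConfigGraph (TJ.bigG' n) (3 * n) ≃g SimpleGraph.pathGraph (L + 1) := by
    rw [hL1]; exact TJ.finalIso n
  have hDge : L ≤ D (10 * n) (3 * n) := by
    have h1 : L ≤ maxCompDiam (ConfigGraph (TJ.bigG' n) (3 * n)) := TJ.diam_ge _ iso
    have h2 : maxCompDiam (ConfigGraph (TJ.bigG' n) (3 * n)) ≤ D (10 * n) (3 * n) :=
      Finset.le_sup (f := fun G : SimpleGraph (Fin (10 * n)) =>
        maxCompDiam (ConfigGraph G (3 * n))) (Finset.mem_univ _)
    omega
  have h4 : 4 ≤ 4 ^ n := by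
    calc (4:ℕ) = 4 ^ 1 := rfl
    _ ≤ 4 ^ n := Nat.pow_le_pow_right (by norm_num) hn
  have hNval : TJ.Npos n = 3 * 4 ^ n - 2 := rfl
  have hlow : 4 ^ n ≤ L := by omega
  have hhigh : L ≤ 3 * 4 ^ n := by omega
  refine ⟨TJ.bigG' n, L, ⟨iso⟩, ?_, ?_, ?_⟩
  · rw [one_mul]
    calc ((4:ℝ))^n = ((4^n : ℕ) : ℝ) := by push_cast; ring
    _ ≤ L := Nat.cast_le.2 hlow
  · calc (L:ℝ) ≤ ((3 * 4^n : ℕ) : ℝ) := Nat.cast_le.2 hhigh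
    _ = 3 * 4^n := by push_cast; ring
  · rw [one_mul]
    calc ((4:ℝ))^n = ((4^n : ℕ) : ℝ) := by push_cast; ring
    _ ≤ (D (10 * n) (3 * n) : ℝ) := Nat.cast_le.2 (le_trans hlow hDge)
end

section
/- Let n be a prime number and let S be a finite set of positive integers that contains no three-term arithmetic progression, all of whose elements are congruent to 1 modulo 4, and whose maximum element is at most n/8. Then there exists a graph on n − 1 vertices whose 3-token-jumping configuration graph is a disjoint union of exactly |S| paths, each of length n − 3 (i.e., each connected component is a path on n − 2 vertices, and there are |S| components). -/
/-!
Common definitions: independent sets of a given size, the token-jumping configuration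
graph `R_k(G)`, diameters of connected components, and the extremal function `D n k`.
-/

open Finset SimpleGraph

attribute [local instance] Classical.propDecidable

/-- The disjoint union of `r` copies of the path graph on `m` vertices. -/
def disjointPaths (r m : ℕ) : SimpleGraph (Fin r × Fin m) where
  Adj p q := p.1 = q.1 ∧ (SimpleGraph.pathGraph m).Adj p.2 q.2
  symm := ⟨fun p q h => ⟨h.1.symm, (SimpleGraph.pathGraph m).adj_symm h.2⟩⟩
  loopless := ⟨fun p h => (SimpleGraph.pathGraph m).irrefl h.2⟩

namespace TJ0

structure Ctx where
  n : ℕ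
  S : Finset ℕ
  hn : n.Prime
  hS : S.Nonempty
  hAP : ThreeAPFree (S : Set ℕ)
  hmod : ∀ s ∈ S, s % 4 = 1
  hmax : ∀ s ∈ S, 8 * s ≤ n

variable (c : Ctx)

def Ctx.M : ℕ := c.S.max' c.hS

def Ctx.m : ℕ := if c.n % 4 = 1 then 3 * c.M + 2 else 2 * c.M + 2

lemma Ctx.hM1 : 1 ≤ c.M := by
  have h : c.M % 4 = 1 := c.hmod _ (c.S.max'_mem c.hS); omega

lemma Ctx.hM4 : c.M % 4 = 1 := c.hmod _ (c.S.max'_mem c.hS)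

lemma Ctx.hsM : ∀ s ∈ c.S, 1 ≤ s ∧ s ≤ c.M ∧ s % 4 = 1 := by
  intro s hs
  refine ⟨by have := c.hmod s hs; omega, Finset.le_max' _ _ hs, c.hmod s hs⟩

lemma Ctx.h8 : 8 * c.M ≤ c.n := c.hmax _ (c.S.max'_mem c.hS)

lemma Ctx.hn2 : c.n % 2 = 1 := by
  have h2 : c.n ≠ 2 := by have := c.h8; have := c.hM1; omega
  exact Nat.odd_iff.mp (c.hn.odd_of_ne_two h2)

lemma Ctx.h73 : c.n % 4 = 1 → 7 * c.M + 3 ≤ c.n := by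
  intro h4
  have h8 := c.h8
  have hM4 := c.hM4
  have h2 := c.hn2
  by_cases hM : c.M = 1
  · -- n ≥ 8, n % 4 = 1, prime => n ≠ 9 => n ≥ 13
    have h9 : c.n ≠ 9 := by
      have hnp : ¬ (9:ℕ).Prime := by decide
      intro h; exact hnp (h ▸ c.hn)
    omega
  · omega

lemma Ctx.hmdef : (c.n % 4 = 1 ∧ c.m = 3 * c.M + 2) ∨ (c.n % 4 = 3 ∧ c.m = 2 * c.M + 2) := by
  have h2 := c.hn2
  unfold Ctx.m
  by_cases h : c.n % 4 = 1
  · simp [h]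
  · right; simp [h]; omega

lemma Ctx.hm_low : 2 * c.M + 2 ≤ c.m := by
  rcases c.hmdef with ⟨_, h⟩ | ⟨_, h⟩ <;> omega

lemma Ctx.hm_up : c.m + 4 * c.M + 1 ≤ c.n := by
  have := c.h8; have := c.hM1; have := c.hn2
  rcases c.hmdef with ⟨h4, h⟩ | ⟨h4, h⟩
  · have := c.h73 h4; omega
  · omega

lemma Ctx.hn9 : 9 ≤ c.n := by have := c.h8; have := c.hM1; have := c.hn2; omega

lemma Ctx.hm_pos : 0 < c.m := by have := c.hm_low; omega

lemma Ctx.hm_lt : c.m < c.n := by have := c.hm_up; omega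




/-- Core AP-pattern lemma over ℤ. -/
lemma lemA (t1 t2 t3 e1 e2 e3 : ℤ)
    (h1 : 1 ≤ t1 ∧ t1 % 4 = 1) (h2 : 1 ≤ t2 ∧ t2 % 4 = 1) (h3 : 1 ≤ t3 ∧ t3 % 4 = 1)
    (hap1 : t1 + t2 = 2*t3 → t1 = t2) (hap2 : t2 + t3 = 2*t1 → t2 = t3)
    (hap3 : t1 + t3 = 2*t2 → t1 = t3)
    (he1 : e1 = t1 ∨ e1 = -t1 ∨ e1 = 2*t1 ∨ e1 = -(2*t1))
    (he2 : e2 = t2 ∨ e2 = -t2 ∨ e2 = 2*t2 ∨ e2 = -(2*t2))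
    (he3 : e3 = t3 ∨ e3 = -t3 ∨ e3 = 2*t3 ∨ e3 = -(2*t3))
    (heq : e1 + e2 = e3) :
    t1 = t2 ∧ t2 = t3 ∧ ((e1 = t1 ∧ e2 = t1) ∨ (e1 = -t1 ∧ e2 = -t1)
      ∨ (e1 = 2*t1 ∧ e2 = -t1) ∨ (e1 = -(2*t1) ∧ e2 = t1)
      ∨ (e1 = -t1 ∧ e2 = 2*t1) ∨ (e1 = t1 ∧ e2 = -(2*t1))) := by
  rcases he1 with h|h|h|h <;> rcases he2 with g|g|g|g <;> rcases he3 with f|f|f|f <;>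
    first
      | (exfalso; omega)
      | (have e12 : t1 = t2 := by omega
         have e23 : t2 = t3 := by omega
         subst e12; subst e23
         clear h1 h2 h3 hap1 hap2 hap3
         exact ⟨rfl, rfl, by omega⟩)

/-- cancellation: a*s = b*t with a,b ∈ {±1,±2} forces s = t, a = b. -/
lemma lemD (a b s t : ℤ) (hs : 1 ≤ s ∧ s % 4 = 1) (ht : 1 ≤ t ∧ t % 4 = 1)
    (ha : a = 1 ∨ a = -1 ∨ a = 2 ∨ a = -2) (hb : b = 1 ∨ b = -1 ∨ b = 2 ∨ b = -2)
    (h : a * s = b * t) : s = t ∧ a = b := by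
  rcases ha with rfl|rfl|rfl|rfl <;> rcases hb with rfl|rfl|rfl|rfl <;> omega

/-- mixed-edge kill: no triangle with one leg from the 0-side and one from the m-side. -/
lemma mixed_kill (Mv t1 t2 t3 e1 e2 d nn m : ℤ)
    (hMv : Mv % 4 = 1)
    (hb1 : 1 ≤ t1) (hc1 : t1 ≤ Mv) (hd1 : t1 % 4 = 1)
    (hb2 : 1 ≤ t2) (hc2 : t2 ≤ Mv) (hd2 : t2 % 4 = 1)
    (hb3 : 1 ≤ t3) (hc3 : t3 ≤ Mv) (hd3 : t3 % 4 = 1)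
    (hm : (nn % 4 = 1 ∧ m = 3*Mv + 2) ∨ (nn % 4 = 3 ∧ m = 2*Mv + 2))
    (h73 : nn % 4 = 1 → 7*Mv + 3 ≤ nn)
    (h8 : 8*Mv ≤ nn) (hodd : nn % 2 = 1)
    (he1 : e1 = t1 ∨ e1 = -t1 ∨ e1 = 2*t1 ∨ e1 = -(2*t1))
    (he2 : e2 = t2 ∨ e2 = 2*t2)
    (hd : d = t3 ∨ d = -t3 ∨ d = 2*t3 ∨ d = -(2*t3))
    (heq : e1 - e2 - d = m ∨ e1 - e2 - d = m - nn) : False := by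
  obtain ⟨u1, rfl⟩ : ∃ u, t1 = 4*u+1 := ⟨t1/4, by omega⟩
  obtain ⟨u2, rfl⟩ : ∃ u, t2 = 4*u+1 := ⟨t2/4, by omega⟩
  obtain ⟨u3, rfl⟩ : ∃ u, t3 = 4*u+1 := ⟨t3/4, by omega⟩
  obtain ⟨v, rfl⟩ : ∃ v, Mv = 4*v+1 := ⟨Mv/4, by omega⟩
  clear hd1 hd2 hd3 hMv
  rcases hm with ⟨hn4, rfl⟩ | ⟨hn4, rfl⟩
  · have hb := h73 hn4
    obtain ⟨w, rfl⟩ : ∃ w, nn = 4*w+1 := ⟨nn/4, by omega⟩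
    clear h73 hn4 hodd
    rcases he1 with rfl|rfl|rfl|rfl <;> rcases he2 with rfl|rfl <;>
      rcases hd with rfl|rfl|rfl|rfl <;> omega
  · obtain ⟨w, rfl⟩ : ∃ w, nn = 4*w+3 := ⟨nn/4, by omega⟩
    clear h73 hn4 hodd
    rcases he1 with rfl|rfl|rfl|rfl <;> rcases he2 with rfl|rfl <;>
      rcases hd with rfl|rfl|rfl|rfl <;> omega

/-- seam kill: m ≡ b*t - k*s is impossible. -/
lemma swap_kill (Mv s t b k nn m : ℤ)
    (hs : 1 ≤ s ∧ s ≤ Mv) (ht : 1 ≤ t ∧ t ≤ Mv)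
    (hb : b = 1 ∨ b = -1 ∨ b = 2 ∨ b = -2) (hk : k = 1 ∨ k = 2)
    (hm1 : 2*Mv + 2 ≤ m) (hm2 : m + 4*Mv + 1 ≤ nn)
    (heq : b*t - k*s = m ∨ b*t - k*s = m - nn) : False := by
  rcases hb with rfl|rfl|rfl|rfl <;> rcases hk with rfl|rfl <;> omega


lemma Ctx.nz : NeZero c.n := ⟨c.hn.ne_zero⟩

lemma Ctx.int_eq {A B : ℤ} (h : (A : ZMod c.n) = (B : ZMod c.n))
    (h1 : A - B < c.n) (h2 : B - A < c.n) : A = B := by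
  have h0 : ((A - B : ℤ) : ZMod c.n) = 0 := by push_cast; rw [h]; ring
  have hd := (ZMod.intCast_zmod_eq_zero_iff_dvd _ _).mp h0
  have := Int.eq_zero_of_abs_lt_dvd hd (by rw [abs_lt]; constructor <;> omega)
  omega

lemma Ctx.int_eq2 {A : ℤ} (h : (A : ZMod c.n) = ((c.m : ℕ) : ZMod c.n))
    (h1 : -(c.n : ℤ) < A) (h2 : A < c.n) : A = c.m ∨ A = c.m - c.n := by
  have h0 : ((A - (c.m : ℤ) : ℤ) : ZMod c.n) = 0 := by push_cast; rw [h]; ring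
  obtain ⟨k, hk⟩ := (ZMod.intCast_zmod_eq_zero_iff_dvd _ _).mp h0
  have hm := c.hm_lt
  have hn0 : (0 : ℤ) < c.n := by exact_mod_cast c.hn.pos
  have hk2 : k < 1 := by nlinarith
  have hk3 : -2 < k := by nlinarith [c.hm_pos]
  interval_cases k <;> simp at hk <;> omega

lemma Ctx.natcast_inj {a b : ℕ} (ha : a < c.n) (hb : b < c.n)
    (h : (a : ZMod c.n) = (b : ZMod c.n)) : a = b := by
  haveI := c.nz
  have h1 := ZMod.val_cast_of_lt ha
  have h2 := ZMod.val_cast_of_lt hb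
  rw [h] at h1; omega

lemma Ctx.scast_ne {s : ℕ} (hs1 : 1 ≤ s) (hsn : s < c.n) : (s : ZMod c.n) ≠ 0 := by
  intro h
  have := c.natcast_inj hsn (by omega : 0 < c.n) (by simpa using h)
  omega

def Ctx.mbar : ZMod c.n := (c.m : ℕ)

lemma Ctx.mbar_ne_zero : c.mbar ≠ 0 := by
  intro h
  have := c.natcast_inj c.hm_lt (c.hn.pos) (by simpa [Ctx.mbar] using h)
  exact absurd this (by have := c.hm_pos; omega)

def Ctx.Dbar (z : ZMod c.n) : Prop :=
  ∃ t ∈ c.S, ∃ e : ℤ, z = (e : ZMod c.n) ∧ (e = t ∨ e = -t ∨ e = 2*t ∨ e = -(2*t))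

def Ctx.Dpos (z : ZMod c.n) : Prop :=
  ∃ t ∈ c.S, ∃ e : ℤ, z = (e : ZMod c.n) ∧ (e = t ∨ e = 2*t)

def Ctx.Hadj (x y : ZMod c.n) : Prop :=
  x ≠ y ∧ (c.Dbar (x - y) ∨ (x = 0 ∧ c.Dpos (y - c.mbar)) ∨ (y = 0 ∧ c.Dpos (x - c.mbar)))

lemma Ctx.Dbar_neg {z} (h : c.Dbar z) : c.Dbar (-z) := by
  obtain ⟨t, ht, e, he, hd⟩ := h
  exact ⟨t, ht, -e, by rw [he]; push_cast; ring, by omega⟩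

lemma Ctx.Hadj_symm {x y} (h : c.Hadj x y) : c.Hadj y x := by
  obtain ⟨h1, h2⟩ := h
  refine ⟨h1.symm, ?_⟩
  rcases h2 with h | ⟨ha, hb⟩ | ⟨ha, hb⟩
  · left; have : y - x = -(x - y) := by ring
    rw [this]; exact c.Dbar_neg h
  · right; right; exact ⟨ha, hb⟩
  · right; left; exact ⟨ha, hb⟩

def Ctx.ιn (a : Fin (c.n - 1)) : ℕ := if (a : ℕ) < c.m then (a : ℕ) else (a : ℕ) + 1

lemma Ctx.ιn_lt (a : Fin (c.n - 1)) : c.ιn a < c.n := by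
  have := a.isLt; have := c.hm_lt; unfold Ctx.ιn; split <;> omega

lemma Ctx.ιn_ne (a : Fin (c.n - 1)) : c.ιn a ≠ c.m := by
  unfold Ctx.ιn; split <;> omega

def Ctx.ι (a : Fin (c.n - 1)) : ZMod c.n := (c.ιn a : ℕ)

lemma Ctx.ι_ne_mbar (a : Fin (c.n - 1)) : c.ι a ≠ c.mbar := by
  intro h
  exact c.ιn_ne a (c.natcast_inj (c.ιn_lt a) c.hm_lt h)

lemma Ctx.ι_inj : Function.Injective c.ι := by
  intro a b h
  have h2 := c.natcast_inj (c.ιn_lt a) (c.ιn_lt b) h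
  unfold Ctx.ιn at h2
  have := a.isLt; have := b.isLt
  apply Fin.ext
  split at h2 <;> split at h2 <;> omega

def Ctx.ν (z : ZMod c.n) : Fin (c.n - 1) :=
  ⟨if (haveI := c.nz; z.val) < c.m then (haveI := c.nz; z.val) else (haveI := c.nz; z.val) - 1, by
    haveI := c.nz
    have := ZMod.val_lt z; have := c.hm_lt; have := c.hn9
    split <;> omega⟩

lemma Ctx.ι_ν {z : ZMod c.n} (hz : z ≠ c.mbar) : c.ι (c.ν z) = z := by
  haveI := c.nz
  have hv := ZMod.val_lt z
  have hm := c.hm_lt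
  have hvm : z.val ≠ c.m := by
    intro h
    apply hz
    have : ((z.val : ℕ) : ZMod c.n) = z := ZMod.natCast_rightInverse z
    rw [← this, h]; rfl
  unfold Ctx.ι Ctx.ιn Ctx.ν
  by_cases hlt : z.val < c.m
  · simp only [hlt, if_true]
    exact ZMod.natCast_rightInverse z
  · simp only [hlt, if_false]
    have h1 : ¬ (z.val - 1 < c.m) := by omega
    simp only [h1, if_false]
    have h2 : z.val - 1 + 1 = z.val := by omega
    rw [h2]
    exact ZMod.natCast_rightInverse z

def Ctx.sub (z : ZMod c.n) : ZMod c.n := if z = c.mbar then 0 else z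

lemma Ctx.sub_ne_mbar (z : ZMod c.n) : c.sub z ≠ c.mbar := by
  unfold Ctx.sub; split
  · exact fun h => c.mbar_ne_zero h.symm
  · assumption

lemma Ctx.sub_id {z : ZMod c.n} (h : z ≠ c.mbar) : c.sub z = z := if_neg h

lemma Ctx.sub_eq_cases {a b : ZMod c.n} (h : c.sub a = c.sub b) :
    a = b ∨ (a = c.mbar ∧ b = 0) ∨ (a = 0 ∧ b = c.mbar) := by
  unfold Ctx.sub at h
  by_cases h1 : a = c.mbar
  · by_cases h2 : b = c.mbar
    · left; rw [h1, h2]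
    · rw [if_pos h1, if_neg h2] at h; right; left; exact ⟨h1, h.symm⟩
  · by_cases h2 : b = c.mbar
    · rw [if_neg h1, if_pos h2] at h; right; right; exact ⟨h, h2⟩
    · rw [if_neg h1, if_neg h2] at h; left; exact h

def Ctx.slot (s j k : ℕ) : ZMod c.n := c.sub (c.mbar + (((j + k) * s : ℕ) : ZMod c.n))

def Ctx.Wz (s j : ℕ) : Finset (ZMod c.n) := {c.slot s j 0, c.slot s j 1, c.slot s j 2}

def Ctx.W (s j : ℕ) : Finset (Fin (c.n - 1)) :=
  {c.ν (c.slot s j 0), c.ν (c.slot s j 1), c.ν (c.slot s j 2)}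

def Ctx.G : SimpleGraph (Fin (c.n - 1)) where
  Adj a b := a ≠ b ∧ ¬ c.Hadj (c.ι a) (c.ι b)
  symm := ⟨by rintro a b ⟨h1, h2⟩; exact ⟨h1.symm, fun h => h2 (c.Hadj_symm h)⟩⟩
  loopless := ⟨fun a h => h.1 rfl⟩

lemma Ctx.mem_Wz {s j : ℕ} {p : ZMod c.n} :
    p ∈ c.Wz s j ↔ ∃ k ≤ 2, p = c.slot s j k := by
  unfold Ctx.Wz
  simp only [Finset.mem_insert, Finset.mem_singleton]
  constructor
  · rintro (h | h | h)
    exacts [⟨0, by omega, h⟩, ⟨1, by omega, h⟩, ⟨2, by omega, h⟩]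
  · rintro ⟨k, hk, h⟩
    interval_cases k <;> tauto


lemma Ctx.nMbig : 6 * c.M < c.n := by
  have := c.h8; have := c.hM1; omega

lemma Ctx.raw_cancel {s a b : ℕ} (hs : s ∈ c.S) (ha : a < c.n) (hb : b < c.n)
    (h : c.mbar + ((a * s : ℕ) : ZMod c.n) = c.mbar + ((b * s : ℕ) : ZMod c.n)) : a = b := by
  have h2 : ((a * s : ℕ) : ZMod c.n) = ((b * s : ℕ) : ZMod c.n) := by
    exact add_left_cancel h
  have h3 : (a : ZMod c.n) * (s : ZMod c.n) = (b : ZMod c.n) * (s : ZMod c.n) := by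
    push_cast at h2; exact h2
  obtain ⟨hs1, hsM, _⟩ := c.hsM s hs
  haveI := c.nz
  haveI : Fact (c.n.Prime) := ⟨c.hn⟩
  have hsne : (s : ZMod c.n) ≠ 0 := c.scast_ne hs1 (by have := c.h8; omega)
  have h4 : (a : ZMod c.n) = (b : ZMod c.n) := mul_right_cancel₀ hsne h3
  exact c.natcast_inj ha hb h4

lemma Ctx.raw_eq_mbar {s j k : ℕ} (hs : s ∈ c.S) (hjk : j + k ≤ c.n - 1)
    (h : c.mbar + (((j + k) * s : ℕ) : ZMod c.n) = c.mbar) : j + k = 0 := by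
  have h2 : (((j + k) * s : ℕ) : ZMod c.n) = 0 := by
    have := add_eq_left.mp h
    exact this
  have hd := (ZMod.natCast_eq_zero_iff _ _).mp h2
  obtain ⟨hs1, hsM, _⟩ := c.hsM s hs
  have h8 := c.h8; have hM1 := c.hM1
  rcases (Nat.Prime.dvd_mul c.hn).mp hd with hh | hh
  · rcases Nat.eq_zero_or_pos (j + k) with h0 | h0
    · exact h0
    · have := Nat.le_of_dvd h0 hh; omega
  · have := Nat.le_of_dvd (by omega) hh; omega

/-- the "seam" equation mbar + (a*s : ℕ) = 0 with small coefficient kills. -/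
lemma Ctx.raw_ne_zero {s k : ℕ} (hs : s ∈ c.S) (hk1 : 1 ≤ k) (hk : k ≤ 3)
    (h : c.mbar + ((k * s : ℕ) : ZMod c.n) = 0) : False := by
  obtain ⟨hs1, hsM, _⟩ := c.hsM s hs
  have hup := c.hm_up; have hM1 := c.hM1
  have h2 : ((c.m + k * s : ℕ) : ZMod c.n) = ((0 : ℕ) : ZMod c.n) := by
    push_cast [Ctx.mbar] at h ⊢
    exact h
  have h3 : c.m + k * s = 0 := by
    apply c.natcast_inj _ _ h2
    · have : k * s ≤ 3 * c.M := by nlinarith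
      omega
    · have := c.hn9; omega
  have := c.hm_pos; omega

lemma Ctx.slot_ne {s j k k' : ℕ} (hs : s ∈ c.S) (hk : k ≤ 3) (hk' : k' ≤ 3) (hne : k ≠ k')
    (hjk : j + k ≤ c.n - 1) (hjk' : j + k' ≤ c.n - 1) : c.slot s j k ≠ c.slot s j k' := by
  intro h
  have h9 := c.hn9
  rcases c.sub_eq_cases h with h | ⟨h1, h2⟩ | ⟨h1, h2⟩
  · have := c.raw_cancel hs (a := j + k) (b := j + k') (by omega) (by omega) h
    omega
  · have hz := c.raw_eq_mbar hs (by omega) h1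
    have hk'1 : 1 ≤ k' := by omega
    have : j = 0 := by omega
    subst this
    exact c.raw_ne_zero hs (k := 0 + k') (by omega) (by omega) h2
  · have hz := c.raw_eq_mbar hs (by omega) h2
    have hk1 : 1 ≤ k := by omega
    have : j = 0 := by omega
    subst this
    exact c.raw_ne_zero hs (k := 0 + k) (by omega) (by omega) h1

lemma Ctx.scast2_ne {s : ℕ} (hs : s ∈ c.S) {k : ℕ} (hk1 : 1 ≤ k) (hk : k ≤ 3) :
    ((k * s : ℕ) : ZMod c.n) ≠ 0 := by
  obtain ⟨hs1, hsM, _⟩ := c.hsM s hs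
  have := c.h8; have := c.hM1
  exact c.scast_ne (by nlinarith) (by nlinarith)

lemma Ctx.slot_raw {s j k : ℕ} (hs : s ∈ c.S) (h1 : 1 ≤ j + k) (h2 : j + k ≤ c.n - 1) :
    c.slot s j k = c.mbar + (((j + k) * s : ℕ) : ZMod c.n) := by
  unfold Ctx.slot
  apply c.sub_id
  intro h
  have := c.raw_eq_mbar hs h2 (by rw [h])
  omega

lemma Ctx.slot_00 {s : ℕ} : c.slot s 0 0 = 0 := by
  unfold Ctx.slot Ctx.sub
  norm_num

lemma Ctx.Dbar_of {s : ℕ} (hs : s ∈ c.S) (e : ℤ)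
    (he : e = (s : ℤ) ∨ e = -(s : ℤ) ∨ e = 2*(s : ℤ) ∨ e = -(2*(s : ℤ))) :
    c.Dbar ((e : ℤ) : ZMod c.n) := ⟨s, hs, e, rfl, he⟩

lemma Ctx.Dpos_of {s : ℕ} (hs : s ∈ c.S) (e : ℤ)
    (he : e = (s : ℤ) ∨ e = 2*(s : ℤ)) :
    c.Dpos ((e : ℤ) : ZMod c.n) := ⟨s, hs, e, rfl, he⟩

lemma Ctx.window {s : ℕ} (hs : s ∈ c.S) (w : ZMod c.n)
    (h0 : w ≠ c.mbar) (h1 : w + (s : ℕ) ≠ c.mbar) (h2 : w + (s : ℕ) + (s : ℕ) ≠ c.mbar) :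
    ∃ j ≤ c.n - 3, c.Wz s j = {w, w + (s : ℕ), w + (s : ℕ) + (s : ℕ)} := by
  haveI := c.nz
  haveI : Fact (c.n.Prime) := ⟨c.hn⟩
  obtain ⟨hs1, hsM, _⟩ := c.hsM s hs
  have h8 := c.h8; have hM1 := c.hM1; have h9 := c.hn9
  have hsne : (s : ZMod c.n) ≠ 0 := c.scast_ne hs1 (by omega)
  set u : ZMod c.n := (w - c.mbar) * (s : ZMod c.n)⁻¹ with hu
  have key : c.mbar + u * (s : ZMod c.n) = w := by
    rw [hu]
    field_simp
    ring
  have hv : ((u.val : ℕ) : ZMod c.n) = u := ZMod.natCast_rightInverse u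
  have raw : ∀ k : ℕ, c.mbar + (((u.val + k) * s : ℕ) : ZMod c.n)
      = w + ((k * s : ℕ) : ZMod c.n) := by
    intro k
    push_cast
    rw [hv]
    linear_combination key
  have hlt := ZMod.val_lt u
  have hne1 : u.val ≠ c.n - 1 := by
    intro hval
    apply h1
    have hcast : ((c.n - 1 : ℕ) : ZMod c.n) = -1 := by
      push_cast [Nat.cast_sub (show 1 ≤ c.n by omega)]
      simp
    have hu1 : u = -1 := by rw [← hv, hval, hcast]
    have := key
    rw [hu1] at this
    rw [← this]; ring
  have hne2 : u.val ≠ c.n - 2 := by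
    intro hval
    apply h2
    have hcast : ((c.n - 2 : ℕ) : ZMod c.n) = -2 := by
      push_cast [Nat.cast_sub (show 2 ≤ c.n by omega)]
      simp
    have hu1 : u = -2 := by rw [← hv, hval, hcast]
    have := key
    rw [hu1] at this
    rw [← this]; ring
  refine ⟨u.val, by omega, ?_⟩
  have e0 : c.slot s u.val 0 = w := by
    unfold Ctx.slot
    rw [raw 0]
    simp only [Nat.zero_mul, Nat.cast_zero, add_zero]
    exact c.sub_id h0
  have e1 : c.slot s u.val 1 = w + (s : ℕ) := by
    unfold Ctx.slot
    rw [raw 1]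
    rw [one_mul]
    exact c.sub_id h1
  have e2 : c.slot s u.val 2 = w + (s : ℕ) + (s : ℕ) := by
    unfold Ctx.slot
    rw [raw 2]
    have : ((2 * s : ℕ) : ZMod c.n) = (s : ℕ) + (s : ℕ) := by push_cast; ring
    rw [this, ← add_assoc]
    exact c.sub_id h2
  unfold Ctx.Wz
  rw [e0, e1, e2]

lemma Ctx.slot_j0 {s k : ℕ} (hs : s ∈ c.S) (hk1 : 1 ≤ k) (hk : k ≤ 2) :
    c.slot s 0 k = c.mbar + ((k * s : ℕ) : ZMod c.n) := by
  have h9 := c.hn9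
  have := c.slot_raw hs (j := 0) (k := k) (by omega) (by omega)
  simpa using this

lemma Ctx.Wz_zero {s : ℕ} (hs : s ∈ c.S) :
    c.Wz s 0 = {0, c.mbar + ((1 * s : ℕ) : ZMod c.n), c.mbar + ((2 * s : ℕ) : ZMod c.n)} := by
  unfold Ctx.Wz
  rw [c.slot_00, c.slot_j0 hs (by omega) (by omega), c.slot_j0 hs (by omega) (by omega)]
lemma Ctx.slot_diff_raw {s j k k' : ℕ} :
    (c.mbar + (((j + k) * s : ℕ) : ZMod c.n)) - (c.mbar + (((j + k') * s : ℕ) : ZMod c.n))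
      = ((((k : ℤ) - (k' : ℤ)) * (s : ℤ) : ℤ) : ZMod c.n) := by
  push_cast; ring

lemma Ctx.hadj_slots {s j k k' : ℕ} (hs : s ∈ c.S) (hk : k ≤ 2) (hk' : k' ≤ 2)
    (hne : k ≠ k') (hj : j ≤ c.n - 3) : c.Hadj (c.slot s j k) (c.slot s j k') := by
  have h9 := c.hn9
  refine ⟨c.slot_ne hs (by omega) (by omega) hne (by omega) (by omega), ?_⟩
  by_cases hj0 : j = 0
  · subst hj0
    rcases Nat.eq_zero_or_pos k with hk0 | hkpos
    · -- k = 0 : slot = 0, use the Dpos clause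
      subst hk0
      rw [c.slot_00, c.slot_j0 hs (by omega) (by omega)]
      right; left
      refine ⟨rfl, ?_⟩
      have : c.mbar + ((k' * s : ℕ) : ZMod c.n) - c.mbar = (((k' * s : ℕ) : ℤ) : ZMod c.n) := by
        push_cast; ring
      rw [this]
      exact c.Dpos_of hs _ (by interval_cases k' <;> push_cast <;> omega)
    · rcases Nat.eq_zero_or_pos k' with hk0' | hkpos'
      · subst hk0'
        rw [c.slot_00, c.slot_j0 hs (by omega) (by omega)]
        right; right
        refine ⟨rfl, ?_⟩
        have : c.mbar + ((k * s : ℕ) : ZMod c.n) - c.mbar = (((k * s : ℕ) : ℤ) : ZMod c.n) := by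
          push_cast; ring
        rw [this]
        exact c.Dpos_of hs _ (by interval_cases k <;> push_cast <;> omega)
      · -- both ≥ 1
        rw [c.slot_j0 hs hkpos (by omega), c.slot_j0 hs hkpos' (by omega)]
        left
        have hd : c.mbar + ((k * s : ℕ) : ZMod c.n) - (c.mbar + ((k' * s : ℕ) : ZMod c.n))
            = ((((k : ℤ) - (k' : ℤ)) * (s : ℤ) : ℤ) : ZMod c.n) := by push_cast; ring
        rw [hd]
        apply c.Dbar_of hs
        interval_cases k <;> interval_cases k' <;> push_cast <;> omega
  · -- j ≥ 1
    rw [c.slot_raw hs (by omega) (by omega), c.slot_raw hs (by omega) (by omega)]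
    left
    rw [c.slot_diff_raw]
    apply c.Dbar_of hs
    interval_cases k <;> interval_cases k' <;> push_cast <;> omega

lemma Ctx.card_Wz {s j : ℕ} (hs : s ∈ c.S) (hj : j ≤ c.n - 3) : (c.Wz s j).card = 3 := by
  have h9 := c.hn9
  have d01 := c.slot_ne hs (j := j) (k := 0) (k' := 1) (by omega) (by omega) (by omega) (by omega) (by omega)
  have d02 := c.slot_ne hs (j := j) (k := 0) (k' := 2) (by omega) (by omega) (by omega) (by omega) (by omega)
  have d12 := c.slot_ne hs (j := j) (k := 1) (k' := 2) (by omega) (by omega) (by omega) (by omega) (by omega)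
  unfold Ctx.Wz
  rw [Finset.card_insert_of_notMem (by simp [d01, d02]),
      Finset.card_insert_of_notMem (by simp [d12])]
  rfl

lemma Ctx.slot_shift {s j k : ℕ} : c.slot s (j + 1) k = c.slot s j (k + 1) := by
  unfold Ctx.slot
  have : j + 1 + k = j + (k + 1) := by omega
  rw [this]

lemma Ctx.consec_inter {s j : ℕ} (hs : s ∈ c.S) (hj : j + 1 ≤ c.n - 3) :
    c.Wz s j ∩ c.Wz s (j + 1) = {c.slot s j 1, c.slot s j 2} := by
  have h9 := c.hn9
  have hd : ∀ k k' : ℕ, k ≤ 3 → k' ≤ 3 → k ≠ k' → c.slot s j k ≠ c.slot s j k' :=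
    fun k k' hk hk' hne => c.slot_ne hs hk hk' hne (by omega) (by omega)
  have d01 := hd 0 1 (by omega) (by omega) (by omega)
  have d02 := hd 0 2 (by omega) (by omega) (by omega)
  have d03 := hd 0 3 (by omega) (by omega) (by omega)
  have d12 := hd 1 2 (by omega) (by omega) (by omega)
  have d13 := hd 1 3 (by omega) (by omega) (by omega)
  have d23 := hd 2 3 (by omega) (by omega) (by omega)
  ext z
  simp only [Ctx.Wz, Finset.mem_inter, Finset.mem_insert, Finset.mem_singleton, c.slot_shift]
  constructor
  · rintro ⟨h1 | h1 | h1, h2 | h2 | h2⟩ <;> subst h1 <;> tauto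
  · rintro (h | h) <;> subst h <;> tauto

lemma Ctx.card_consec {s j : ℕ} (hs : s ∈ c.S) (hj : j + 1 ≤ c.n - 3) :
    (c.Wz s j ∩ c.Wz s (j + 1)).card = 2 := by
  have h9 := c.hn9
  rw [c.consec_inter hs hj]
  rw [Finset.card_insert_of_notMem (by
    simp [c.slot_ne hs (j := j) (k := 1) (k' := 2) (by omega) (by omega) (by omega) (by omega) (by omega)])]
  rfl
lemma mul_bound2 {d s M : ℤ} (hd1 : -2 ≤ d) (hd2 : d ≤ 2) (hs0 : 0 ≤ s) (hsM : s ≤ M) :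
    -(2*M) ≤ d*s ∧ d*s ≤ 2*M := by
  constructor
  · have h1 : (-2) * s ≤ d * s := mul_le_mul_of_nonneg_right hd1 hs0
    nlinarith
  · have h1 : d * s ≤ 2 * s := mul_le_mul_of_nonneg_right hd2 hs0
    nlinarith

lemma Ctx.sub_mbar' : c.sub c.mbar = 0 := if_pos rfl

lemma Ctx.sub_zero' : c.sub 0 = 0 := c.sub_id (fun h => c.mbar_ne_zero h.symm)

lemma Ctx.hsZ {s : ℕ} (hs : s ∈ c.S) : 1 ≤ (s : ℤ) ∧ (s : ℤ) ≤ (c.M : ℤ) ∧ (s : ℤ) % 4 = 1 := by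
  obtain ⟨h1, h2, h3⟩ := c.hsM s hs
  refine ⟨by omega, by omega, by omega⟩

/-- seam contradiction: mbar = cast (b*t - k*s) with b ∈ ±{1,2}, k ∈ {1,2}. -/
lemma Ctx.seam_kill {s t : ℕ} (hs : s ∈ c.S) (ht : t ∈ c.S) {b k : ℤ}
    (hb : b = 1 ∨ b = -1 ∨ b = 2 ∨ b = -2) (hk : k = 1 ∨ k = 2)
    (h : (c.mbar : ZMod c.n) = ((b * (t : ℤ) - k * (s : ℤ) : ℤ) : ZMod c.n)) : False := by
  obtain ⟨hs1, hsM, _⟩ := c.hsZ hs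
  obtain ⟨ht1, htM, _⟩ := c.hsZ ht
  have hup : (c.m : ℤ) + 4 * (c.M : ℤ) + 1 ≤ (c.n : ℤ) := by
    have := c.hm_up; omega
  have hlow : 2 * (c.M : ℤ) + 2 ≤ (c.m : ℤ) := by have := c.hm_low; omega
  have hbt := mul_bound2 (by omega : (-2:ℤ) ≤ b) (by omega : b ≤ 2) (by omega : (0:ℤ) ≤ (t:ℤ)) htM
  have hks := mul_bound2 (by omega : (-2:ℤ) ≤ k) (by omega : k ≤ 2) (by omega : (0:ℤ) ≤ (s:ℤ)) hsM
  have h2 := c.int_eq2 (A := b * (t : ℤ) - k * (s : ℤ)) (by rw [← h]; rfl)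
    (by omega) (by omega)
  exact swap_kill (c.M : ℤ) (s : ℤ) (t : ℤ) b k (c.n : ℤ) (c.m : ℤ)
    ⟨hs1, hsM⟩ ⟨ht1, htM⟩ hb hk hlow hup h2

lemma Ctx.pair {s t j j' : ℕ} (hs : s ∈ c.S) (ht : t ∈ c.S)
    (hj : j ≤ c.n - 3) (hj' : j' ≤ c.n - 3) {p q : ZMod c.n} (hpq : p ≠ q)
    (hp1 : p ∈ c.Wz s j) (hp2 : p ∈ c.Wz t j') (hq1 : q ∈ c.Wz s j) (hq2 : q ∈ c.Wz t j') :
    s = t ∧ (j = j' ∨ j = j' + 1 ∨ j' = j + 1) := by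
  have h9 := c.hn9
  obtain ⟨hs1, hsM, hs4⟩ := c.hsM s hs
  obtain ⟨ht1, htM, ht4⟩ := c.hsM t ht
  have h8 := c.h8
  obtain ⟨kp, hkp, hpA⟩ := c.mem_Wz.mp hp1
  obtain ⟨kp', hkp', hpB⟩ := c.mem_Wz.mp hp2
  obtain ⟨kq, hkq, hqA⟩ := c.mem_Wz.mp hq1
  obtain ⟨kq', hkq', hqB⟩ := c.mem_Wz.mp hq2
  have hkpq : kp ≠ kq := by
    intro h; apply hpq; rw [hpA, hqA, h]
  have hkpq' : kp' ≠ kq' := by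
    intro h; apply hpq; rw [hpB, hqB, h]
  have hP : c.slot s j kp = c.slot t j' kp' := by rw [← hpA, ← hpB]
  have hQ : c.slot s j kq = c.slot t j' kq' := by rw [← hqA, ← hqB]
  unfold Ctx.slot at hP hQ
  -- names for the raw values
  rcases c.sub_eq_cases hP with hPm | ⟨hP1, hP2⟩ | ⟨hP1, hP2⟩
  · rcases c.sub_eq_cases hQ with hQm | ⟨hQ1, hQ2⟩ | ⟨hQ1, hQ2⟩
    · -- main/main
      have hdiff : ((((kp : ℤ) - (kq : ℤ)) * (s : ℤ) : ℤ) : ZMod c.n)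
          = ((((kp' : ℤ) - (kq' : ℤ)) * (t : ℤ) : ℤ) : ZMod c.n) := by
        rw [← c.slot_diff_raw, ← c.slot_diff_raw, hPm, hQm]
      have hb1 := mul_bound2 (by omega : (-2:ℤ) ≤ (kp:ℤ) - kq) (by omega : (kp:ℤ) - kq ≤ 2)
        (by omega : (0:ℤ) ≤ (s:ℤ)) (by omega : (s:ℤ) ≤ (c.M:ℤ))
      have hb2 := mul_bound2 (by omega : (-2:ℤ) ≤ (kp':ℤ) - kq') (by omega : (kp':ℤ) - kq' ≤ 2)
        (by omega : (0:ℤ) ≤ (t:ℤ)) (by omega : (t:ℤ) ≤ (c.M:ℤ))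
      have heqZ := c.int_eq hdiff (by omega) (by omega)
      have hst := lemD ((kp : ℤ) - kq) ((kp' : ℤ) - kq') (s : ℤ) (t : ℤ)
        ⟨by omega, by omega⟩ ⟨by omega, by omega⟩ (by omega) (by omega) heqZ
      have hst' : s = t := by exact_mod_cast hst.1
      subst hst'
      refine ⟨rfl, ?_⟩
      have e1 : j + kp = j' + kp' := c.raw_cancel hs (by omega) (by omega) hPm
      have e2 : j + kq = j' + kq' := c.raw_cancel hs (by omega) (by omega) hQm
      omega
    · -- q is (mbar, 0)
      exfalso
      have hjq := c.raw_eq_mbar hs (by omega) hQ1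
      have hj0 : j = 0 := by omega
      have hkq0 : kq = 0 := by omega
      subst hj0; subst hkq0
      -- B_{kq'} = 0 and A_{kp} = B_{kp'}
      have hBp : c.mbar + (((j' + kp') * t : ℕ) : ZMod c.n)
          = ((((kp' : ℤ) - (kq' : ℤ)) * (t : ℤ) : ℤ) : ZMod c.n) := by
        rw [← c.slot_diff_raw (j := j') (k := kp') (k' := kq') (s := t), hQ2]; ring
      -- A_{kp} = mbar + kp * s
      have hmain : (c.mbar : ZMod c.n)
          = ((((kp' : ℤ) - (kq' : ℤ)) * (t : ℤ) - (kp : ℤ) * (s : ℤ) : ℤ) : ZMod c.n) := by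
        have h1 : c.mbar + (((0 + kp) * s : ℕ) : ZMod c.n)
            = ((((kp' : ℤ) - (kq' : ℤ)) * (t : ℤ) : ℤ) : ZMod c.n) := by rw [hPm, hBp]
        have h2 : (((0 + kp) * s : ℕ) : ZMod c.n) = (((kp : ℤ) * (s : ℤ) : ℤ) : ZMod c.n) := by
          push_cast; ring
        rw [h2] at h1
        push_cast at h1 ⊢
        linear_combination h1
      exact c.seam_kill hs ht (b := (kp' : ℤ) - kq') (k := (kp : ℤ))
        (by omega) (by omega) hmain
    · -- q is (0, mbar)
      exfalso
      have hjq := c.raw_eq_mbar ht (by omega) hQ2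
      have hj0 : j' = 0 := by omega
      have hkq0 : kq' = 0 := by omega
      subst hj0; subst hkq0
      have hAp : c.mbar + (((j + kp) * s : ℕ) : ZMod c.n)
          = ((((kp : ℤ) - (kq : ℤ)) * (s : ℤ) : ℤ) : ZMod c.n) := by
        rw [← c.slot_diff_raw (j := j) (k := kp) (k' := kq) (s := s), hQ1]; ring
      have hmain : (c.mbar : ZMod c.n)
          = ((((kp : ℤ) - (kq : ℤ)) * (s : ℤ) - (kp' : ℤ) * (t : ℤ) : ℤ) : ZMod c.n) := by
        have h1 : c.mbar + (((0 + kp') * t : ℕ) : ZMod c.n)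
            = ((((kp : ℤ) - (kq : ℤ)) * (s : ℤ) : ℤ) : ZMod c.n) := by rw [← hPm, hAp]
        have h2 : (((0 + kp') * t : ℕ) : ZMod c.n) = (((kp' : ℤ) * (t : ℤ) : ℤ) : ZMod c.n) := by
          push_cast; ring
        rw [h2] at h1
        push_cast at h1 ⊢
        linear_combination h1
      exact c.seam_kill ht hs (b := (kp : ℤ) - kq) (k := (kp' : ℤ))
        (by omega) (by omega) hmain
  · -- p is (mbar, 0)
    exfalso
    have hjp := c.raw_eq_mbar hs (by omega) hP1
    have hj0 : j = 0 := by omega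
    have hkp0 : kp = 0 := by omega
    subst hj0; subst hkp0
    rcases c.sub_eq_cases hQ with hQm | ⟨hQ1, hQ2⟩ | ⟨hQ1, hQ2⟩
    · have hBq : c.mbar + (((j' + kq') * t : ℕ) : ZMod c.n)
          = ((((kq' : ℤ) - (kp' : ℤ)) * (t : ℤ) : ℤ) : ZMod c.n) := by
        rw [← c.slot_diff_raw (j := j') (k := kq') (k' := kp') (s := t), hP2]; ring
      have hmain : (c.mbar : ZMod c.n)
          = ((((kq' : ℤ) - (kp' : ℤ)) * (t : ℤ) - (kq : ℤ) * (s : ℤ) : ℤ) : ZMod c.n) := by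
        have h1 : c.mbar + (((0 + kq) * s : ℕ) : ZMod c.n)
            = ((((kq' : ℤ) - (kp' : ℤ)) * (t : ℤ) : ℤ) : ZMod c.n) := by rw [hQm, hBq]
        have h2 : (((0 + kq) * s : ℕ) : ZMod c.n) = (((kq : ℤ) * (s : ℤ) : ℤ) : ZMod c.n) := by
          push_cast; ring
        rw [h2] at h1
        push_cast at h1 ⊢
        linear_combination h1
      exact c.seam_kill hs ht (b := (kq' : ℤ) - kp') (k := (kq : ℤ))
        (by omega) (by omega) hmain
    · -- both swap : p = 0 = q
      apply hpq
      rw [hpA, hqA]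
      unfold Ctx.slot
      rw [hP1, hQ1]
    · apply hpq
      rw [hpA, hqA]
      unfold Ctx.slot
      rw [hP1, hQ1, c.sub_mbar', c.sub_zero']
  · -- p is (0, mbar)
    exfalso
    have hjp := c.raw_eq_mbar ht (by omega) hP2
    have hj0 : j' = 0 := by omega
    have hkp0 : kp' = 0 := by omega
    subst hj0; subst hkp0
    rcases c.sub_eq_cases hQ with hQm | ⟨hQ1, hQ2⟩ | ⟨hQ1, hQ2⟩
    · have hAq : c.mbar + (((j + kq) * s : ℕ) : ZMod c.n)
          = ((((kq : ℤ) - (kp : ℤ)) * (s : ℤ) : ℤ) : ZMod c.n) := by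
        rw [← c.slot_diff_raw (j := j) (k := kq) (k' := kp) (s := s), hP1]; ring
      have hmain : (c.mbar : ZMod c.n)
          = ((((kq : ℤ) - (kp : ℤ)) * (s : ℤ) - (kq' : ℤ) * (t : ℤ) : ℤ) : ZMod c.n) := by
        have h1 : c.mbar + (((0 + kq') * t : ℕ) : ZMod c.n)
            = ((((kq : ℤ) - (kp : ℤ)) * (s : ℤ) : ℤ) : ZMod c.n) := by rw [← hQm, hAq]
        have h2 : (((0 + kq') * t : ℕ) : ZMod c.n) = (((kq' : ℤ) * (t : ℤ) : ℤ) : ZMod c.n) := by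
          push_cast; ring
        rw [h2] at h1
        push_cast at h1 ⊢
        linear_combination h1
      exact c.seam_kill ht hs (b := (kq : ℤ) - kp) (k := (kq' : ℤ))
        (by omega) (by omega) hmain
    · apply hpq
      rw [hpA, hqA]
      unfold Ctx.slot
      rw [hP1, hQ1, c.sub_zero', c.sub_mbar']
    · apply hpq
      rw [hpA, hqA]
      unfold Ctx.slot
      rw [hP1, hQ1]
section Perm
variable {α : Type*} [DecidableEq α] (a b d : α)

lemma tri213 : ({a, b, d} : Finset α) = {b, a, d} := by ext w; simp; tauto
lemma tri231 : ({a, b, d} : Finset α) = {b, d, a} := by ext w; simp; tauto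
lemma tri132 : ({a, b, d} : Finset α) = {a, d, b} := by ext w; simp; tauto
lemma tri312 : ({a, b, d} : Finset α) = {d, a, b} := by ext w; simp; tauto
lemma tri321 : ({a, b, d} : Finset α) = {d, b, a} := by ext w; simp; tauto

end Perm

lemma Ctx.hadj_nonzero {x y : ZMod c.n} (h : c.Hadj x y) (hx : x ≠ 0) (hy : y ≠ 0) :
    c.Dbar (x - y) := by
  rcases h.2 with h | ⟨h0, _⟩ | ⟨h0, _⟩
  · exact h
  · exact absurd h0 hx
  · exact absurd h0 hy

lemma Ctx.hapZ {t1 t2 t3 : ℕ} (h1 : t1 ∈ c.S) (h2 : t2 ∈ c.S) (h3 : t3 ∈ c.S) :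
    (t1 : ℤ) + t2 = 2 * t3 → (t1 : ℤ) = t2 := by
  intro h
  have hh : t1 + t2 = t3 + t3 := by omega
  have := c.hAP (Finset.mem_coe.mpr h1) (Finset.mem_coe.mpr h3) (Finset.mem_coe.mpr h2) hh
  omega

lemma Ctx.char_pure {x y z : ZMod c.n} (hx0 : x ≠ 0) (hy0 : y ≠ 0) (hz0 : z ≠ 0)
    (hxm : x ≠ c.mbar) (hym : y ≠ c.mbar) (hzm : z ≠ c.mbar)
    (hxy : x ≠ y) (hxz : x ≠ z) (hyz : y ≠ z)
    (h1 : c.Hadj x y) (h2 : c.Hadj y z) (h3 : c.Hadj x z) :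
    ∃ s ∈ c.S, ∃ j ≤ c.n - 3, c.Wz s j = {x, y, z} := by
  obtain ⟨t1, ht1, e1, he1, hd1⟩ := c.hadj_nonzero h1 hx0 hy0
  obtain ⟨t2, ht2, e2, he2, hd2⟩ := c.hadj_nonzero h2 hy0 hz0
  obtain ⟨t3, ht3, e3, he3, hd3⟩ := c.hadj_nonzero h3 hx0 hz0
  obtain ⟨hZ1a, hZ1b, hZ1c⟩ := c.hsZ ht1
  obtain ⟨hZ2a, hZ2b, hZ2c⟩ := c.hsZ ht2
  obtain ⟨hZ3a, hZ3b, hZ3c⟩ := c.hsZ ht3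
  have hbig := c.nMbig
  have hsum : ((e1 + e2 - e3 : ℤ) : ZMod c.n) = ((0 : ℤ) : ZMod c.n) := by
    push_cast
    rw [← sub_eq_zero]
    have : (e1 : ZMod c.n) + e2 - e3 - 0 = (x - y) + (y - z) - (x - z) := by
      rw [← he1, ← he2, ← he3]; ring
    rw [this]; ring
  have heq : e1 + e2 = e3 := by
    have := c.int_eq hsum (by omega) (by omega)
    omega
  obtain ⟨hte1, hte2, hpat⟩ := lemA (t1 : ℤ) (t2 : ℤ) (t3 : ℤ) e1 e2 e3
    ⟨by omega, hZ1c⟩ ⟨by omega, hZ2c⟩ ⟨by omega, hZ3c⟩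
    (c.hapZ ht1 ht2 ht3) (c.hapZ ht2 ht3 ht1) (c.hapZ ht1 ht3 ht2)
    hd1 hd2 hd3 heq
  set sb : ZMod c.n := ((t1 : ℕ) : ZMod c.n) with hsb
  rcases hpat with ⟨hE1, hE2⟩ | ⟨hE1, hE2⟩ | ⟨hE1, hE2⟩ | ⟨hE1, hE2⟩ | ⟨hE1, hE2⟩ | ⟨hE1, hE2⟩ <;>
    rw [hE1] at he1 <;> rw [hE2] at he2
  · -- e1 = t1, e2 = t1 : x = z + 2s, y = z + s ; w = z
    have ey : y = z + sb := by push_cast at he2 ⊢; linear_combination he2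
    have ex : x = z + sb + sb := by push_cast at he1 ⊢; rw [ey] at he1; linear_combination he1
    obtain ⟨j, hj, hW⟩ := c.window ht1 z hzm (by rw [← ey]; exact hym) (by rw [← ex]; exact hxm)
    exact ⟨t1, ht1, j, hj, by rw [hW, ex, ey, tri321]⟩
  · -- e1 = -t1, e2 = -t1 : y = x + s, z = x + 2s ; w = x
    have ey : y = x + sb := by push_cast at he1 ⊢; linear_combination -he1
    have ez : z = x + sb + sb := by push_cast at he2 ⊢; rw [ey] at he2; linear_combination -he2
    obtain ⟨j, hj, hW⟩ := c.window ht1 x hxm (by rw [← ey]; exact hym) (by rw [← ez]; exact hzm)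
    exact ⟨t1, ht1, j, hj, by rw [hW, ey, ez]⟩
  · -- e1 = 2t1, e2 = -t1 : x = y + 2s, z = y + s ; w = y
    have ez : z = y + sb := by push_cast at he2 ⊢; linear_combination -he2
    have ex : x = y + sb + sb := by push_cast at he1 ⊢; linear_combination he1
    obtain ⟨j, hj, hW⟩ := c.window ht1 y hym (by rw [← ez]; exact hzm) (by rw [← ex]; exact hxm)
    exact ⟨t1, ht1, j, hj, by rw [hW, ex, ez, tri312]⟩
  · -- e1 = -2t1, e2 = t1 : y = x + 2s, z = x + s ; w = x
    have ez : z = x + sb := by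
      push_cast at he1 he2 ⊢; linear_combination -he1 - he2
    have ey : y = x + sb + sb := by push_cast at he1 ⊢; linear_combination -he1
    obtain ⟨j, hj, hW⟩ := c.window ht1 x hxm (by rw [← ez]; exact hzm) (by rw [← ey]; exact hym)
    exact ⟨t1, ht1, j, hj, by rw [hW, ey, ez, tri132]⟩
  · -- e1 = -t1, e2 = 2t1 : x = z + s, y = z + 2s ; w = z
    have ey : y = z + sb + sb := by push_cast at he2 ⊢; linear_combination he2
    have ex : x = z + sb := by
      push_cast at he1 he2 ⊢; linear_combination he1 + he2
    obtain ⟨j, hj, hW⟩ := c.window ht1 z hzm (by rw [← ex]; exact hxm) (by rw [← ey]; exact hym)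
    exact ⟨t1, ht1, j, hj, by rw [hW, ex, ey, tri231]⟩
  · -- e1 = t1, e2 = -2t1 : x = y + s, z = y + 2s ; w = y
    have ex : x = y + sb := by push_cast at he1 ⊢; linear_combination he1
    have ez : z = y + sb + sb := by push_cast at he2 ⊢; linear_combination -he2
    obtain ⟨j, hj, hW⟩ := c.window ht1 y hym (by rw [← ex]; exact hxm) (by rw [← ez]; exact hzm)
    exact ⟨t1, ht1, j, hj, by rw [hW, ex, ez, tri213]⟩
lemma Ctx.zero_nbr {y : ZMod c.n} (h : c.Hadj 0 y) (hy0 : y ≠ 0) :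
    (∃ t ∈ c.S, ∃ f : ℤ, y = (f : ZMod c.n) ∧ (f = t ∨ f = -t ∨ f = 2*t ∨ f = -(2*t)))
  ∨ (∃ t ∈ c.S, ∃ f : ℤ, y = c.mbar + (f : ZMod c.n) ∧ (f = t ∨ f = 2*t)) := by
  rcases h.2 with hD | ⟨_, hD⟩ | ⟨h0, _⟩
  · left
    obtain ⟨t, ht, e, he, hd⟩ := hD
    refine ⟨t, ht, -e, ?_, by omega⟩
    have hy : y = -(0 - y) := by ring
    rw [hy, he]; push_cast; ring
  · right
    obtain ⟨t, ht, e, he, hd⟩ := hD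
    exact ⟨t, ht, e, by rw [← he]; ring, hd⟩
  · exact absurd h0 hy0

/-- ℤ-level context facts for mixed_kill -/
lemma Ctx.mixed_false {t1 t2 t3 : ℕ} (h1 : t1 ∈ c.S) (h2 : t2 ∈ c.S) (h3 : t3 ∈ c.S)
    {e1 e2 d : ℤ}
    (he1 : e1 = t1 ∨ e1 = -t1 ∨ e1 = 2*t1 ∨ e1 = -(2*t1))
    (he2 : e2 = t2 ∨ e2 = 2*t2)
    (hd : d = t3 ∨ d = -t3 ∨ d = 2*t3 ∨ d = -(2*t3))
    (heq : (c.mbar : ZMod c.n) = ((e1 - e2 - d : ℤ) : ZMod c.n)) : False := by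
  obtain ⟨hZ1a, hZ1b, hZ1c⟩ := c.hsZ h1
  obtain ⟨hZ2a, hZ2b, hZ2c⟩ := c.hsZ h2
  obtain ⟨hZ3a, hZ3b, hZ3c⟩ := c.hsZ h3
  have hM4 : (c.M : ℤ) % 4 = 1 := by have := c.hM4; omega
  have hmZ : ((c.n : ℤ) % 4 = 1 ∧ (c.m : ℤ) = 3*(c.M : ℤ) + 2)
      ∨ ((c.n : ℤ) % 4 = 3 ∧ (c.m : ℤ) = 2*(c.M : ℤ) + 2) := by
    rcases c.hmdef with ⟨a, b⟩ | ⟨a, b⟩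
    · left; constructor <;> omega
    · right; constructor <;> omega
  have h73Z : (c.n : ℤ) % 4 = 1 → 7*(c.M : ℤ) + 3 ≤ (c.n : ℤ) := by
    intro h; have := c.h73 (by omega); omega
  have h8Z : 8*(c.M : ℤ) ≤ (c.n : ℤ) := by have := c.h8; omega
  have hoddZ : (c.n : ℤ) % 2 = 1 := by have := c.hn2; omega
  have hX := c.int_eq2 (A := e1 - e2 - d) (by rw [← heq]; rfl) (by omega) (by omega)
  exact mixed_kill (c.M : ℤ) (t1 : ℤ) (t2 : ℤ) (t3 : ℤ) e1 e2 d (c.n : ℤ) (c.m : ℤ)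
    hM4 hZ1a hZ1b hZ1c hZ2a hZ2b hZ2c hZ3a hZ3b hZ3c hmZ h73Z h8Z hoddZ he1 he2 hd hX

lemma Ctx.char_zero {y z : ZMod c.n} (hy0 : y ≠ 0) (hz0 : z ≠ 0)
    (hym : y ≠ c.mbar) (hzm : z ≠ c.mbar) (hyz : y ≠ z)
    (h1 : c.Hadj 0 y) (h2 : c.Hadj 0 z) (h3 : c.Hadj y z) :
    ∃ s ∈ c.S, ∃ j ≤ c.n - 3, c.Wz s j = {0, y, z} := by
  have h9 := c.hn9
  have hbig := c.nMbig
  have h0m : (0 : ZMod c.n) ≠ c.mbar := fun h => c.mbar_ne_zero h.symm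
  obtain ⟨t3, ht3, e3, he3, hd3⟩ := c.hadj_nonzero h3 hy0 hz0
  obtain ⟨hZ3a, hZ3b, hZ3c⟩ := c.hsZ ht3
  rcases c.zero_nbr h1 hy0 with ⟨t1, ht1, f1, hy, hdf1⟩ | ⟨t1, ht1, f1, hy, hdf1⟩ <;>
    rcases c.zero_nbr h2 hz0 with ⟨t2, ht2, f2, hz, hdf2⟩ | ⟨t2, ht2, f2, hz, hdf2⟩
  · -- v, v
    obtain ⟨hZ1a, hZ1b, hZ1c⟩ := c.hsZ ht1
    obtain ⟨hZ2a, hZ2b, hZ2c⟩ := c.hsZ ht2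
    have hsum : ((f1 - f2 - e3 : ℤ) : ZMod c.n) = ((0 : ℤ) : ZMod c.n) := by
      push_cast
      have : (f1 : ZMod c.n) - f2 - e3 = y - z - (y - z) := by rw [← hy, ← hz, ← he3]
      rw [this]; ring
    have heq : f1 + -f2 = e3 := by
      have := c.int_eq hsum (by omega) (by omega); omega
    obtain ⟨hte1, hte2, hpat⟩ := lemA (t1 : ℤ) (t2 : ℤ) (t3 : ℤ) f1 (-f2) e3
      ⟨by omega, hZ1c⟩ ⟨by omega, hZ2c⟩ ⟨by omega, hZ3c⟩
      (c.hapZ ht1 ht2 ht3) (c.hapZ ht2 ht3 ht1) (c.hapZ ht1 ht3 ht2)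
      hdf1 (by omega) hd3 heq
    set sb : ZMod c.n := ((t1 : ℕ) : ZMod c.n) with hsb
    have hsbc : ((t1 : ℤ) : ZMod c.n) = sb := by push_cast; rfl
    rcases hpat with ⟨hE1, hE2⟩ | ⟨hE1, hE2⟩ | ⟨hE1, hE2⟩ | ⟨hE1, hE2⟩ | ⟨hE1, hE2⟩ | ⟨hE1, hE2⟩ <;>
      rw [hE1] at hy <;> (have hf2 : f2 = -((-f2 : ℤ)) := by ring) <;> rw [hf2, hE2] at hz <;>
      push_cast at hy hz
    · -- y = s, z = -s : w = z
      have e0 : (0 : ZMod c.n) = z + sb := by rw [hz]; ring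
      have ey : y = z + sb + sb := by rw [hy, hz]; ring
      obtain ⟨j, hj, hW⟩ := c.window ht1 z hzm (by rw [← e0]; exact h0m) (by rw [← ey]; exact hym)
      exact ⟨t1, ht1, j, hj, by rw [hW, ← ey, ← e0]; exact (tri312 0 y z).symm⟩
    · -- y = -s, z = s : w = y
      have e0 : (0 : ZMod c.n) = y + sb := by rw [hy]; ring
      have ez : z = y + sb + sb := by rw [hy, hz]; ring
      obtain ⟨j, hj, hW⟩ := c.window ht1 y hym (by rw [← e0]; exact h0m) (by rw [← ez]; exact hzm)
      exact ⟨t1, ht1, j, hj, by rw [hW, ← ez, ← e0]; exact (tri213 0 y z).symm⟩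
    · -- y = 2s, z = s : w = 0
      have ez : z = 0 + sb := by rw [hz]; ring
      have ey : y = 0 + sb + sb := by rw [hy]; ring
      obtain ⟨j, hj, hW⟩ := c.window ht1 0 h0m (by rw [← ez]; exact hzm) (by rw [← ey]; exact hym)
      exact ⟨t1, ht1, j, hj, by rw [hW, ← ey, ← ez]; exact (tri132 0 y z).symm⟩
    · -- y = -2s, z = -s : w = y
      have ez : z = y + sb := by rw [hy, hz]; ring
      have e0 : (0 : ZMod c.n) = y + sb + sb := by rw [hy]; ring
      obtain ⟨j, hj, hW⟩ := c.window ht1 y hym (by rw [← ez]; exact hzm) (by rw [← e0]; exact h0m)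
      exact ⟨t1, ht1, j, hj, by rw [hW, ← e0, ← ez]; exact (tri231 0 y z).symm⟩
    · -- y = -s, z = -2s : w = z
      have ey : y = z + sb := by rw [hy, hz]; ring
      have e0 : (0 : ZMod c.n) = z + sb + sb := by rw [hz]; ring
      obtain ⟨j, hj, hW⟩ := c.window ht1 z hzm (by rw [← ey]; exact hym) (by rw [← e0]; exact h0m)
      exact ⟨t1, ht1, j, hj, by rw [hW, ← e0, ← ey]; exact (tri321 0 y z).symm⟩
    · -- y = s, z = 2s : w = 0
      have ey : y = 0 + sb := by rw [hy]; ring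
      have ez : z = 0 + sb + sb := by rw [hz]; ring
      obtain ⟨j, hj, hW⟩ := c.window ht1 0 h0m (by rw [← ey]; exact hym) (by rw [← ez]; exact hzm)
      exact ⟨t1, ht1, j, hj, by rw [hW, ← ez, ← ey]⟩
  · -- v, m : mixed, contradiction
    exfalso
    apply c.mixed_false ht1 ht2 ht3 hdf1 hdf2 hd3
    have : y - z = ((e3 : ℤ) : ZMod c.n) := he3
    rw [hy, hz] at this
    push_cast at this ⊢
    linear_combination -this
  · -- m, v : mixed, contradiction
    exfalso
    apply c.mixed_false ht2 ht1 ht3 hdf2 hdf1 (d := -e3) (by omega)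
    have : y - z = ((e3 : ℤ) : ZMod c.n) := he3
    rw [hy, hz] at this
    push_cast at this ⊢
    linear_combination this
  · -- m, m
    obtain ⟨hZ1a, hZ1b, hZ1c⟩ := c.hsZ ht1
    obtain ⟨hZ2a, hZ2b, hZ2c⟩ := c.hsZ ht2
    have hsum : ((f1 - f2 - e3 : ℤ) : ZMod c.n) = ((0 : ℤ) : ZMod c.n) := by
      push_cast
      have h' : y - z = ((e3 : ℤ) : ZMod c.n) := he3
      rw [hy, hz] at h'
      push_cast at h'
      linear_combination h'
    have heq : f1 + -f2 = e3 := by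
      have := c.int_eq hsum (by omega) (by omega); omega
    obtain ⟨hte1, hte2, hpat⟩ := lemA (t1 : ℤ) (t2 : ℤ) (t3 : ℤ) f1 (-f2) e3
      ⟨by omega, hZ1c⟩ ⟨by omega, hZ2c⟩ ⟨by omega, hZ3c⟩
      (c.hapZ ht1 ht2 ht3) (c.hapZ ht2 ht3 ht1) (c.hapZ ht1 ht3 ht2)
      (by omega) (by omega) hd3 heq
    rcases hpat with ⟨hE1, hE2⟩ | ⟨hE1, hE2⟩ | ⟨hE1, hE2⟩ | ⟨hE1, hE2⟩ | ⟨hE1, hE2⟩ | ⟨hE1, hE2⟩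
    · exact absurd hE2 (by omega)
    · exact absurd hE1 (by omega)
    · -- f1 = 2t, f2 = t : y = mbar + 2s, z = mbar + s
      refine ⟨t1, ht1, 0, by omega, ?_⟩
      rw [c.Wz_zero ht1]
      have ez : c.mbar + ((1 * t1 : ℕ) : ZMod c.n) = z := by
        rw [hz]; push_cast; rw [show f2 = ((t1 : ℕ) : ℤ) by push_cast; omega]; push_cast; ring
      have ey : c.mbar + ((2 * t1 : ℕ) : ZMod c.n) = y := by
        rw [hy, hE1]; push_cast; ring
      rw [ez, ey, ← tri132]
    · exact absurd hE1 (by omega)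
    · exact absurd hE2 (by omega)
    · -- f1 = t, f2 = 2t : y = mbar + s, z = mbar + 2s
      refine ⟨t1, ht1, 0, by omega, ?_⟩
      rw [c.Wz_zero ht1]
      have ey : c.mbar + ((1 * t1 : ℕ) : ZMod c.n) = y := by
        rw [hy, hE1]; push_cast; ring
      have ez : c.mbar + ((2 * t1 : ℕ) : ZMod c.n) = z := by
        rw [hz]; push_cast; rw [show f2 = 2 * ((t1 : ℕ) : ℤ) by push_cast; omega]; push_cast; ring
      rw [ey, ez]
lemma Ctx.char {x y z : ZMod c.n} (hxm : x ≠ c.mbar) (hym : y ≠ c.mbar) (hzm : z ≠ c.mbar)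
    (hxy : x ≠ y) (hxz : x ≠ z) (hyz : y ≠ z)
    (h1 : c.Hadj x y) (h2 : c.Hadj x z) (h3 : c.Hadj y z) :
    ∃ s ∈ c.S, ∃ j ≤ c.n - 3, c.Wz s j = {x, y, z} := by
  by_cases hx0 : x = 0
  · subst hx0
    exact c.char_zero (Ne.symm hxy) (Ne.symm hxz) hym hzm hyz h1 h2 h3
  · by_cases hy0 : y = 0
    · subst hy0
      obtain ⟨s, hs, j, hj, hW⟩ := c.char_zero hx0 (Ne.symm hyz) hxm hzm hxz
        (c.Hadj_symm h1) h3 h2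
      exact ⟨s, hs, j, hj, hW.trans (tri213 0 x z)⟩
    · by_cases hz0 : z = 0
      · subst hz0
        obtain ⟨s, hs, j, hj, hW⟩ := c.char_zero hx0 hy0 hxm hym hxy
          (c.Hadj_symm h2) (c.Hadj_symm h3) h1
        exact ⟨s, hs, j, hj, hW.trans (tri231 0 x y)⟩
      · exact c.char_pure hx0 hy0 hz0 hxm hym hzm hxy hxz hyz h1 h3 h2

lemma Ctx.slot_ne_mbar {s j k : ℕ} : c.slot s j k ≠ c.mbar := c.sub_ne_mbar _

lemma Ctx.image_W {s j : ℕ} : (c.W s j).image c.ι = c.Wz s j := by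
  unfold Ctx.W Ctx.Wz
  rw [Finset.image_insert, Finset.image_insert, Finset.image_singleton,
    c.ι_ν c.slot_ne_mbar, c.ι_ν c.slot_ne_mbar, c.ι_ν c.slot_ne_mbar]

lemma Ctx.card_W {s j : ℕ} (hs : s ∈ c.S) (hj : j ≤ c.n - 3) : (c.W s j).card = 3 := by
  have h := c.card_Wz hs hj
  rw [← c.image_W, Finset.card_image_of_injective _ c.ι_inj] at h
  exact h

lemma Ctx.mem_W {s j : ℕ} {a : Fin (c.n - 1)} :
    a ∈ c.W s j ↔ ∃ k ≤ 2, a = c.ν (c.slot s j k) := by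
  unfold Ctx.W
  simp only [Finset.mem_insert, Finset.mem_singleton]
  constructor
  · rintro (h | h | h)
    exacts [⟨0, by omega, h⟩, ⟨1, by omega, h⟩, ⟨2, by omega, h⟩]
  · rintro ⟨k, hk, h⟩
    interval_cases k <;> tauto

lemma Ctx.indep_W {s j : ℕ} (hs : s ∈ c.S) (hj : j ≤ c.n - 3) :
    IndepFinset c.G (c.W s j) := by
  intro a ha b hb hab hadj
  obtain ⟨ka, hka, rfl⟩ := c.mem_W.mp ha
  obtain ⟨kb, hkb, rfl⟩ := c.mem_W.mp hb
  have hne : ka ≠ kb := fun h => hab (by rw [h])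
  have hH := c.hadj_slots hs hka hkb hne hj
  rw [← c.ι_ν (c.slot_ne_mbar (s := s) (j := j) (k := ka)),
      ← c.ι_ν (c.slot_ne_mbar (s := s) (j := j) (k := kb))] at hH
  exact (hadj : _ ∧ _).2 hH

lemma Ctx.surj_core {T : Finset (Fin (c.n - 1))} (hcard : T.card = 3)
    (hind : IndepFinset c.G T) : ∃ s ∈ c.S, ∃ j ≤ c.n - 3, T = c.W s j := by
  obtain ⟨a, b, d, hab, had, hbd, rfl⟩ := Finset.card_eq_three.mp hcard
  have pairH : ∀ u v : Fin (c.n - 1), u ∈ ({a, b, d} : Finset (Fin (c.n - 1))) →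
      v ∈ ({a, b, d} : Finset (Fin (c.n - 1))) → u ≠ v → c.Hadj (c.ι u) (c.ι v) := by
    intro u v hu hv huv
    have hnadj := hind u hu v hv huv
    by_contra hH
    exact hnadj (And.intro huv hH)
  have hma : a ∈ ({a, b, d} : Finset (Fin (c.n - 1))) := by simp
  have hmb : b ∈ ({a, b, d} : Finset (Fin (c.n - 1))) := by simp
  have hmd : d ∈ ({a, b, d} : Finset (Fin (c.n - 1))) := by simp
  obtain ⟨s, hs, j, hj, hW⟩ := c.char (x := c.ι a) (y := c.ι b) (z := c.ι d)
    (c.ι_ne_mbar a) (c.ι_ne_mbar b) (c.ι_ne_mbar d)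
    (fun h => hab (c.ι_inj h)) (fun h => had (c.ι_inj h)) (fun h => hbd (c.ι_inj h))
    (pairH a b hma hmb hab) (pairH a d hma hmd had) (pairH b d hmb hmd hbd)
  refine ⟨s, hs, j, hj, ?_⟩
  apply Finset.image_injective c.ι_inj
  rw [c.image_W, hW]
  rw [Finset.image_insert, Finset.image_insert, Finset.image_singleton]

lemma Ctx.card_interW {s t j j' : ℕ} :
    (c.W s j ∩ c.W t j').card = (c.Wz s j ∩ c.Wz t j').card := by
  rw [← c.image_W (s := s) (j := j), ← c.image_W (s := t) (j := j'),
    ← Finset.image_inter _ _ c.ι_inj, Finset.card_image_of_injective _ c.ι_inj]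

lemma Ctx.adj_if {s j j' : ℕ} (hs : s ∈ c.S) (hj : j ≤ c.n - 3) (hj' : j' ≤ c.n - 3)
    (h : j + 1 = j' ∨ j' + 1 = j) : (c.Wz s j ∩ c.Wz s j').card = 2 := by
  rcases h with h | h
  · rw [← h]; exact c.card_consec hs (by omega)
  · rw [← h, Finset.inter_comm]; exact c.card_consec hs (by omega)

lemma Ctx.adj_only_if {s t j j' : ℕ} (hs : s ∈ c.S) (ht : t ∈ c.S)
    (hj : j ≤ c.n - 3) (hj' : j' ≤ c.n - 3)
    (h : (c.Wz s j ∩ c.Wz t j').card = 2) :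
    s = t ∧ (j = j' ∨ j + 1 = j' ∨ j' + 1 = j) := by
  have h1 : 1 < (c.Wz s j ∩ c.Wz t j').card := by omega
  obtain ⟨p, hp, q, hq, hpq⟩ := Finset.one_lt_card.mp h1
  rw [Finset.mem_inter] at hp hq
  obtain ⟨hst, hc⟩ := c.pair hs ht hj hj' hpq hp.1 hp.2 hq.1 hq.2
  exact ⟨hst, by omega⟩

lemma Ctx.W_inj {s t j j' : ℕ} (hs : s ∈ c.S) (ht : t ∈ c.S)
    (hj : j ≤ c.n - 3) (hj' : j' ≤ c.n - 3) (h : c.W s j = c.W t j') : s = t ∧ j = j' := by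
  have hz : c.Wz s j = c.Wz t j' := by rw [← c.image_W, ← c.image_W, h]
  have h3 : (c.Wz s j ∩ c.Wz t j').card = 3 := by
    rw [hz, Finset.inter_self]
    exact c.card_Wz ht hj'
  obtain ⟨p, hp, q, hq, hpq⟩ := Finset.one_lt_card.mp (show 1 < (c.Wz s j ∩ c.Wz t j').card by omega)
  rw [Finset.mem_inter] at hp hq
  obtain ⟨hst, hc⟩ := c.pair hs ht hj hj' hpq hp.1 hp.2 hq.1 hq.2
  subst hst
  refine ⟨rfl, ?_⟩
  rcases hc with hc | hc | hc
  · exact hc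
  · exfalso
    have h2 := c.adj_if hs hj hj' (Or.inr (by omega))
    rw [hz, Finset.inter_self] at h2
    have h3' := c.card_Wz ht hj'
    omega
  · exfalso
    have h2 := c.adj_if hs hj hj' (Or.inl (by omega))
    rw [hz, Finset.inter_self] at h2
    have h3' := c.card_Wz ht hj'
    omega
end TJ0

/-- Let `n` be prime and `S` a 3-AP-free set of positive integers, all `≡ 1 (mod 4)`, with
maximum element at most `n/8`. Then there is a graph on `n - 1` vertices whose
`3`-configuration graph is the disjoint union of exactly `|S|` paths of length `n - 3`
(each a path on `n - 2` vertices). -/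
theorem many_paths (n : ℕ) (hn : n.Prime) (S : Finset ℕ)
    (hAP : ThreeAPFree (S : Set ℕ)) (hmod : ∀ s ∈ S, s % 4 = 1)
    (hmax : ∀ s ∈ S, 8 * s ≤ n) :
    ∃ G : SimpleGraph (Fin (n - 1)),
      Nonempty (ConfigGraph G 3 ≃g disjointPaths S.card (n - 2)) := by
  classical
  rcases S.eq_empty_or_nonempty with rfl | hS
  · refine ⟨⊤, ⟨?_⟩⟩
    haveI hEmpty : IsEmpty {T : Finset (Fin (n - 1)) //
        T.card = 3 ∧ IndepFinset (⊤ : SimpleGraph (Fin (n - 1))) T} := by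
      constructor
      rintro ⟨T, hc, hi⟩
      obtain ⟨a, b, d, hab, _, _, rfl⟩ := Finset.card_eq_three.mp hc
      exact hi a (by simp) b (by simp) hab hab
    haveI hE2 : IsEmpty (Fin (Finset.card (∅ : Finset ℕ)) × Fin (n - 2)) := by
      rw [Finset.card_empty]
      infer_instance
    exact ⟨Equiv.equivOfIsEmpty _ _, fun {a b} => isEmptyElim a⟩
  · set c : TJ0.Ctx := ⟨n, S, hn, hS, hAP, hmod, hmax⟩ with hc
    have h9 : 9 ≤ n := c.hn9
    let σ := S.orderIsoOfFin (rfl : S.card = S.card)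
    have hσ : ∀ i : Fin S.card, ((σ i : ℕ)) ∈ S := fun i => (σ i).2
    have hjb : ∀ j : Fin (n - 2), (j : ℕ) ≤ c.n - 3 := by
      intro j; have := j.isLt; simp only [hc] at *; omega
    let F : Fin S.card × Fin (n - 2) →
        {T : Finset (Fin (n - 1)) // T.card = 3 ∧ IndepFinset c.G T} :=
      fun p => ⟨c.W ((σ p.1 : ℕ)) (p.2 : ℕ),
        c.card_W (hσ p.1) (hjb p.2), c.indep_W (hσ p.1) (hjb p.2)⟩
    have hFinj : Function.Injective F := by
      intro p q h
      have hW : c.W ((σ p.1 : ℕ)) (p.2 : ℕ) = c.W ((σ q.1 : ℕ)) (q.2 : ℕ) :=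
        congrArg Subtype.val h
      obtain ⟨h1, h2⟩ := c.W_inj (hσ p.1) (hσ q.1) (hjb p.2) (hjb q.2) hW
      have hp1 : p.1 = q.1 := σ.injective (Subtype.ext h1)
      have hp2 : p.2 = q.2 := Fin.ext h2
      exact Prod.ext hp1 hp2
    have hFsurj : Function.Surjective F := by
      rintro ⟨T, hc3, hind⟩
      obtain ⟨s, hs, j, hj, hT⟩ := c.surj_core hc3 hind
      refine ⟨(σ.symm ⟨s, hs⟩, ⟨j, by simp only [hc] at hj ⊢; omega⟩), ?_⟩
      apply Subtype.ext
      show c.W ((σ (σ.symm ⟨s, hs⟩) : ℕ)) j = T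
      rw [OrderIso.apply_symm_apply]
      exact hT.symm
    have hrel : ∀ p q, (ConfigGraph c.G 3).Adj (F p) (F q)
        ↔ (disjointPaths S.card (n - 2)).Adj p q := by
      intro p q
      constructor
      · rintro (⟨hne, hcard⟩ : _ ∧ _)
        have hcard2 : (c.W ((σ p.1 : ℕ)) (p.2 : ℕ) ∩ c.W ((σ q.1 : ℕ)) (q.2 : ℕ)).card = 2 :=
          hcard
        rw [c.card_interW] at hcard2
        obtain ⟨hst, hjj⟩ := c.adj_only_if (hσ p.1) (hσ q.1) (hjb p.2) (hjb q.2) hcard2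
        have hp1 : p.1 = q.1 := σ.injective (Subtype.ext hst)
        have hjne : (p.2 : ℕ) ≠ (q.2 : ℕ) := by
          intro hjeq
          exact hne (congrArg F (Prod.ext hp1 (Fin.ext hjeq)))
        refine (⟨hp1, SimpleGraph.pathGraph_adj.mpr ?_⟩ : _ ∧ _)
        omega
      · rintro (⟨hp1, hpath⟩ : _ ∧ _)
        have hjj := SimpleGraph.pathGraph_adj.mp hpath
        have hst : ((σ p.1 : ℕ)) = ((σ q.1 : ℕ)) := by rw [hp1]
        refine (⟨?_, ?_⟩ : _ ∧ _)
        · intro hFeq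
          have hW : c.W ((σ p.1 : ℕ)) (p.2 : ℕ) = c.W ((σ q.1 : ℕ)) (q.2 : ℕ) :=
            congrArg Subtype.val hFeq
          obtain ⟨_, h2⟩ := c.W_inj (hσ p.1) (hσ q.1) (hjb p.2) (hjb q.2) hW
          omega
        · show (c.W ((σ p.1 : ℕ)) (p.2 : ℕ) ∩ c.W ((σ q.1 : ℕ)) (q.2 : ℕ)).card = 3 - 1
          rw [c.card_interW, hst]
          exact c.adj_if (hσ q.1) (hjb p.2) (hjb q.2) (by omega)
    refine ⟨c.G, ⟨?_⟩⟩
    exact SimpleGraph.Iso.symm (⟨Equiv.ofBijective F ⟨hFinj, hFsurj⟩, by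
      intro p q
      show (ConfigGraph c.G 3).Adj (F p) (F q) ↔ _
      exact hrel p q⟩ : disjointPaths S.card (n - 2) ≃g ConfigGraph c.G 3)
end
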